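/- arXiv:1110.2824 — 11 statements merged into one kernel-verified Lean document; each statement's English description precedes it below -/
import Mathlib

section
/- For every x ∈ ℝⁿ, the indicator of the union of the complements of the half-spaces satisfies the inclusion-exclusion identity over the face complex: 1_{∪_{i=1}^m Hᵢᶜ}(x) = Σ_{J∈𝓕} (−1)^{|J|−1} · 1_{∩_{i∈J} Hᵢᶜ}(x). (The pair (𝓗, 𝓕) is an abstract tube.) -/
open scoped Classical

namespace NWAux

variable {n m : ℕ}

/-- linear functional of constraint `i` -/
def fv (a : Fin m → Fin n → ℝ) (i : Fin m) (x : Fin n → ℝ) : ℝ := ∑ j, a i j * x j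

/-- `DD a b A` : points of the polyhedron where constraints in `A` are tight. -/
def DD (a : Fin m → Fin n → ℝ) (b : Fin m → ℝ) (A : Finset (Fin m)) : Set (Fin n → ℝ) :=
  {z | (∀ i ∈ A, fv a i z = b i) ∧ ∀ i, fv a i z ≤ b i}

lemma fv_lin (a : Fin m → Fin n → ℝ) (i : Fin m) (y x : Fin n → ℝ) (t : ℝ) :
    fv a i (fun j => y j + t * (x j - y j)) = fv a i y + t * (fv a i x - fv a i y) := by
  unfold fv
  have h : ∀ j : Fin n, a i j * (y j + t * (x j - y j))
      = a i j * y j + t * (a i j * x j - a i j * y j) := fun j => by ring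
  simp only [h, Finset.sum_add_distrib]
  congr 1
  rw [← Finset.mul_sum, ← Finset.sum_sub_distrib]

lemma fv_continuous (a : Fin m → Fin n → ℝ) (i : Fin m) : Continuous (fv a i) := by
  unfold fv
  exact continuous_finset_sum _ fun j _ => (continuous_const.mul (continuous_apply j))

lemma DD_closed (a : Fin m → Fin n → ℝ) (b : Fin m → ℝ) (A : Finset (Fin m)) :
    IsClosed (DD a b A) := by
  have h1 : DD a b A = (⋂ i ∈ A, {z | fv a i z = b i}) ∩ ⋂ i, {z | fv a i z ≤ b i} := by
    ext z; simp [DD, Set.mem_iInter]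
  rw [h1]
  exact (isClosed_biInter fun i _ => isClosed_eq (fv_continuous a i) continuous_const).inter
    (isClosed_iInter fun i => isClosed_le (fv_continuous a i) continuous_const)

/-- key geometric lemma: a nearest point of `DD a b E` to `x` touches some hyperplane
that is strictly violated at `x`. -/
lemma exists_touch (a : Fin m → Fin n → ℝ) (b : Fin m → ℝ) (E : Finset (Fin m))
    (hne : (DD a b E).Nonempty) (x : Fin n → ℝ)
    (hxE : ∀ i ∈ E, fv a i x = b i) (hxout : ∃ i, b i < fv a i x) :
    ∃ y ∈ DD a b E, ∃ i, fv a i y = b i ∧ b i < fv a i x := by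
  obtain ⟨w, hw⟩ := hne
  -- nearest point y of DD a b E to x
  have hC : IsCompact (DD a b E ∩ Metric.closedBall x (dist w x)) :=
    (isCompact_closedBall x (dist w x)).inter_left (DD_closed a b E)
  have hCne : (DD a b E ∩ Metric.closedBall x (dist w x)).Nonempty :=
    ⟨w, hw, Metric.mem_closedBall.2 le_rfl⟩
  obtain ⟨y, hyC, hymin⟩ := hC.exists_isMinOn hCne
    ((continuous_id.dist continuous_const).continuousOn :
      ContinuousOn (fun z => dist z x) _)
  have hyD : y ∈ DD a b E := hyC.1
  have hmin : ∀ z ∈ DD a b E, dist y x ≤ dist z x := by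
    intro z hz
    by_cases hzB : z ∈ Metric.closedBall x (dist w x)
    · exact hymin ⟨hz, hzB⟩
    · have h1 : dist y x ≤ dist w x := hyC.2
      have h2 : dist w x < dist z x := by
        have := Metric.mem_closedBall.not.1 hzB
        linarith [not_le.1 this]
      linarith
  refine ⟨y, hyD, ?_⟩
  by_contra hcon
  push_neg at hcon
  -- construct a closer point in DD a b E
  set ε : Fin m → ℝ := fun i =>
    if h : fv a i y < fv a i x ∧ fv a i y < b i then
      (b i - fv a i y) / (fv a i x - fv a i y) else 1 with hε
  have hεpos : ∀ i, 0 < ε i := by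
    intro i
    rw [hε]
    by_cases h : fv a i y < fv a i x ∧ fv a i y < b i
    · simp only [h, dif_pos]
      exact div_pos (by linarith [h.2]) (by linarith [h.1])
    · simp only [h, dif_neg, not_false_iff]
      norm_num
  set T : Finset ℝ := insert (1 : ℝ) (Finset.univ.image ε) with hT
  have hTne : T.Nonempty := ⟨1, Finset.mem_insert_self _ _⟩
  set t : ℝ := T.min' hTne with ht
  have ht1 : t ≤ 1 := Finset.min'_le _ _ (Finset.mem_insert_self _ _)
  have htε : ∀ i, t ≤ ε i := fun i =>
    Finset.min'_le _ _ (Finset.mem_insert_of_mem (Finset.mem_image_of_mem ε (Finset.mem_univ i)))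
  have htpos : 0 < t := by
    rw [ht, Finset.lt_min'_iff]
    intro r hr
    rcases Finset.mem_insert.1 hr with h | h
    · rw [h]; norm_num
    · obtain ⟨i, _, rfl⟩ := Finset.mem_image.1 h
      exact hεpos i
  set y' : Fin n → ℝ := fun j => y j + t * (x j - y j) with hy'
  have hfy' : ∀ i, fv a i y' = fv a i y + t * (fv a i x - fv a i y) := fun i => fv_lin a i y x t
  have hy'D : y' ∈ DD a b E := by
    constructor
    · intro i hi
      rw [hfy' i, hyD.1 i hi, hxE i hi]
      ring
    · intro i
      rcases le_or_gt (fv a i x) (fv a i y) with hle | hlt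
      · have : t * (fv a i x - fv a i y) ≤ 0 :=
          mul_nonpos_of_nonneg_of_nonpos htpos.le (by linarith)
        have := hyD.2 i
        rw [hfy' i]; linarith
      · -- fv a i y < fv a i x
        have hne : fv a i y ≠ b i := by
          intro heq
          have := hcon i heq
          rw [heq] at hlt
          linarith
        have hlt2 : fv a i y < b i := lt_of_le_of_ne (hyD.2 i) hne
        have hεi : ε i = (b i - fv a i y) / (fv a i x - fv a i y) := by
          rw [hε]; simp only [hlt, hlt2, and_self, dif_pos]
        have : t * (fv a i x - fv a i y) ≤ b i - fv a i y := by
          rw [← le_div_iff₀ (by linarith)]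
          rw [← hεi]; exact htε i
        rw [hfy' i]; linarith
  -- y ≠ x
  have hxout' : x ∉ DD a b E := by
    obtain ⟨i0, hi0⟩ := hxout
    intro hx
    exact absurd (hx.2 i0) (not_le.2 hi0)
  -- if t = 1 then y' = x, contradiction
  rcases eq_or_lt_of_le ht1 with hteq | htlt
  · apply hxout'
    have : y' = x := by
      funext j
      show y j + t * (x j - y j) = x j
      rw [hteq]; ring
    rwa [this] at hy'D
  · -- dist y' x = (1 - t) * dist y x < dist y x
    have hyx : y ≠ x := fun h => hxout' (h ▸ hyD)
    have hdpos : 0 < dist y x := dist_pos.2 hyx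
    have hdist : dist y' x = (1 - t) * dist y x := by
      have hsub : y' - x = (1 - t) • (y - x) := by
        funext j
        simp only [Pi.sub_apply, Pi.smul_apply, smul_eq_mul, hy']
        ring
      rw [dist_eq_norm, dist_eq_norm, hsub, norm_smul, Real.norm_eq_abs,
        abs_of_pos (by linarith)]
    have : dist y x ≤ dist y' x := hmin y' hy'D
    nlinarith

lemma sum_powerset_union {α M : Type*} [DecidableEq α] [AddCommMonoid M]
    (A : Finset α) (B : Finset α) :
    ∀ (h : Finset α → M), Disjoint A B →
      ∑ J ∈ (A ∪ B).powerset, h J = ∑ J₂ ∈ B.powerset, ∑ J₁ ∈ A.powerset, h (J₁ ∪ J₂) := by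
  induction B using Finset.induction_on with
  | empty => intro h _; simp
  | @insert c B hc IH =>
      intro h hd
      rw [Finset.disjoint_insert_right] at hd
      have hcAB : c ∉ A ∪ B := by
        simp only [Finset.mem_union]
        rintro (h1 | h1)
        · exact hd.1 h1
        · exact hc h1
      rw [Finset.union_insert, Finset.sum_powerset_insert hcAB,
        Finset.sum_powerset_insert hc, IH h hd.2, IH (fun J => h (insert c J)) hd.2]
      congr 1
      apply Finset.sum_congr rfl
      intro J₂ _
      apply Finset.sum_congr rfl
      intro J₁ _
      rw [Finset.union_insert]

lemma sum_powerset_neg_one (S : Finset (Fin m)) (hS : S.Nonempty) :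
    ∑ J ∈ S.powerset, (-1 : ℝ) ^ J.card = 0 := by
  have h := Finset.prod_add (fun _ : Fin m => (-1 : ℝ)) (fun _ => 1) S
  simp only [Finset.prod_const, one_pow, mul_one] at h
  have h0 : ((-1 : ℝ) + 1) ^ S.card = 0 := by
    rw [neg_add_cancel, zero_pow]
    exact (Finset.card_pos.2 hS).ne'
  rw [h0] at h
  exact h.symm

lemma main_claim (a : Fin m → Fin n → ℝ) (b : Fin m → ℝ) :
    ∀ s : ℕ, ∀ E : Finset (Fin m), ∀ x : Fin n → ℝ,
      (∀ i ∈ E, fv a i x = b i) →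
      (Finset.univ.filter fun i => b i < fv a i x).Nonempty →
      (Finset.univ.filter fun i => b i < fv a i x).card ≤ s →
      ∑ J ∈ (Finset.univ.filter fun i => b i < fv a i x).powerset,
        (if (DD a b (E ∪ J)).Nonempty then (-1 : ℝ) ^ J.card else 0) = 0 := by
  intro s
  induction s with
  | zero =>
      intro E x _ hSne hcard
      exact absurd (Finset.card_pos.2 hSne) (by omega)
  | succ s IH =>
      intro E x hxE hSne hcard
      set S : Finset (Fin m) := Finset.univ.filter fun i => b i < fv a i x with hSdef
      by_cases hDE : (DD a b E).Nonempty
      case neg =>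
        apply Finset.sum_eq_zero
        intro J _
        rw [if_neg]
        rintro ⟨z, hz⟩
        exact hDE ⟨z, fun i hi => hz.1 i (Finset.mem_union_left _ hi), hz.2⟩
      case pos =>
      have hxout : ∃ i, b i < fv a i x := by
        obtain ⟨i0, hi0⟩ := hSne
        exact ⟨i0, (Finset.mem_filter.1 hi0).2⟩
      obtain ⟨y, hyD, i₁, hi₁y, hi₁x⟩ := exists_touch a b E hDE x hxE hxout
      set tt : Fin m → ℝ := fun i => (b i - fv a i y) / (fv a i x - fv a i y) with htt
      have hcpos : ∀ i ∈ S, 0 < fv a i x - fv a i y := by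
        intro i hi
        have h1 : b i < fv a i x := (Finset.mem_filter.1 hi).2
        have h2 : fv a i y ≤ b i := hyD.2 i
        linarith
      have httnn : ∀ i ∈ S, 0 ≤ tt i := by
        intro i hi
        exact div_nonneg (by linarith [hyD.2 i]) (hcpos i hi).le
      have httlt1 : ∀ i ∈ S, tt i < 1 := by
        intro i hi
        have h1 : b i < fv a i x := (Finset.mem_filter.1 hi).2
        rw [htt, div_lt_one (hcpos i hi)]
        linarith
      have hi₁S : i₁ ∈ S := Finset.mem_filter.2 ⟨Finset.mem_univ _, hi₁x⟩
      have htti₁ : tt i₁ = 0 := by rw [htt]; simp [hi₁y]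
      have hTne : (S.image tt).Nonempty := hSne.image tt
      set τ : ℝ := (S.image tt).max' hTne with hτ
      have hτle : ∀ i ∈ S, tt i ≤ τ :=
        fun i hi => Finset.le_max' _ _ (Finset.mem_image_of_mem tt hi)
      have hτ0 : 0 ≤ τ := htti₁ ▸ hτle i₁ hi₁S
      have hτlt1 : τ < 1 := by
        obtain ⟨i', hi'S, hi'⟩ := Finset.mem_image.1 ((S.image tt).max'_mem hTne)
        rw [hτ, ← hi']
        exact httlt1 i' hi'S
      rcases eq_or_lt_of_le hτ0 with hτz | hτpos
      · -- base case : y is on all hyperplanes of S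
        have hyS : ∀ i ∈ S, fv a i y = b i := by
          intro i hi
          have h1 : tt i ≤ 0 := hτz ▸ hτle i hi
          have h2 : tt i = 0 := le_antisymm h1 (httnn i hi)
          rw [htt] at h2
          have h3 := (div_eq_zero_iff.1 h2)
          rcases h3 with h3 | h3
          · linarith
          · exact absurd h3 (hcpos i hi).ne'
        have hall : ∀ J ∈ S.powerset, (if (DD a b (E ∪ J)).Nonempty then (-1 : ℝ) ^ J.card else 0)
            = (-1 : ℝ) ^ J.card := by
          intro J hJ
          rw [if_pos]
          refine ⟨y, ?_, hyD.2⟩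
          intro i hi
          rcases Finset.mem_union.1 hi with h | h
          · exact hyD.1 i h
          · exact hyS i (Finset.mem_powerset.1 hJ h)
        rw [Finset.sum_congr rfl hall]
        exact sum_powerset_neg_one S hSne
      · -- inductive case
        set Δ : Finset (Fin m) := S.filter (fun i => tt i = τ) with hΔ
        set S' : Finset (Fin m) := S.filter (fun i => ¬ tt i = τ) with hS'
        have hUnion : S' ∪ Δ = S := by
          rw [Finset.union_comm]
          exact Finset.filter_union_filter_not_eq _ S
        have hdisj : Disjoint S' Δ :=
          (Finset.disjoint_filter_filter_not S S (fun i => tt i = τ)).symm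
        have hΔne : Δ.Nonempty := by
          obtain ⟨i', hi'S, hi'⟩ := Finset.mem_image.1 ((S.image tt).max'_mem hTne)
          exact ⟨i', Finset.mem_filter.2 ⟨hi'S, hi'⟩⟩
        have hi₁S' : i₁ ∈ S' := by
          refine Finset.mem_filter.2 ⟨hi₁S, ?_⟩
          rw [htti₁]; exact hτpos.ne
        have hS'ne : S'.Nonempty := ⟨i₁, hi₁S'⟩
        have hS'card : S'.card ≤ s := by
          have hss : S' ⊂ S := by
            refine Finset.ssubset_iff_of_subset (Finset.filter_subset _ _) |>.2 ?_
            obtain ⟨i', hi'Δ⟩ := hΔne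
            have := hdisj
            refine ⟨i', (Finset.mem_filter.1 hi'Δ).1, ?_⟩
            intro hmem
            exact (Finset.mem_filter.1 hmem).2 (Finset.mem_filter.1 hi'Δ).2
          have := Finset.card_lt_card hss
          omega
        set z : Fin n → ℝ := fun j => y j + τ * (x j - y j) with hz
        have hfz : ∀ i, fv a i z = fv a i y + τ * (fv a i x - fv a i y) :=
          fun i => fv_lin a i y x τ
        have hzE : ∀ i ∈ E, fv a i z = b i := by
          intro i hi
          rw [hfz i, hyD.1 i hi, hxE i hi]
          ring
        have hzΔ : ∀ i ∈ Δ, fv a i z = b i := by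
          intro i hi
          obtain ⟨hiS, hieq⟩ := Finset.mem_filter.1 hi
          rw [hfz i, ← hieq, htt]
          show fv a i y + (b i - fv a i y) / (fv a i x - fv a i y) * (fv a i x - fv a i y) = b i
          rw [div_mul_cancel₀ _ (hcpos i hiS).ne']
          ring
        have hSz : (Finset.univ.filter fun i => b i < fv a i z) = S' := by
          ext i
          simp only [Finset.mem_filter, Finset.mem_univ, true_and]
          constructor
          · intro hlt
            have hiS : i ∈ S := by
              refine Finset.mem_filter.2 ⟨Finset.mem_univ _, ?_⟩
              by_contra hnot
              push_neg at hnot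
              rcases le_or_gt (fv a i x - fv a i y) 0 with hc | hc
              · have : τ * (fv a i x - fv a i y) ≤ 0 :=
                  mul_nonpos_of_nonneg_of_nonpos hτ0 hc
                have := hyD.2 i
                rw [hfz i] at hlt
                linarith
              · have : τ * (fv a i x - fv a i y) < 1 * (fv a i x - fv a i y) :=
                  mul_lt_mul_of_pos_right hτlt1 hc
                rw [hfz i] at hlt
                linarith
            refine Finset.mem_filter.2 ⟨hiS, ?_⟩
            intro hieq
            have : fv a i z = b i := hzΔ i (Finset.mem_filter.2 ⟨hiS, hieq⟩)
            linarith
          · intro hiS'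
            obtain ⟨hiS, hne⟩ := Finset.mem_filter.1 hiS'
            have h1 : tt i < τ := lt_of_le_of_ne (hτle i hiS) hne
            have hc := hcpos i hiS
            rw [htt, div_lt_iff₀ hc] at h1
            rw [hfz i]
            linarith
        -- rewrite the sum using the splitting S = S' ∪ Δ
        rw [show S = S' ∪ Δ from hUnion.symm, sum_powerset_union S' Δ _ hdisj]
        apply Finset.sum_eq_zero
        intro J₂ hJ₂
        have hJ₂Δ : J₂ ⊆ Δ := Finset.mem_powerset.1 hJ₂
        have hzE' : ∀ i ∈ E ∪ J₂, fv a i z = b i := by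
          intro i hi
          rcases Finset.mem_union.1 hi with h | h
          · exact hzE i h
          · exact hzΔ i (hJ₂Δ h)
        have hIH := IH (E ∪ J₂) z hzE' (by rw [hSz]; exact hS'ne) (by rw [hSz]; exact hS'card)
        rw [hSz] at hIH
        have hstep : ∀ J₁ ∈ S'.powerset,
            (if (DD a b (E ∪ (J₁ ∪ J₂))).Nonempty then (-1 : ℝ) ^ (J₁ ∪ J₂).card else 0)
              = (-1 : ℝ) ^ J₂.card *
                (if (DD a b ((E ∪ J₂) ∪ J₁)).Nonempty then (-1 : ℝ) ^ J₁.card else 0) := by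
          intro J₁ hJ₁
          have hdisj12 : Disjoint J₁ J₂ :=
            Finset.disjoint_of_subset_left (Finset.mem_powerset.1 hJ₁)
              (Finset.disjoint_of_subset_right hJ₂Δ hdisj)
          have hcardu : (J₁ ∪ J₂).card = J₁.card + J₂.card :=
            Finset.card_union_of_disjoint hdisj12
          have hseteq : E ∪ (J₁ ∪ J₂) = (E ∪ J₂) ∪ J₁ := by
            ext i
            simp only [Finset.mem_union]
            tauto
          rw [hseteq, hcardu]
          split_ifs
          · rw [pow_add]; ring
          · ring
        rw [Finset.sum_congr rfl hstep, ← Finset.mul_sum, hIH, mul_zero]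

end NWAux

/-- Naiman–Wynn: the pair (𝓗, 𝓕) is an abstract tube, i.e. the inclusion-exclusion
identity for the indicator of ∪ᵢ Hᵢᶜ holds pointwise over the face complex 𝓕. -/
theorem abstract_tube_indicator_identity
    (n m : ℕ) (hn : 1 ≤ n) (hm : 1 ≤ m)
    (a : Fin m → Fin n → ℝ) (b : Fin m → ℝ)
    (ha : ∀ i, a i ≠ 0)
    (H Hc F : Fin m → Set (Fin n → ℝ))
    (hH : ∀ i, H i = {x | ∑ j, a i j * x j ≤ b i})
    (hHc : ∀ i, Hc i = {x | b i < ∑ j, a i j * x j})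
    (K : Set (Fin n → ℝ)) (hK : K = ⋂ i, H i) (hKne : K.Nonempty)
    (hF : ∀ i, F i = {x | ∑ j, a i j * x j = b i} ∩ K)
    (𝓕 : Finset (Finset (Fin m)))
    (h𝓕 : ∀ J : Finset (Fin m), J ∈ 𝓕 ↔ J.Nonempty ∧ (⋂ i ∈ J, F i).Nonempty) :
    ∀ x : Fin n → ℝ,
      Set.indicator (⋃ i, Hc i) (fun _ => (1 : ℝ)) x
        = ∑ J ∈ 𝓕, (-1 : ℝ) ^ (J.card - 1) *
            Set.indicator (⋂ i ∈ J, Hc i) (fun _ => (1 : ℝ)) x := by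
  intro x
  have hfK : ∀ z, z ∈ K ↔ ∀ i, NWAux.fv a i z ≤ b i := by
    intro z
    rw [hK]
    simp only [Set.mem_iInter]
    constructor
    · intro h i; have := h i; rw [hH i] at this; exact this
    · intro h i; rw [hH i]; exact h i
  have hHc' : ∀ (i : Fin m) (z : Fin n → ℝ), z ∈ Hc i ↔ b i < NWAux.fv a i z := by
    intro i z; rw [hHc i]; exact Iff.rfl
  have hDD : ∀ J : Finset (Fin m), J.Nonempty → (⋂ i ∈ J, F i) = NWAux.DD a b J := by
    intro J hJne
    ext z
    simp only [Set.mem_iInter, NWAux.DD, Set.mem_setOf_eq]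
    constructor
    · intro h
      obtain ⟨i0, hi0⟩ := hJne
      have hK0 : z ∈ K := by
        have := h i0 hi0; rw [hF i0] at this; exact this.2
      refine ⟨fun i hi => ?_, (hfK z).1 hK0⟩
      have := h i hi; rw [hF i] at this; exact this.1
    · rintro ⟨h1, h2⟩ i hi
      rw [hF i]
      exact ⟨h1 i hi, (hfK z).2 h2⟩
  by_cases hx : ∀ i, NWAux.fv a i x ≤ b i
  · have hnotin : x ∉ ⋃ i, Hc i := by
      simp only [Set.mem_iUnion]
      rintro ⟨i, hi⟩
      exact absurd ((hHc' i x).1 hi) (not_lt.2 (hx i))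
    rw [Set.indicator_of_notMem hnotin]
    symm
    apply Finset.sum_eq_zero
    intro J hJ
    obtain ⟨i0, hi0⟩ := ((h𝓕 J).1 hJ).1
    have hnm : x ∉ ⋂ i ∈ J, Hc i := by
      intro hmem
      exact absurd ((hHc' i0 x).1 (Set.mem_iInter₂.1 hmem i0 hi0)) (not_lt.2 (hx i0))
    rw [Set.indicator_of_notMem hnm, mul_zero]
  · push_neg at hx
    obtain ⟨iv, hiv⟩ := hx
    set S : Finset (Fin m) := Finset.univ.filter (fun i => b i < NWAux.fv a i x) with hS
    have hSne : S.Nonempty := ⟨iv, Finset.mem_filter.2 ⟨Finset.mem_univ _, hiv⟩⟩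
    have hmem : x ∈ ⋃ i, Hc i := Set.mem_iUnion.2 ⟨iv, (hHc' iv x).2 hiv⟩
    rw [Set.indicator_of_mem hmem]
    have hind : ∀ J ∈ 𝓕,
        (-1 : ℝ) ^ (J.card - 1) * Set.indicator (⋂ i ∈ J, Hc i) (fun _ => (1 : ℝ)) x
          = if J ⊆ S then (-1 : ℝ) ^ (J.card - 1) else 0 := by
      intro J hJ
      by_cases hsub : J ⊆ S
      · rw [if_pos hsub, Set.indicator_of_mem, mul_one]
        exact Set.mem_iInter₂.2 fun i hi => (hHc' i x).2 (Finset.mem_filter.1 (hsub hi)).2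
      · rw [if_neg hsub, Set.indicator_of_notMem, mul_zero]
        intro hmem'
        apply hsub
        intro i hi
        exact Finset.mem_filter.2
          ⟨Finset.mem_univ _, (hHc' i x).1 (Set.mem_iInter₂.1 hmem' i hi)⟩
    rw [Finset.sum_congr rfl hind, ← Finset.sum_filter]
    set T : Finset (Finset (Fin m)) := 𝓕.filter (fun J => J ⊆ S) with hT
    have hset : T = S.powerset.filter (fun J => J.Nonempty ∧ (NWAux.DD a b J).Nonempty) := by
      ext J
      simp only [hT, Finset.mem_filter, Finset.mem_powerset, h𝓕]
      constructor
      · rintro ⟨⟨hne, hFne⟩, hsub⟩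
        exact ⟨hsub, hne, by rwa [← hDD J hne]⟩
      · rintro ⟨hsub, hne, hDDne⟩
        exact ⟨⟨hne, by rwa [hDD J hne]⟩, hsub⟩
    have hmain := NWAux.main_claim a b S.card ∅ x
      (fun i hi => absurd hi (Finset.notMem_empty i)) hSne le_rfl
    simp only [Finset.empty_union] at hmain
    have hemem : (∅ : Finset (Fin m)) ∈ S.powerset := Finset.empty_mem_powerset S
    rw [← Finset.add_sum_erase _ _ hemem] at hmain
    have hK0 : (NWAux.DD a b ∅).Nonempty := by
      obtain ⟨w, hw⟩ := hKne
      exact ⟨w, fun i hi => absurd hi (Finset.notMem_empty i), (hfK w).1 hw⟩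
    rw [if_pos hK0, Finset.card_empty, pow_zero] at hmain
    -- hence the signed sum over the erased powerset is -1
    have herase : ∑ J ∈ S.powerset.erase ∅,
        (if (NWAux.DD a b J).Nonempty then (-1 : ℝ) ^ J.card else 0) = -1 := by
      linarith
    have hTer : T = (S.powerset.erase ∅).filter (fun J => (NWAux.DD a b J).Nonempty) := by
      rw [hset]
      ext J
      simp only [Finset.mem_filter, Finset.mem_erase, Finset.mem_powerset]
      rw [Finset.nonempty_iff_ne_empty]
      tauto
    have hTsum : ∑ J ∈ T, (-1 : ℝ) ^ J.card = -1 := by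
      rw [hTer, Finset.sum_filter]
      exact herase
    have hpow : ∀ J ∈ T, (-1 : ℝ) ^ (J.card - 1) = -(-1 : ℝ) ^ J.card := by
      intro J hJ
      have hne : J.Nonempty := by
        rw [hset] at hJ
        exact (Finset.mem_filter.1 hJ).2.1
      have hc1 : J.card - 1 + 1 = J.card := Nat.succ_pred_eq_of_pos (Finset.card_pos.2 hne)
      calc (-1 : ℝ) ^ (J.card - 1) = -((-1 : ℝ) ^ (J.card - 1 + 1)) := by rw [pow_succ]; ring
        _ = -(-1 : ℝ) ^ J.card := by rw [hc1]
    rw [Finset.sum_congr rfl hpow, Finset.sum_neg_distrib, hTsum]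
    norm_num
end

section
/- There exists δ > 0 such that for every ε ∈ (0, δ), the family of perturbed hyperplanes {∂Hᵢ(ε) : i = 1,…,m} is in general position, i.e., there is no J ⊆ {1,…,m} such that ∩_{i∈J} ∂Hᵢ(ε) contains an affine subspace of dimension max(n+1−|J|, 0). -/
open Polynomial Module

/-- For all sufficiently small ε > 0 the lexicographically perturbed hyperplanes
∂Hᵢ(ε) = {x : aᵢᵀx = bᵢ + εⁱ} are in general position: no index set J is such that
∩_{i∈J} ∂Hᵢ(ε) contains an affine subspace of dimension max(n+1−|J|, 0). -/
theorem perturbed_hyperplanes_general_position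
    (n m : ℕ) (hn : 1 ≤ n) (hm : 1 ≤ m)
    (a : Fin m → Fin n → ℝ) (b : Fin m → ℝ)
    (ha : ∀ i, a i ≠ 0)
    (Hb : ℝ → Fin m → Set (Fin n → ℝ))
    (hHb : ∀ ε i, Hb ε i = {x | ∑ j, a i j * x j = b i + ε ^ ((i : ℕ) + 1)}) :
    ∃ δ > (0 : ℝ), ∀ ε : ℝ, 0 < ε → ε < δ →
      ¬ ∃ (J : Finset (Fin m)) (s : AffineSubspace ℝ (Fin n → ℝ)),
          (s : Set (Fin n → ℝ)).Nonempty ∧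
          Module.finrank ℝ s.direction = n + 1 - J.card ∧
          (s : Set (Fin n → ℝ)) ⊆ ⋂ i ∈ J, Hb ε i := by
  classical
  -- For each dependent index set, choose a nontrivial linear relation supported on it.
  have key : ∀ J : Finset (Fin m), ¬ LinearIndependent ℝ (fun i : J => a i) →
      ∃ c : Fin m → ℝ, (∑ i, c i • a i) = 0 ∧ (∃ i, c i ≠ 0) ∧ ∀ i ∉ J, c i = 0 := by
    intro J hJ
    rw [Fintype.not_linearIndependent_iff] at hJ
    obtain ⟨g, hg, i0, hi0⟩ := hJ
    refine ⟨fun i => if h : i ∈ J then g ⟨i, h⟩ else 0, ?_, ⟨i0, by simp [i0.2, hi0]⟩,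
      fun i hi => by simp [hi]⟩
    have h1 : ∑ i : Fin m, (if h : i ∈ J then g ⟨i, h⟩ else 0) • a i
        = ∑ i ∈ J, (if h : i ∈ J then g ⟨i, h⟩ else 0) • a i :=
      (Finset.sum_subset J.subset_univ (fun i _ hi => by simp [hi])).symm
    rw [h1, ← Finset.sum_attach J, ← hg]
    exact Finset.sum_congr rfl fun i _ => by simp [i.2]
  choose! c hc0 hcne hcsupp using key
  -- The perturbation polynomial attached to each index set.
  set P : Finset (Fin m) → ℝ[X] := fun J =>
    if ¬ LinearIndependent ℝ (fun i : J => a i) then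
      ∑ i : Fin m, C (c J i) * (C (b i) + X ^ ((i : ℕ) + 1))
    else 1 with hP
  have hPne : ∀ J, P J ≠ 0 := by
    intro J
    by_cases h : LinearIndependent ℝ (fun i : J => a i)
    · simp [hP, h]
    · simp only [hP, if_pos h]
      obtain ⟨i0, hi0⟩ := hcne J h
      intro h0
      have hco : (∑ i : Fin m, C (c J i) * (C (b i) + X ^ ((i:ℕ)+1))).coeff ((i0:ℕ)+1)
          = c J i0 := by
        rw [finset_sum_coeff]
        have h1 : ∀ i : Fin m, (C (c J i) * (C (b i) + X ^ ((i:ℕ)+1))).coeff ((i0:ℕ)+1)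
            = if i = i0 then c J i0 else 0 := by
          intro i
          rw [coeff_C_mul, coeff_add, coeff_X_pow, coeff_C]
          by_cases hii : i = i0
          · simp [hii]
          · simp [hii, Fin.val_eq_val, if_neg (Ne.symm hii)]
        simp [h1]
      rw [h0] at hco
      simp at hco
      exact hi0 hco.symm
  -- The product polynomial and a bound below its positive roots.
  set q : ℝ[X] := ∏ J : Finset (Fin m), P J with hqdef
  have hq : q ≠ 0 := Finset.prod_ne_zero_iff.mpr fun J _ => hPne J
  have hfin : Set.Finite {x : ℝ | q.IsRoot x ∧ 0 < x} :=
    (Polynomial.finite_setOf_isRoot hq).subset fun x hx => hx.1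
  obtain ⟨δ, hδpos, hδ⟩ : ∃ δ > (0:ℝ), ∀ ε : ℝ, 0 < ε → ε < δ → ¬ q.IsRoot ε := by
    by_cases hS : hfin.toFinset.Nonempty
    · refine ⟨hfin.toFinset.min' hS, ?_, ?_⟩
      · have := hfin.toFinset.min'_mem hS
        rw [Set.Finite.mem_toFinset] at this
        exact this.2
      · intro ε hε1 hε2 hroot
        have : ε ∈ hfin.toFinset := by rw [Set.Finite.mem_toFinset]; exact ⟨hroot, hε1⟩
        exact absurd (hfin.toFinset.min'_le ε this) (not_le.mpr hε2)
    · refine ⟨1, one_pos, fun ε hε1 _ hroot => hS ⟨ε, ?_⟩⟩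
      rw [Set.Finite.mem_toFinset]; exact ⟨hroot, hε1⟩
  refine ⟨δ, hδpos, ?_⟩
  rintro ε hε1 hε2 ⟨J, s, ⟨x, hx⟩, hdim, hsub⟩
  have hPJ : (P J).eval ε ≠ 0 := by
    intro h0
    exact hδ ε hε1 hε2 (by
      rw [IsRoot, hqdef, eval_prod]
      exact Finset.prod_eq_zero (Finset.mem_univ J) h0)
  -- Points of s satisfy the hyperplane equations for indices in J.
  have hmem : ∀ y ∈ (s : Set (Fin n → ℝ)), ∀ i ∈ J, ∑ j, a i j * y j = b i + ε ^ ((i:ℕ)+1) := by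
    intro y hy i hi
    have := Set.mem_iInter₂.mp (hsub hy) i hi
    rw [hHb] at this
    exact this
  by_cases hdep : LinearIndependent ℝ (fun i : J => a i)
  · -- independent case: the direction is too small.
    set M : Matrix J (Fin n) ℝ := Matrix.of fun i j => a i j with hM
    have hdir : s.direction ≤ LinearMap.ker M.mulVecLin := by
      intro v hv
      rw [LinearMap.mem_ker, Matrix.mulVecLin_apply]
      funext i
      have hx2 : v +ᵥ x ∈ (s : Set (Fin n → ℝ)) :=
        AffineSubspace.vadd_mem_of_mem_direction hv hx
      have e1 := hmem _ hx2 i i.2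
      have e2 := hmem _ hx i i.2
      have hvadd : ∀ j, (v +ᵥ x) j = v j + x j := fun j => rfl
      have : ∑ j, a i j * (v j + x j) = ∑ j, a i j * x j := by
        rw [← e2] at e1
        calc ∑ j, a i j * (v j + x j) = ∑ j, a i j * (v +ᵥ x) j := by
              exact Finset.sum_congr rfl fun j _ => by rw [hvadd]
          _ = ∑ j, a i j * x j := e1
      have hzero : ∑ j, a i j * v j = 0 := by
        have expand : ∑ j, a i j * (v j + x j) = (∑ j, a i j * v j) + ∑ j, a i j * x j := by
          rw [← Finset.sum_add_distrib]
          exact Finset.sum_congr rfl fun j _ => by ring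
        rw [expand] at this
        linarith
      show (M.mulVec v) i = 0
      rw [Matrix.mulVec, dotProduct]
      simpa [hM] using hzero
    have hrank : M.rank = J.card := by
      have h := LinearIndependent.rank_matrix (M := M) hdep
      rw [h, Fintype.card_coe]
    have h2 : finrank ℝ (LinearMap.range M.mulVecLin)
        + finrank ℝ (LinearMap.ker M.mulVecLin) = n := by
      rw [LinearMap.finrank_range_add_finrank_ker]
      simp
    have h3 : finrank ℝ (LinearMap.range M.mulVecLin) = J.card := hrank
    have h4 : finrank ℝ s.direction ≤ finrank ℝ (LinearMap.ker M.mulVecLin) :=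
      Submodule.finrank_mono hdir
    omega
  · -- dependent case: evaluate the relation on x.
    have hceval : (P J).eval ε = ∑ i : Fin m, c J i * (b i + ε ^ ((i:ℕ)+1)) := by
      rw [hP]
      simp [if_pos hdep, eval_finset_sum]
    have hzero : ∑ i : Fin m, c J i * (b i + ε ^ ((i:ℕ)+1)) = 0 := by
      have e1 : ∀ i : Fin m, c J i * (b i + ε ^ ((i:ℕ)+1)) = c J i * ∑ j, a i j * x j := by
        intro i
        by_cases hi : i ∈ J
        · rw [hmem x hx i hi]
        · rw [hcsupp J hdep i hi]; ring
      rw [Finset.sum_congr rfl fun i _ => e1 i]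
      have e2 : ∑ i : Fin m, c J i * ∑ j, a i j * x j
          = ∑ j, (∑ i : Fin m, c J i * a i j) * x j := by
        calc ∑ i : Fin m, c J i * ∑ j, a i j * x j
            = ∑ i : Fin m, ∑ j, c J i * a i j * x j := by
              simp_rw [Finset.mul_sum, mul_assoc]
          _ = ∑ j, ∑ i : Fin m, c J i * a i j * x j := Finset.sum_comm
          _ = ∑ j, (∑ i : Fin m, c J i * a i j) * x j := by simp_rw [Finset.sum_mul]
      rw [e2]
      have e3 : ∀ j, (∑ i : Fin m, c J i * a i j) = 0 := by
        intro j
        have := congrFun (hc0 J hdep) j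
        simpa [Finset.sum_apply] using this
      simp [e3]
    rw [hceval] at hPJ
    exact hPJ hzero
end

section
/- There exists δ > 0 such that the perturbed face complex is constant on (0, δ): for all ε₁, ε₂ ∈ (0, δ), 𝓕(ε₁) = 𝓕(ε₂). (This common value is denoted 𝓕(0+).) -/
open Filter
/-- Eventually decided near 0+ -/
def Dec (Q : ℝ → Prop) : Prop :=
  (∀ᶠ ε in nhdsWithin (0:ℝ) (Set.Ioi 0), Q ε) ∨ (∀ᶠ ε in nhdsWithin (0:ℝ) (Set.Ioi 0), ¬ Q ε)

lemma Dec.congr {Q Q' : ℝ → Prop} (h : Dec Q) (hiff : ∀ ε, 0 < ε → (Q ε ↔ Q' ε)) : Dec Q' := by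
  have hpos : ∀ᶠ ε in nhdsWithin (0:ℝ) (Set.Ioi 0), 0 < ε :=
    eventually_mem_nhdsWithin.mono (fun x hx => hx)
  rcases h with h | h
  · exact Or.inl ((h.and hpos).mono (fun ε ⟨hq, hp⟩ => (hiff ε hp).1 hq))
  · exact Or.inr ((h.and hpos).mono (fun ε ⟨hq, hp⟩ hq' => hq ((hiff ε hp).2 hq')))

lemma Dec.forall {ι : Type*} [Finite ι] (Q : ι → ℝ → Prop) (h : ∀ i, Dec (Q i)) :
    Dec (fun ε => ∀ i, Q i ε) := by
  by_cases h' : ∀ i, ∀ᶠ ε in nhdsWithin (0:ℝ) (Set.Ioi 0), Q i ε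
  · exact Or.inl (eventually_all.2 h')
  · push_neg at h'
    obtain ⟨i, hi⟩ := h'
    rcases h i with hh | hh
    · exact absurd hh (not_eventually.2 hi)
    · exact Or.inr (hh.mono (fun ε he hall => he (hall i)))

lemma Dec.to_const {Q : ℝ → Prop} (h : Dec Q) :
    ∃ δ > (0:ℝ), ∀ ε₁ ε₂ : ℝ, 0 < ε₁ → ε₁ < δ → 0 < ε₂ → ε₂ < δ → (Q ε₁ ↔ Q ε₂) := by
  rcases h with h | h <;>
  · rw [eventually_iff, mem_nhdsGT_iff_exists_Ioo_subset] at h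
    obtain ⟨u, hu, hsub⟩ := h
    exact ⟨u, hu, fun ε₁ ε₂ h1 h1' h2 h2' => by
      have := hsub ⟨h1, h1'⟩; have := hsub ⟨h2, h2'⟩
      simp_all⟩
open Filter Polynomial

lemma sign_const_of_no_root (p : Polynomial ℝ) (δ : ℝ)
    (hnoroot : ∀ ε, 0 < ε → ε < δ → p.eval ε ≠ 0)
    {ε₁ ε₂ : ℝ} (h1 : 0 < ε₁) (h1' : ε₁ < δ) (h2 : 0 < ε₂) (h2' : ε₂ < δ)
    (hs1 : p.eval ε₁ < 0) (hs2 : 0 ≤ p.eval ε₂) : False := by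
  have hmem : (0:ℝ) ∈ Set.uIcc (p.eval ε₁) (p.eval ε₂) :=
    Set.mem_uIcc.2 (Or.inl ⟨le_of_lt hs1, hs2⟩)
  obtain ⟨c, hc, hc0⟩ := intermediate_value_uIcc (a := ε₁) (b := ε₂) (f := p.eval)
    (Continuous.continuousOn p.continuous) hmem
  rw [Set.mem_uIcc] at hc
  have hcpos : 0 < c := by rcases hc with ⟨h, _⟩ | ⟨h, _⟩ <;> linarith
  have hcδ : c < δ := by rcases hc with ⟨_, h⟩ | ⟨_, h⟩ <;> linarith
  exact hnoroot c hcpos hcδ hc0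

lemma Dec_poly' (p : Polynomial ℝ) :
    ∃ δ > (0:ℝ), (∀ ε, 0 < ε → ε < δ → 0 ≤ p.eval ε) ∨ (∀ ε, 0 < ε → ε < δ → ¬ 0 ≤ p.eval ε) := by
  rcases eq_or_ne p 0 with rfl | hp
  · exact ⟨1, one_pos, Or.inl (fun ε _ _ => by simp)⟩
  · classical
    set S := p.roots.toFinset.filter (fun r => 0 < r) with hS
    set δ := if h : S.Nonempty then S.min' h else 1 with hδ
    have hδpos : 0 < δ := by
      rw [hδ]; split_ifs with h
      · have := S.min'_mem h
        simp only [hS, Finset.mem_filter] at this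
        exact this.2
      · exact one_pos
    have hnoroot : ∀ ε, 0 < ε → ε < δ → p.eval ε ≠ 0 := by
      intro ε hε hεδ hev
      have hmem : ε ∈ S := by
        simp only [hS, Finset.mem_filter, Multiset.mem_toFinset, mem_roots hp, IsRoot.def]
        exact ⟨hev, hε⟩
      have hne : S.Nonempty := ⟨ε, hmem⟩
      rw [hδ, dif_pos hne] at hεδ
      exact absurd (S.min'_le ε hmem) (not_le.2 hεδ)
    by_cases hsgn : 0 ≤ p.eval (δ/2)
    · refine ⟨δ, hδpos, Or.inl (fun ε hε hεδ => ?_)⟩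
      by_contra hlt
      push_neg at hlt
      exact sign_const_of_no_root p δ hnoroot hε hεδ (by linarith) (by linarith) hlt hsgn
    · refine ⟨δ, hδpos, Or.inr (fun ε hε hεδ h0 => ?_)⟩
      push_neg at hsgn
      exact sign_const_of_no_root p δ hnoroot (by linarith) (by linarith) hε hεδ hsgn h0

lemma exists_between_forall {α β : Type*} [Fintype α] [Fintype β] (f : α → ℝ) (g : β → ℝ)
    (h : ∀ a b, f a ≤ g b) : ∃ t : ℝ, (∀ a, f a ≤ t) ∧ ∀ b, t ≤ g b := by
  cases isEmpty_or_nonempty α with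
  | inl hα =>
    cases isEmpty_or_nonempty β with
    | inl hβ => exact ⟨0, fun a => isEmptyElim a, fun b => isEmptyElim b⟩
    | inr hβ => exact ⟨Finset.univ.inf' Finset.univ_nonempty g, fun a => isEmptyElim a,
        fun b => Finset.inf'_le _ (Finset.mem_univ b)⟩
  | inr hα =>
    refine ⟨Finset.univ.sup' Finset.univ_nonempty f,
      fun a => Finset.le_sup' f (Finset.mem_univ a), fun b => ?_⟩
    exact Finset.sup'_le _ _ fun a _ => h a b

lemma fm_step {n : ℕ} {ι : Type} [Fintype ι] (v : ι → Fin (n+1) → ℝ) (q : ι → ℝ) :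
    (∃ y : Fin n → ℝ,
      (∀ k : {k : ι // v k (Fin.last n) = 0}, ∑ j, v k.1 j.castSucc * y j ≤ q k.1) ∧
      (∀ kp : {k : ι // 0 < v k (Fin.last n)}, ∀ kn : {k : ι // v k (Fin.last n) < 0},
        ∑ j, (v kp.1 (Fin.last n) * v kn.1 j.castSucc
             - v kn.1 (Fin.last n) * v kp.1 j.castSucc) * y j
          ≤ v kp.1 (Fin.last n) * q kn.1 - v kn.1 (Fin.last n) * q kp.1))
    ↔ (∃ x : Fin (n+1) → ℝ, ∀ k, ∑ j, v k j * x j ≤ q k) := by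
  set c := fun k => v k (Fin.last n) with hc
  constructor
  · rintro ⟨y, h0, hpn⟩
    set S := fun k => ∑ j, v k j.castSucc * y j with hSdef
    have hcomb : ∀ (kp : {k : ι // 0 < c k}) (kn : {k : ι // c k < 0}),
        c kp.1 * S kn.1 - c kn.1 * S kp.1 ≤ c kp.1 * q kn.1 - c kn.1 * q kp.1 := by
      intro kp kn
      have := hpn kp kn
      have hrw : ∑ j, (c kp.1 * v kn.1 j.castSucc - c kn.1 * v kp.1 j.castSucc) * y j
          = c kp.1 * S kn.1 - c kn.1 * S kp.1 := by
        simp only [hSdef, Finset.mul_sum, ← Finset.sum_sub_distrib]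
        exact Finset.sum_congr rfl (fun j _ => by ring)
      rw [hrw] at this
      exact this
    obtain ⟨t, ht1, ht2⟩ := exists_between_forall
      (f := fun kn : {k : ι // c k < 0} => (q kn.1 - S kn.1) / c kn.1)
      (g := fun kp : {k : ι // 0 < c k} => (q kp.1 - S kp.1) / c kp.1)
      (by
        intro kn kp
        have h1 : c kp.1 > 0 := kp.2
        have h2 : c kn.1 < 0 := kn.2
        have h3 := hcomb kp kn
        have hrw2 : (q kn.1 - S kn.1) / c kn.1 = (-(q kn.1 - S kn.1)) / (-c kn.1) := by
          rw [neg_div_neg_eq]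
        show (q kn.1 - S kn.1) / c kn.1 ≤ (q kp.1 - S kp.1) / c kp.1
        rw [hrw2, div_le_div_iff₀ (by linarith) h1]
        nlinarith)
    refine ⟨Fin.snoc y t, fun k => ?_⟩
    have hsum : ∑ j, v k j * (Fin.snoc y t : Fin (n+1) → ℝ) j = S k + c k * t := by
      rw [Fin.sum_univ_castSucc]
      simp [hSdef, hc]
    rw [hsum]
    rcases lt_trichotomy (c k) 0 with hk | hk | hk
    · have := ht1 ⟨k, hk⟩
      rw [div_le_iff_of_neg hk] at this
      linarith
    · have := h0 ⟨k, hk⟩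
      rw [hk]; simpa [hSdef] using by linarith [this]
    · have := ht2 ⟨k, hk⟩
      rw [le_div_iff₀ hk] at this
      linarith
  · rintro ⟨x, hx⟩
    refine ⟨fun j => x j.castSucc, ?_, ?_⟩
    · intro k
      have := hx k.1
      rw [Fin.sum_univ_castSucc] at this
      rw [show v k.1 (Fin.last n) = 0 from k.2] at this
      linarith
    · intro kp kn
      have h1 := hx kp.1
      have h2 := hx kn.1
      rw [Fin.sum_univ_castSucc] at h1 h2
      have hrw : ∑ j : Fin n, (c kp.1 * v kn.1 j.castSucc - c kn.1 * v kp.1 j.castSucc) * x j.castSucc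
          = c kp.1 * (∑ j : Fin n, v kn.1 j.castSucc * x j.castSucc)
          - c kn.1 * (∑ j : Fin n, v kp.1 j.castSucc * x j.castSucc) := by
        simp only [Finset.mul_sum, ← Finset.sum_sub_distrib]
        exact Finset.sum_congr rfl (fun j _ => by ring)
      rw [hrw]
      have hp : 0 < c kp.1 := kp.2
      have hn : c kn.1 < 0 := kn.2
      nlinarith [mul_le_mul_of_nonneg_left h2 (le_of_lt hp),
        mul_le_mul_of_nonpos_left h1 (le_of_lt hn)]

open Polynomial in
lemma Dec_poly (p : Polynomial ℝ) : Dec (fun ε => 0 ≤ p.eval ε) := by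
  obtain ⟨δ, hδ, h⟩ := Dec_poly' p
  have hmem : Set.Ioo (0:ℝ) δ ∈ nhdsWithin (0:ℝ) (Set.Ioi 0) :=
    Ioo_mem_nhdsGT_of_mem (by constructor <;> simp [hδ, le_refl])
  rcases h with h | h
  · exact Or.inl (Filter.eventually_iff.2 (Filter.mem_of_superset hmem
      (fun ε hε => h ε hε.1 hε.2)))
  · exact Or.inr (Filter.eventually_iff.2 (Filter.mem_of_superset hmem
      (fun ε hε => h ε hε.1 hε.2)))

open Polynomial in
lemma fm (n : ℕ) : ∀ (ι : Type) [Fintype ι] (v : ι → Fin n → ℝ) (P : ι → Polynomial ℝ),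
    Dec (fun ε => ∃ x : Fin n → ℝ, ∀ k, ∑ j, v k j * x j ≤ (P k).eval ε) := by
  induction n with
  | zero =>
    intro ι _ v P
    have h : Dec (fun ε => ∀ k, 0 ≤ (P k).eval ε) := Dec.forall _ (fun k => Dec_poly (P k))
    refine h.congr (fun ε _ => ?_)
    constructor
    · intro h'
      exact ⟨fun j => 0, fun k => by simpa using h' k⟩
    · rintro ⟨x, hx⟩ k
      simpa using hx k
  | succ n ih =>
    intro ι _ v P
    classical
    set c := fun k => v k (Fin.last n) with hc
    let κ := {k : ι // c k = 0} ⊕ ({k : ι // 0 < c k} × {k : ι // c k < 0})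
    let v' : κ → Fin n → ℝ := Sum.elim (fun k j => v k.1 j.castSucc)
      (fun kk j => c kk.1.1 * v kk.2.1 j.castSucc - c kk.2.1 * v kk.1.1 j.castSucc)
    let P' : κ → Polynomial ℝ := Sum.elim (fun k => P k.1)
      (fun kk => Polynomial.C (c kk.1.1) * P kk.2.1 - Polynomial.C (c kk.2.1) * P kk.1.1)
    have h := ih κ v' P'
    refine h.congr (fun ε _ => ?_)
    rw [show (∃ y : Fin n → ℝ, ∀ k' : κ, ∑ j, v' k' j * y j ≤ (P' k').eval ε)
        ↔ (∃ y : Fin n → ℝ,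
      (∀ k : {k : ι // v k (Fin.last n) = 0}, ∑ j, v k.1 j.castSucc * y j ≤ (P k.1).eval ε) ∧
      (∀ kp : {k : ι // 0 < v k (Fin.last n)}, ∀ kn : {k : ι // v k (Fin.last n) < 0},
        ∑ j, (v kp.1 (Fin.last n) * v kn.1 j.castSucc
             - v kn.1 (Fin.last n) * v kp.1 j.castSucc) * y j
          ≤ v kp.1 (Fin.last n) * ((P kn.1).eval ε) - v kn.1 (Fin.last n) * ((P kp.1).eval ε)))
      from exists_congr (fun y => by
        constructor
        · intro hall
          exact ⟨fun k => hall (Sum.inl k), fun kp kn => by simpa [v', P'] using hall (Sum.inr (kp, kn))⟩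
        · rintro ⟨h1, h2⟩ (k | ⟨kp, kn⟩)
          · exact h1 k
          · simpa [v', P'] using h2 kp kn)]
    exact fm_step v (fun k => (P k).eval ε)

/-- The perturbed face complex 𝓕(ε) is eventually constant: there is δ > 0 such that
𝓕(ε₁) = 𝓕(ε₂) for all ε₁, ε₂ ∈ (0, δ).  This common value is denoted 𝓕(0+). -/
theorem perturbed_face_complex_eventually_constant
    (n m : ℕ) (hn : 1 ≤ n) (hm : 1 ≤ m)
    (a : Fin m → Fin n → ℝ) (b : Fin m → ℝ)
    (ha : ∀ i, a i ≠ 0)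
    (H F : ℝ → Fin m → Set (Fin n → ℝ))
    (K : ℝ → Set (Fin n → ℝ))
    (hH : ∀ ε i, H ε i = {x | ∑ j, a i j * x j ≤ b i + ε ^ ((i : ℕ) + 1)})
    (hK : ∀ ε, K ε = ⋂ i, H ε i)
    (hF : ∀ ε i, F ε i = {x | ∑ j, a i j * x j = b i + ε ^ ((i : ℕ) + 1)} ∩ K ε)
    (𝓕 : ℝ → Set (Finset (Fin m)))
    (h𝓕 : ∀ ε (J : Finset (Fin m)),
      J ∈ 𝓕 ε ↔ J.Nonempty ∧ (⋂ i ∈ J, F ε i).Nonempty) :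
    ∃ δ > (0 : ℝ), ∀ ε₁ ε₂ : ℝ, 0 < ε₁ → ε₁ < δ → 0 < ε₂ → ε₂ < δ →
      𝓕 ε₁ = 𝓕 ε₂ := by
  classical
  have hdec : ∀ J : Finset (Fin m), Dec (fun ε => J ∈ 𝓕 ε) := by
    intro J
    rcases J.eq_empty_or_nonempty with rfl | hJne
    · refine Or.inr (Filter.Eventually.of_forall (fun ε hmem => ?_))
      exact absurd ((h𝓕 ε ∅).1 hmem).1 (by simp)
    · -- encode as linear feasibility system with polynomial RHS
      let ι := Fin m ⊕ {i : Fin m // i ∈ J}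
      let v : ι → Fin n → ℝ := Sum.elim a (fun i j => -(a i.1 j))
      let P : ι → Polynomial ℝ := Sum.elim
        (fun i => Polynomial.C (b i) + Polynomial.X ^ ((i : ℕ) + 1))
        (fun i => -(Polynomial.C (b i.1) + Polynomial.X ^ ((i.1 : ℕ) + 1)))
      have h := fm n ι v P
      refine h.congr (fun ε _ => ?_)
      rw [h𝓕 ε J]
      constructor
      · rintro ⟨x, hx⟩
        refine ⟨hJne, ⟨x, ?_⟩⟩
        simp only [Set.mem_iInter]
        intro i hi
        rw [hF ε i]
        have h1 := hx (Sum.inl i)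
        have h2 := hx (Sum.inr ⟨i, hi⟩)
        simp only [v, P, Sum.elim_inl, Sum.elim_inr, Polynomial.eval_add,
          Polynomial.eval_neg, Polynomial.eval_C, Polynomial.eval_pow,
          Polynomial.eval_X] at h1 h2
        constructor
        · show ∑ j, a i j * x j = b i + ε ^ ((i : ℕ) + 1)
          have : -(∑ j, a i j * x j) ≤ -(b i + ε ^ ((i : ℕ) + 1)) := by
            calc -(∑ j, a i j * x j) = ∑ j, -(a i j) * x j := by
                  rw [← Finset.sum_neg_distrib]; exact Finset.sum_congr rfl (fun j _ => by ring)
              _ ≤ -(b i + ε ^ ((i : ℕ) + 1)) := h2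
          linarith
        · rw [hK ε]
          simp only [Set.mem_iInter]
          intro i'
          rw [hH ε i']
          have := hx (Sum.inl i')
          simpa [v, P] using this
      · rintro ⟨-, ⟨x, hx⟩⟩
        simp only [Set.mem_iInter] at hx
        refine ⟨x, ?_⟩
        rintro (i | ⟨i, hi⟩)
        · obtain ⟨i0, hi0⟩ := hJne
          have := hx i0 hi0
          rw [hF ε i0] at this
          have hKx := this.2
          rw [hK ε] at hKx
          simp only [Set.mem_iInter] at hKx
          have := hKx i
          rw [hH ε i] at this
          simpa [v, P] using this
        · have := hx i hi
          rw [hF ε i] at this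
          have heq : ∑ j, a i j * x j = b i + ε ^ ((i : ℕ) + 1) := this.1
          simp only [v, P, Sum.elim_inr, Polynomial.eval_neg, Polynomial.eval_add,
            Polynomial.eval_C, Polynomial.eval_pow, Polynomial.eval_X]
          calc ∑ j, -(a i j) * x j = -(∑ j, a i j * x j) := by
                rw [← Finset.sum_neg_distrib]; exact Finset.sum_congr rfl (fun j _ => by ring)
            _ = -(b i + ε ^ ((i : ℕ) + 1)) := by rw [heq]
            _ ≤ -(b i + ε ^ ((i : ℕ) + 1)) := le_refl _
  choose d hd hconst using fun J => (hdec J).to_const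
  have hne : (Finset.univ : Finset (Finset (Fin m))).Nonempty := Finset.univ_nonempty
  refine ⟨Finset.univ.inf' hne d, ?_, ?_⟩
  · exact (Finset.lt_inf'_iff hne).2 (fun J _ => hd J)
  · intro ε₁ ε₂ h1 h1' h2 h2'
    ext J
    exact hconst J ε₁ ε₂ h1 (lt_of_lt_of_le h1' (Finset.inf'_le _ (Finset.mem_univ J)))
      h2 (lt_of_lt_of_le h2' (Finset.inf'_le _ (Finset.mem_univ J)))
end

section
/- There exists δ > 0 such that for every ε ∈ (0, δ) and every J ∈ 𝓕(ε), the vectors {aᵢ : i ∈ J} are linearly independent. -/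
/-- For all sufficiently small ε > 0, for every member J of the perturbed face
complex 𝓕(ε), the vectors {aᵢ : i ∈ J} are linearly independent. -/
theorem perturbed_face_complex_linearly_independent
    (n m : ℕ) (hn : 1 ≤ n) (hm : 1 ≤ m)
    (a : Fin m → Fin n → ℝ) (b : Fin m → ℝ)
    (ha : ∀ i, a i ≠ 0)
    (H F : ℝ → Fin m → Set (Fin n → ℝ))
    (K : ℝ → Set (Fin n → ℝ))
    (hH : ∀ ε i, H ε i = {x | ∑ j, a i j * x j ≤ b i + ε ^ ((i : ℕ) + 1)})
    (hK : ∀ ε, K ε = ⋂ i, H ε i)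
    (hF : ∀ ε i, F ε i = {x | ∑ j, a i j * x j = b i + ε ^ ((i : ℕ) + 1)} ∩ K ε)
    (𝓕 : ℝ → Set (Finset (Fin m)))
    (h𝓕 : ∀ ε (J : Finset (Fin m)),
      J ∈ 𝓕 ε ↔ J.Nonempty ∧ (⋂ i ∈ J, F ε i).Nonempty) :
    ∃ δ > (0 : ℝ), ∀ ε : ℝ, 0 < ε → ε < δ →
      ∀ J ∈ 𝓕 ε, LinearIndependent ℝ (fun i : {i : Fin m // i ∈ J} => a i) := by
  classical
  -- choose a linear dependency witness for every dependent J
  have key : ∀ J : Finset (Fin m),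
      ∃ g : Fin m → ℝ,
        (¬ LinearIndependent ℝ (fun i : {i : Fin m // i ∈ J} => a i) →
          ((∀ j, ∑ i ∈ J, g i * a i j = 0) ∧ ∃ i ∈ J, g i ≠ 0)) := by
    intro J
    by_cases h : LinearIndependent ℝ (fun i : {i : Fin m // i ∈ J} => a i)
    · exact ⟨0, fun h' => absurd h h'⟩
    · rw [Fintype.not_linearIndependent_iff] at h
      obtain ⟨g, hg0, i0, hi0⟩ := h
      refine ⟨fun i => if h : i ∈ J then g ⟨i, h⟩ else 0,
        fun _ => ⟨?_, ⟨i0, i0.2, by simp [hi0]⟩⟩⟩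
      intro j
      have h1 := congrFun hg0 j
      simp only [Finset.sum_apply, Pi.smul_apply, smul_eq_mul, Pi.zero_apply,
        Finset.univ_eq_attach] at h1
      rw [← Finset.sum_attach J (fun i => (if h : i ∈ J then g ⟨i, h⟩ else 0) * a i j)]
      simpa using h1
    -- done
  choose g hg using key
  set P : Finset (Fin m) → Polynomial ℝ :=
    fun J => ∑ i ∈ J, Polynomial.C (g J i) * (Polynomial.C (b i) + Polynomial.X ^ ((i : ℕ) + 1))
    with hPdef
  have hPne : ∀ J : Finset (Fin m),
      ¬ LinearIndependent ℝ (fun i : {i : Fin m // i ∈ J} => a i) → P J ≠ 0 := by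
    intro J hJ hP0
    obtain ⟨-, i0, hi0J, hi0⟩ := hg J hJ
    apply hi0
    have hc := congrArg (fun p => Polynomial.coeff p ((i0 : ℕ) + 1)) hP0
    simp only [hPdef, Polynomial.finset_sum_coeff, Polynomial.coeff_C_mul,
      Polynomial.coeff_add, Polynomial.coeff_C, Polynomial.coeff_X_pow,
      Polynomial.coeff_zero, Nat.add_one_ne_zero, if_false, zero_add] at hc
    have hiff : ∀ i : Fin m, ((i0 : ℕ) + 1 = (i : ℕ) + 1) ↔ i = i0 := by
      intro i
      constructor
      · intro h; exact Fin.ext (by omega)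
      · intro h; rw [h]
    simp only [hiff] at hc
    simpa [Finset.sum_ite_eq', hi0J] using hc
  have hEval : ∀ (J : Finset (Fin m)) (ε : ℝ),
      (P J).eval ε = ∑ i ∈ J, g J i * (b i + ε ^ ((i : ℕ) + 1)) := by
    intro J ε
    simp [hPdef, Polynomial.eval_finset_sum]
  set R : Finset ℝ :=
    (Finset.univ : Finset (Finset (Fin m))).biUnion (fun J => (P J).roots.toFinset) with hRdef
  set Rp : Finset ℝ := R.filter (fun r => 0 < r) with hRpdef
  -- main claim: a bad ε lies in Rp
  have main : ∀ ε : ℝ, 0 < ε → ∀ J ∈ 𝓕 ε,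
      ¬ LinearIndependent ℝ (fun i : {i : Fin m // i ∈ J} => a i) → ε ∈ Rp := by
    intro ε hε0 J hJ hdep
    obtain ⟨hJne, x, hx⟩ := (h𝓕 ε J).1 hJ
    obtain ⟨hsum, -, -, -⟩ := hg J hdep
    have hxF : ∀ i ∈ J, ∑ j, a i j * x j = b i + ε ^ ((i : ℕ) + 1) := by
      intro i hi
      have hxi : x ∈ F ε i := by
        have := Set.mem_iInter₂.1 hx i hi
        exact this
      rw [hF] at hxi
      exact hxi.1
    have hroot : (P J).eval ε = 0 := by
      rw [hEval]
      calc ∑ i ∈ J, g J i * (b i + ε ^ ((i : ℕ) + 1))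
          = ∑ i ∈ J, g J i * ∑ j, a i j * x j := by
            refine Finset.sum_congr rfl fun i hi => ?_
            rw [hxF i hi]
        _ = ∑ j, (∑ i ∈ J, g J i * a i j) * x j := by
            simp_rw [Finset.mul_sum, Finset.sum_mul]
            rw [Finset.sum_comm]
            simp_rw [mul_assoc]
        _ = 0 := by simp [hsum]
    have hPJ : P J ≠ 0 := hPne J hdep
    refine Finset.mem_filter.2 ⟨Finset.mem_biUnion.2 ⟨J, Finset.mem_univ _, ?_⟩, hε0⟩
    exact Multiset.mem_toFinset.2 ((Polynomial.mem_roots hPJ).2 hroot)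
  by_cases hne : Rp.Nonempty
  · refine ⟨Rp.min' hne, ?_, ?_⟩
    · have := Rp.min'_mem hne
      exact (Finset.mem_filter.1 this).2
    · intro ε hε0 hεδ J hJ
      by_contra hdep
      exact absurd (Rp.min'_le ε (main ε hε0 J hJ hdep)) (not_le.2 hεδ)
  · refine ⟨1, one_pos, ?_⟩
    intro ε hε0 hεδ J hJ
    by_contra hdep
    exact hne ⟨ε, main ε hε0 J hJ hdep⟩
end

section
/- There exists δ > 0 such that for every ε ∈ (0, δ) and every J ∈ 𝓕(ε), the cardinality |J| is at most rank(A); in particular |J| ≤ n. -/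
open Polynomial Filter Set

lemma poly_eventually_ne_aux {q : Polynomial ℝ} (hq : q ≠ 0) :
    ∀ᶠ x in nhdsWithin (0:ℝ) (Set.Ioi 0), q.eval x ≠ 0 := by
  have hfin : ({x : ℝ | q.IsRoot x} \ {0}).Finite :=
    (Polynomial.finite_setOf_isRoot hq).diff
  have hclosed : IsClosed ({x : ℝ | q.IsRoot x} \ {0}) := hfin.isClosed
  have h0 : (0:ℝ) ∈ ({x : ℝ | q.IsRoot x} \ {0})ᶜ := by simp
  have hopen : ∀ᶠ x in nhds (0:ℝ), x ∈ ({x : ℝ | q.IsRoot x} \ {0})ᶜ :=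
    hclosed.isOpen_compl.mem_nhds h0
  have h1 : ∀ᶠ x in nhdsWithin (0:ℝ) (Set.Ioi 0), x ∈ ({x : ℝ | q.IsRoot x} \ {0})ᶜ :=
    hopen.filter_mono nhdsWithin_le_nhds
  have h2 : ∀ᶠ x in nhdsWithin (0:ℝ) (Set.Ioi 0), x ∈ Set.Ioi (0:ℝ) :=
    self_mem_nhdsWithin
  filter_upwards [h1, h2] with x hx hx0 hroot
  exact hx ⟨hroot, (ne_of_gt hx0)⟩

/-- For all sufficiently small ε > 0, every member J of the perturbed face complex
𝓕(ε) has cardinality at most rank(A); in particular |J| ≤ n. -/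
theorem perturbed_face_complex_card_le_rank
    (n m : ℕ) (hn : 1 ≤ n) (hm : 1 ≤ m)
    (a : Fin m → Fin n → ℝ) (b : Fin m → ℝ)
    (ha : ∀ i, a i ≠ 0)
    (A : Matrix (Fin n) (Fin m) ℝ) (hA : ∀ i j, A j i = a i j)
    (H F : ℝ → Fin m → Set (Fin n → ℝ))
    (K : ℝ → Set (Fin n → ℝ))
    (hH : ∀ ε i, H ε i = {x | ∑ j, a i j * x j ≤ b i + ε ^ ((i : ℕ) + 1)})
    (hK : ∀ ε, K ε = ⋂ i, H ε i)
    (hF : ∀ ε i, F ε i = {x | ∑ j, a i j * x j = b i + ε ^ ((i : ℕ) + 1)} ∩ K ε)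
    (𝓕 : ℝ → Set (Finset (Fin m)))
    (h𝓕 : ∀ ε (J : Finset (Fin m)),
      J ∈ 𝓕 ε ↔ J.Nonempty ∧ (⋂ i ∈ J, F ε i).Nonempty) :
    ∃ δ > (0 : ℝ), ∀ ε : ℝ, 0 < ε → ε < δ →
      ∀ J ∈ 𝓕 ε, J.card ≤ A.rank ∧ J.card ≤ n := by
  classical
  have hAT : A.transpose = a := by
    funext i j
    simp [Matrix.transpose_apply, hA]
  have hspan : A.rank = Module.finrank ℝ (Submodule.span ℝ (Set.range a)) := by
    rw [Matrix.rank_eq_finrank_span_cols, ← hAT]; rfl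
  have hrank_le_n : A.rank ≤ n := A.rank_le_card_height.trans (by simp)
  -- linear independent families indexed by J give card bound
  have hcard : ∀ J : Finset (Fin m),
      LinearIndependent ℝ (fun i : J => a i) → J.card ≤ A.rank := by
    intro J h
    set W := Submodule.span ℝ (Set.range a) with hW
    have hmem : ∀ i : J, a i ∈ W := fun i => Submodule.subset_span ⟨i, rfl⟩
    have h' : LinearIndependent ℝ (fun i : J => (⟨a (i : Fin m), hmem i⟩ : W)) :=
      LinearIndependent.of_comp W.subtype h
    haveI : FiniteDimensional ℝ W :=
      FiniteDimensional.span_of_finite ℝ (Set.finite_range a)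
    have hle := h'.fintype_card_le_finrank
    rw [hspan]
    simpa [Fintype.card_coe] using hle
  -- key eventual statement per J
  have key : ∀ J : Finset (Fin m), ∀ᶠ ε in nhdsWithin (0:ℝ) (Set.Ioi 0),
      ∀ x : Fin n → ℝ, (∀ i ∈ J, ∑ j, a i j * x j = b i + ε ^ ((i : ℕ) + 1)) →
        J.card ≤ A.rank := by
    intro J
    by_cases h : LinearIndependent ℝ (fun i : J => a i)
    · exact Filter.Eventually.of_forall (fun ε x _ => hcard J h)
    · obtain ⟨g, hg0, i0, hi0⟩ := Fintype.not_linearIndependent_iff.mp h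
      set q : Polynomial ℝ := Polynomial.C (∑ i : J, g i * b i)
          + ∑ i : J, Polynomial.C (g i) * Polynomial.X ^ ((i : ℕ) + 1) with hqdef
      have hqne : q ≠ 0 := by
        intro hq0
        have hc : q.coeff ((i0 : ℕ) + 1) = g i0 := by
          rw [hqdef]
          simp only [Polynomial.coeff_add, Polynomial.coeff_C,
            Polynomial.finset_sum_coeff, Polynomial.coeff_C_mul,
            Polynomial.coeff_X_pow, mul_ite, mul_one, mul_zero]
          rw [if_neg (by omega)]
          rw [Finset.sum_eq_single i0]
          · simp
          · intro i _ hne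
            rw [if_neg]
            intro hcontra
            exact hne (Subtype.ext (Fin.ext (by omega)))
          · simp
        rw [hq0] at hc
        simp at hc
        exact hi0 hc.symm
      filter_upwards [poly_eventually_ne_aux hqne] with ε hε
      intro x hx
      exfalso
      apply hε
      have hzero : ∀ j, (∑ i : J, g i * a i j) = 0 := by
        intro j
        have := congrFun hg0 j
        simpa using this
      have hsum : ∑ i : J, g i * (b i + ε ^ ((i : ℕ) + 1)) = 0 := by
        calc ∑ i : J, g i * (b i + ε ^ ((i : ℕ) + 1))
            = ∑ i : J, g i * (∑ j, a i j * x j) := by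
              refine Finset.sum_congr rfl fun i _ => ?_
              rw [hx i i.2]
          _ = ∑ i : J, ∑ j, g i * a i j * x j := by
              refine Finset.sum_congr rfl fun i _ => ?_
              rw [Finset.mul_sum]
              exact Finset.sum_congr rfl fun j _ => (mul_assoc _ _ _).symm
          _ = ∑ j, ∑ i : J, g i * a i j * x j := Finset.sum_comm
          _ = ∑ j, (∑ i : J, g i * a i j) * x j := by
              refine Finset.sum_congr rfl fun j _ => (Finset.sum_mul _ _ _).symm
          _ = 0 := Finset.sum_eq_zero fun j _ => by rw [hzero j, zero_mul]
      have heval : q.eval ε = ∑ i : J, g i * (b i + ε ^ ((i : ℕ) + 1)) := by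
        rw [hqdef]
        simp [Polynomial.eval_finset_sum, mul_add, Finset.sum_add_distrib]
      rw [heval, hsum]
  have all : ∀ᶠ ε in nhdsWithin (0:ℝ) (Set.Ioi 0), ∀ J : Finset (Fin m),
      ∀ x : Fin n → ℝ, (∀ i ∈ J, ∑ j, a i j * x j = b i + ε ^ ((i : ℕ) + 1)) →
        J.card ≤ A.rank := Filter.eventually_all.mpr key
  obtain ⟨δ, hδ, hsub⟩ := mem_nhdsGT_iff_exists_Ioo_subset.mp all
  refine ⟨δ, hδ, ?_⟩
  intro ε hε1 hε2 J hJ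
  obtain ⟨hJne, x, hx⟩ := (h𝓕 ε J).mp hJ
  have hxF : ∀ i ∈ J, ∑ j, a i j * x j = b i + ε ^ ((i : ℕ) + 1) := by
    intro i hi
    have hxi : x ∈ F ε i := by
      have := Set.mem_iInter₂.mp hx i hi
      exact this
    rw [hF] at hxi
    exact hxi.1
  have hle := hsub ⟨hε1, hε2⟩ J x hxF
  exact ⟨hle, hle.trans hrank_le_n⟩
end

section
/- There exists δ > 0 such that for every ε ∈ (0, δ), the perturbed face complex is contained in the unperturbed one: 𝓕(ε) ⊆ 𝓕. Consequently |𝓕(ε)| ≤ |𝓕|. -/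
open Finset in
/-- Carathéodory for cones. -/
lemma cara_cone {V : Type*} [AddCommGroup V] [Module ℝ V] {ι : Type*} [Fintype ι]
    (g : ι → V) :
    ∀ (k : ℕ) (s : Finset ι) (_ : s.card ≤ k) (l : ι → ℝ), (∀ i, 0 ≤ l i) →
      (∀ i ∉ s, l i = 0) →
      ∃ (t : Finset ι) (l' : ι → ℝ), LinearIndependent ℝ (fun i : t => g i) ∧
        (∀ i, 0 ≤ l' i) ∧ (∀ i ∉ t, l' i = 0) ∧ ∑ i, l' i • g i = ∑ i, l i • g i := by
  intro k
  induction k with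
  | zero =>
    intro s hs l hl hsupp
    have hse : s = ∅ := Finset.card_eq_zero.mp (Nat.le_zero.mp hs)
    refine ⟨∅, l, ?_, hl, fun i _ => hsupp i (by simp [hse]), rfl⟩
    have : IsEmpty ((∅ : Finset ι) : Type _) := ⟨fun x => Finset.notMem_empty _ x.2⟩
    exact linearIndependent_empty_type
  | succ k ih =>
    intro s hs l hl hsupp
    by_cases hli : LinearIndependent ℝ (fun i : s => g i)
    · exact ⟨s, l, hli, hl, hsupp, rfl⟩
    · obtain ⟨c, hc0, i₁, hi₁⟩ := Fintype.not_linearIndependent_iff.mp hli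
      classical
      set c' : ι → ℝ := fun i => if h : i ∈ s then c ⟨i, h⟩ else 0 with hc'
      have hc'supp : ∀ i ∉ s, c' i = 0 := fun i hi => by simp [hc', hi]
      have hc'sum : ∑ i, c' i • g i = 0 := by
        have h1 : ∑ i, c' i • g i = ∑ i ∈ s, c' i • g i :=
          (Finset.sum_subset (Finset.subset_univ s)
            (fun i _ hi => by rw [hc'supp i hi, zero_smul])).symm
        rw [h1, ← Finset.sum_coe_sort s (fun i => c' i • g i), ← hc0]
        exact Finset.sum_congr rfl fun i _ => by simp [hc', i.2]
      have key : ∀ d : ι → ℝ, (∀ i ∉ s, d i = 0) → ∑ i, d i • g i = 0 →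
          (∃ i, 0 < d i) →
          ∃ (t : Finset ι) (l' : ι → ℝ), LinearIndependent ℝ (fun i : t => g i) ∧
            (∀ i, 0 ≤ l' i) ∧ (∀ i ∉ t, l' i = 0) ∧
            ∑ i, l' i • g i = ∑ i, l i • g i := by
        intro d hdsupp hdsum hdpos
        set P : Finset ι := s.filter (fun i => 0 < d i) with hP
        have hPne : P.Nonempty := by
          obtain ⟨i, hi⟩ := hdpos
          have his : i ∈ s := by
            by_contra h; rw [hdsupp i h] at hi; exact lt_irrefl 0 hi
          exact ⟨i, Finset.mem_filter.mpr ⟨his, hi⟩⟩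
        set t₀ : ℝ := P.inf' hPne (fun i => l i / d i) with ht₀
        have ht₀nn : 0 ≤ t₀ := by
          apply Finset.le_inf'
          intro i hi
          have := (Finset.mem_filter.mp hi).2
          exact div_nonneg (hl i) this.le
        obtain ⟨i₀, hi₀P, hi₀eq⟩ := Finset.exists_mem_eq_inf' hPne (fun i => l i / d i)
        have hi₀s : i₀ ∈ s := (Finset.mem_filter.mp hi₀P).1
        have hdi₀ : 0 < d i₀ := (Finset.mem_filter.mp hi₀P).2
        set l' : ι → ℝ := fun i => l i - t₀ * d i with hl'
        have hl'nn : ∀ i, 0 ≤ l' i := by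
          intro i
          by_cases hiP : i ∈ P
          · have hdi : 0 < d i := (Finset.mem_filter.mp hiP).2
            have : t₀ ≤ l i / d i := Finset.inf'_le _ hiP
            have := (le_div_iff₀ hdi).mp this
            simp only [hl']; linarith
          · have hdle : d i ≤ 0 := by
              by_cases his : i ∈ s
              · by_contra h
                exact hiP (Finset.mem_filter.mpr ⟨his, by linarith⟩)
              · rw [hdsupp i his]
            have : t₀ * d i ≤ 0 := mul_nonpos_of_nonneg_of_nonpos ht₀nn hdle
            have := hl i
            simp only [hl']; linarith
        have hl'supp : ∀ i ∉ s.erase i₀, l' i = 0 := by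
          intro i hi
          by_cases h : i = i₀
          · subst h
            have hne : d i ≠ 0 := ne_of_gt hdi₀
            simp only [hl']
            rw [ht₀, hi₀eq, div_mul_cancel₀ _ hne, sub_self]
          · have his : i ∉ s := fun hs' => hi (Finset.mem_erase.mpr ⟨h, hs'⟩)
            simp [hl', hsupp i his, hdsupp i his]
        have hl'sum : ∑ i, l' i • g i = ∑ i, l i • g i := by
          simp only [hl', sub_smul, Finset.sum_sub_distrib, mul_smul]
          rw [← Finset.smul_sum, hdsum, smul_zero, sub_zero]
        have hcard : (s.erase i₀).card ≤ k := by
          have := Finset.card_erase_lt_of_mem hi₀s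
          omega
        obtain ⟨t, l'', h1, h2, h3, h4⟩ := ih (s.erase i₀) hcard l' hl'nn hl'supp
        exact ⟨t, l'', h1, h2, h3, h4.trans hl'sum⟩
      by_cases hpos : ∃ i, 0 < c' i
      · exact key c' hc'supp hc'sum hpos
      · refine key (-c') (fun i hi => by simp [hc'supp i hi]) (by simpa using hc'sum) ?_
        push_neg at hpos
        refine ⟨i₁, ?_⟩
        have h1 : c' (i₁ : ι) = c i₁ := by simp [hc', i₁.2]
        have := hpos (i₁ : ι)
        simp only [Pi.neg_apply]
        rw [h1] at this ⊢
        rcases lt_or_eq_of_le this with h | h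
        · linarith
        · exact absurd h hi₁

lemma cone_isClosed {V : Type*} [NormedAddCommGroup V] [NormedSpace ℝ V] [FiniteDimensional ℝ V]
    {ι : Type*} [Fintype ι] (g : ι → V) :
    IsClosed {x : V | ∃ l : ι → ℝ, (∀ i, 0 ≤ l i) ∧ ∑ i, l i • g i = x} := by
  classical
  have hsum_restrict : ∀ (t : Finset ι) (l : ι → ℝ), (∀ i ∉ t, l i = 0) →
      ∑ i, l i • g i = ∑ i : t, l (i : ι) • g (i : ι) := by
    intro t l hsupp
    rw [Finset.sum_coe_sort t (fun i => l i • g i)]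
    exact (Finset.sum_subset (Finset.subset_univ t)
      (fun i _ hi => by rw [hsupp i hi, zero_smul])).symm
  have hT : ∀ t : Finset ι, LinearIndependent ℝ (fun i : t => g i) →
      IsClosed {x : V | ∃ l : ι → ℝ, (∀ i, 0 ≤ l i) ∧ (∀ i ∉ t, l i = 0) ∧
        ∑ i, l i • g i = x} := by
    intro t hli
    set L : (t → ℝ) →ₗ[ℝ] V :=
      { toFun := fun μ => ∑ i : t, μ i • g (i : ι)
        map_add' := by intro μ ν; simp [add_smul, Finset.sum_add_distrib]
        map_smul' := by intro c μ; simp [Finset.smul_sum, mul_smul] } with hLdef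
    have hker : LinearMap.ker L = ⊥ := by
      rw [LinearMap.ker_eq_bot']
      intro μ hμ
      funext i
      exact Fintype.linearIndependent_iff.mp hli μ hμ i
    have hemb := LinearMap.isClosedEmbedding_of_injective hker
    have horth : IsClosed {μ : t → ℝ | ∀ i, 0 ≤ μ i} := by
      have : {μ : t → ℝ | ∀ i, 0 ≤ μ i} = ⋂ i, {μ | 0 ≤ μ i} := by
        ext μ; simp [Set.mem_iInter]
      rw [this]
      exact isClosed_iInter fun i => isClosed_le continuous_const (continuous_apply i)
    have himg := hemb.isClosedMap _ horth
    have heq : L '' {μ : t → ℝ | ∀ i, 0 ≤ μ i}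
        = {x : V | ∃ l : ι → ℝ, (∀ i, 0 ≤ l i) ∧ (∀ i ∉ t, l i = 0) ∧
            ∑ i, l i • g i = x} := by
      ext x
      constructor
      · rintro ⟨μ, hμ, rfl⟩
        refine ⟨fun i => if h : i ∈ t then μ ⟨i, h⟩ else 0, ?_, ?_, ?_⟩
        · intro i; by_cases h : i ∈ t <;> simp [h, hμ _]
        · intro i hi; simp [hi]
        · rw [hsum_restrict t _ (fun i hi => by simp [hi])]
          exact Finset.sum_congr rfl fun i _ => by simp [i.2]
      · rintro ⟨l, hl0, hlsupp, rfl⟩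
        exact ⟨fun i => l i, fun i => hl0 i, (hsum_restrict t l hlsupp).symm⟩
    rw [← heq]
    exact himg
  have hC : {x : V | ∃ l : ι → ℝ, (∀ i, 0 ≤ l i) ∧ ∑ i, l i • g i = x}
      = ⋃ t : Finset ι, (if LinearIndependent ℝ (fun i : t => g i) then
          {x : V | ∃ l : ι → ℝ, (∀ i, 0 ≤ l i) ∧ (∀ i ∉ t, l i = 0) ∧
            ∑ i, l i • g i = x} else (∅ : Set V)) := by
    ext x
    simp only [Set.mem_setOf_eq, Set.mem_iUnion]
    constructor
    · rintro ⟨l, hl0, rfl⟩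
      obtain ⟨t, l', hli, h0, hsupp, hsum⟩ :=
        cara_cone g (Finset.univ.card) Finset.univ le_rfl l hl0 (fun i hi => absurd (Finset.mem_univ i) hi)
      exact ⟨t, by rw [if_pos hli]; exact ⟨l', h0, hsupp, hsum⟩⟩
    · rintro ⟨t, hx⟩
      by_cases hli : LinearIndependent ℝ (fun i : t => g i)
      · rw [if_pos hli] at hx
        obtain ⟨l, h0, _, hsum⟩ := hx
        exact ⟨l, h0, hsum⟩
      · rw [if_neg hli] at hx
        exact absurd hx (Set.notMem_empty x)
  rw [hC]
  refine isClosed_iUnion_of_finite fun t => ?_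
  by_cases hli : LinearIndependent ℝ (fun i : t => g i)
  · rw [if_pos hli]; exact hT t hli
  · rw [if_neg hli]; exact isClosed_empty

/-- For all sufficiently small ε > 0 the perturbed face complex is contained in the
unperturbed one, 𝓕(ε) ⊆ 𝓕; consequently |𝓕(ε)| ≤ |𝓕|. -/
theorem perturbed_face_complex_subset
    (n m : ℕ) (hn : 1 ≤ n) (hm : 1 ≤ m)
    (a : Fin m → Fin n → ℝ) (b : Fin m → ℝ)
    (ha : ∀ i, a i ≠ 0)
    (H F : Fin m → Set (Fin n → ℝ))
    (K : Set (Fin n → ℝ))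
    (hH : ∀ i, H i = {x | ∑ j, a i j * x j ≤ b i})
    (hK : K = ⋂ i, H i) (hKne : K.Nonempty)
    (hF : ∀ i, F i = {x | ∑ j, a i j * x j = b i} ∩ K)
    (𝓕₀ : Set (Finset (Fin m)))
    (h𝓕₀ : ∀ J : Finset (Fin m), J ∈ 𝓕₀ ↔ J.Nonempty ∧ (⋂ i ∈ J, F i).Nonempty)
    (He Fe : ℝ → Fin m → Set (Fin n → ℝ))
    (Ke : ℝ → Set (Fin n → ℝ))
    (hHe : ∀ ε i, He ε i = {x | ∑ j, a i j * x j ≤ b i + ε ^ ((i : ℕ) + 1)})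
    (hKe : ∀ ε, Ke ε = ⋂ i, He ε i)
    (hFe : ∀ ε i, Fe ε i = {x | ∑ j, a i j * x j = b i + ε ^ ((i : ℕ) + 1)} ∩ Ke ε)
    (𝓕 : ℝ → Set (Finset (Fin m)))
    (h𝓕 : ∀ ε (J : Finset (Fin m)),
      J ∈ 𝓕 ε ↔ J.Nonempty ∧ (⋂ i ∈ J, Fe ε i).Nonempty) :
    ∃ δ > (0 : ℝ), ∀ ε : ℝ, 0 < ε → ε < δ →
      𝓕 ε ⊆ 𝓕₀ ∧ (𝓕 ε).ncard ≤ 𝓕₀.ncard := by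
  classical
  have key : ∀ J : Finset (Fin m),
      (∀ δ : ℝ, 0 < δ → ∃ ε : ℝ, 0 < ε ∧ ε < δ ∧ J ∈ 𝓕 ε) → J ∈ 𝓕₀ := by
    intro J hJ
    obtain ⟨ε₁, hε₁0, _, hJε₁⟩ := hJ 1 one_pos
    have hJne : J.Nonempty := ((h𝓕 ε₁ J).mp hJε₁).1
    obtain ⟨i₂, hi₂⟩ := hJne
    -- the cone of feasible right-hand sides
    set g : ((Fin n ⊕ Fin n) ⊕ Fin m) → (Fin m → ℝ) :=
      Sum.elim (Sum.elim (fun j => fun i => a i j) (fun j => fun i => -(a i j)))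
        (fun i₀ => if i₀ ∈ J then 0 else Pi.single i₀ 1) with hg
    set C : Set (Fin m → ℝ) := {y | ∃ x : Fin n → ℝ, ∃ z : Fin m → ℝ,
      (∀ i, 0 ≤ z i) ∧ (∀ i ∈ J, z i = 0) ∧
      ∀ i, y i = (∑ j, a i j * x j) + z i} with hC
    have hCcone : C = {y : Fin m → ℝ | ∃ l : ((Fin n ⊕ Fin n) ⊕ Fin m) → ℝ,
        (∀ p, 0 ≤ l p) ∧ ∑ p, l p • g p = y} := by
      ext y
      simp only [hC, Set.mem_setOf_eq]
      constructor
      · rintro ⟨x, z, hz0, hzJ, hy⟩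
        refine ⟨Sum.elim (Sum.elim (fun j => max (x j) 0) (fun j => max (-(x j)) 0))
          (fun i₀ => z i₀), ?_, ?_⟩
        · rintro ((j | j) | i₀) <;> simp [le_max_right, hz0]
        · funext i
          rw [Finset.sum_apply]
          rw [Fintype.sum_sum_type]
          have h1 : ∑ q : Fin n ⊕ Fin n,
              ((Sum.elim (Sum.elim (fun j => max (x j) 0) (fun j => max (-(x j)) 0))
                (fun i₀ => z i₀)) (Sum.inl q) • g (Sum.inl q)) i
              = ∑ j, a i j * x j := by
            rw [Fintype.sum_sum_type]
            rw [← Finset.sum_add_distrib]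
            refine Finset.sum_congr rfl fun j _ => ?_
            simp only [hg, Sum.elim_inl, Sum.elim_inr, Pi.smul_apply, smul_eq_mul]
            have hmax := max_zero_sub_max_neg_zero_eq_self (x j)
            linear_combination (a i j) * hmax
          have h2 : ∑ i₀ : Fin m,
              ((Sum.elim (Sum.elim (fun j => max (x j) 0) (fun j => max (-(x j)) 0))
                (fun i₀ => z i₀)) (Sum.inr i₀) • g (Sum.inr i₀)) i = z i := by
            rw [Finset.sum_eq_single i]
            · by_cases hiJ : i ∈ J
              · simp [hg, hiJ, hzJ i hiJ]
              · simp [hg, hiJ]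
            · intro i₀ _ hne
              by_cases hiJ : i₀ ∈ J
              · simp [hg, hiJ]
              · simp [hg, hiJ, Pi.single_apply, hne]
            · intro h; exact absurd (Finset.mem_univ i) h
          rw [h1, h2, hy i]
      · rintro ⟨l, hl0, hsum⟩
        refine ⟨fun j => l (Sum.inl (Sum.inl j)) - l (Sum.inl (Sum.inr j)),
          fun i => if i ∈ J then 0 else l (Sum.inr i), ?_, ?_, ?_⟩
        · intro i
          by_cases hiJ : i ∈ J <;> simp [hiJ, hl0]
        · intro i hiJ; simp [hiJ]
        · intro i
          rw [← hsum]
          rw [Finset.sum_apply]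
          rw [Fintype.sum_sum_type]
          have h1 : ∑ q : Fin n ⊕ Fin n, (l (Sum.inl q) • g (Sum.inl q)) i
              = ∑ j, a i j * (l (Sum.inl (Sum.inl j)) - l (Sum.inl (Sum.inr j))) := by
            rw [Fintype.sum_sum_type]
            rw [← Finset.sum_add_distrib]
            refine Finset.sum_congr rfl fun j _ => ?_
            simp only [hg, Sum.elim_inl, Sum.elim_inr, Pi.smul_apply, smul_eq_mul]
            ring
          have h2 : ∑ i₀ : Fin m, (l (Sum.inr i₀) • g (Sum.inr i₀)) i
              = (if i ∈ J then 0 else l (Sum.inr i)) := by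
            rw [Finset.sum_eq_single i]
            · by_cases hiJ : i ∈ J
              · simp [hg, hiJ]
              · simp [hg, hiJ]
            · intro i₀ _ hne
              by_cases hiJ : i₀ ∈ J
              · simp [hg, hiJ]
              · simp [hg, hiJ, Pi.single_apply, hne]
            · intro h; exact absurd (Finset.mem_univ i) h
          rw [h1, h2]
    have hCclosed : IsClosed C := by
      rw [hCcone]
      exact cone_isClosed g
    have hbC : b ∈ C := by
      have hb : b ∈ closure C := by
        rw [Metric.mem_closure_iff]
        intro η hη
        obtain ⟨ε, hε0, hεlt, hJε⟩ := hJ (min η 1) (lt_min hη one_pos)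
        have hε1 : ε < 1 := lt_of_lt_of_le hεlt (min_le_right _ _)
        have hεη : ε < η := lt_of_lt_of_le hεlt (min_le_left _ _)
        obtain ⟨x, hx⟩ := ((h𝓕 ε J).mp hJε).2
        have hxF : ∀ i ∈ J, x ∈ Fe ε i := fun i hi => Set.mem_iInter₂.mp hx i hi
        have hxK : x ∈ Ke ε := by
          have h := hxF i₂ hi₂
          rw [hFe] at h
          exact h.2
        have hxle : ∀ i, ∑ j, a i j * x j ≤ b i + ε ^ ((i : ℕ) + 1) := by
          intro i
          have h1 := Set.mem_iInter.mp ((hKe ε) ▸ hxK) i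
          rw [hHe] at h1
          exact h1
        have hxeq : ∀ i ∈ J, ∑ j, a i j * x j = b i + ε ^ ((i : ℕ) + 1) := by
          intro i hi
          have h := hxF i hi
          rw [hFe] at h
          exact h.1
        refine ⟨fun i => b i + ε ^ ((i : ℕ) + 1), ?_, ?_⟩
        · simp only [hC, Set.mem_setOf_eq]
          exact ⟨x, fun i => (b i + ε ^ ((i : ℕ) + 1)) - ∑ j, a i j * x j,
            fun i => by dsimp only; linarith [hxle i],
            fun i hi => by dsimp only; rw [hxeq i hi]; ring,
            fun i => by dsimp only; ring⟩
        · rw [dist_pi_lt_iff hη]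
          intro i
          rw [Real.dist_eq]
          have hp1 : ε ^ ((i : ℕ) + 1) ≤ ε :=
            pow_le_of_le_one hε0.le hε1.le (Nat.succ_ne_zero _)
          have hp0 : 0 < ε ^ ((i : ℕ) + 1) := pow_pos hε0 _
          rw [show b i - (b i + ε ^ ((i : ℕ) + 1)) = -(ε ^ ((i : ℕ) + 1)) by ring,
            abs_neg, abs_of_pos hp0]
          linarith
      rwa [hCclosed.closure_eq] at hb
    simp only [hC, Set.mem_setOf_eq] at hbC
    obtain ⟨x, z, hz0, hzJ, hbz⟩ := hbC
    have hxK : x ∈ K := by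
      rw [hK]
      refine Set.mem_iInter.mpr fun i' => ?_
      rw [hH]
      have h1 := hbz i'
      have h2 := hz0 i'
      simp only [Set.mem_setOf_eq]
      linarith
    refine (h𝓕₀ J).mpr ⟨⟨i₂, hi₂⟩, ⟨x, Set.mem_iInter₂.mpr fun i hi => ?_⟩⟩
    rw [hF]
    refine ⟨?_, hxK⟩
    have h1 := hbz i
    have h2 := hzJ i hi
    simp only [Set.mem_setOf_eq]
    linarith
  have choice : ∀ J : Finset (Fin m), ∃ δJ : ℝ, 0 < δJ ∧
      ∀ ε : ℝ, 0 < ε → ε < δJ → J ∈ 𝓕 ε → J ∈ 𝓕₀ := by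
    intro J
    by_cases hJ : J ∈ 𝓕₀
    · exact ⟨1, one_pos, fun _ _ _ _ => hJ⟩
    · have h : ¬ (∀ δ : ℝ, 0 < δ → ∃ ε : ℝ, 0 < ε ∧ ε < δ ∧ J ∈ 𝓕 ε) :=
        fun h => hJ (key J h)
      push_neg at h
      obtain ⟨δJ, hδJ0, hδJ⟩ := h
      exact ⟨δJ, hδJ0, fun ε hε0 hεδ hmem => absurd hmem (hδJ ε hε0 hεδ)⟩
  choose δf hδf using choice
  set δ : ℝ := (Finset.univ : Finset (Finset (Fin m))).inf' Finset.univ_nonempty δf with hδ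
  refine ⟨δ, ?_, ?_⟩
  · rw [hδ, gt_iff_lt, Finset.lt_inf'_iff]
    intro J _
    exact (hδf J).1
  · intro ε hε0 hεδ
    have hsub : 𝓕 ε ⊆ 𝓕₀ := fun J hJ =>
      (hδf J).2 ε hε0 (lt_of_lt_of_le hεδ (Finset.inf'_le _ (Finset.mem_univ J))) hJ
    exact ⟨hsub, Set.ncard_le_ncard hsub (Set.toFinite _)⟩
end

section
/- There exists δ > 0 such that for every ε ∈ (0, δ) and for every x ∈ ℝⁿ (with no exceptional null set), 1_{∪_{i=1}^m Hᵢᶜ}(x) = Σ_{J∈𝓕(ε)} (−1)^{|J|−1} · 1_{∩_{i∈J} Hᵢᶜ}(x), where the Hᵢᶜ are the UNPERTURBED complements. (The pair (𝓗, 𝓕(0+)) is an abstract tube, not merely a weak abstract tube.) -/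
open Finset

open scoped Classical in
private lemma sum_powerset_union_aux {α : Type*} [DecidableEq α] :
    ∀ (M T : Finset α) (f : Finset α → ℝ), Disjoint M T →
      ∑ J ∈ (M ∪ T).powerset, f J = ∑ A ∈ M.powerset, ∑ B ∈ T.powerset, f (A ∪ B) := by
  intro M
  induction M using Finset.induction with
  | empty => intro T f _; simp
  | @insert a M ha IH =>
    intro T f hMT
    have haT : a ∉ T := fun h => (Finset.disjoint_left.1 hMT (mem_insert_self a M)) h
    have haMT : a ∉ M ∪ T := by simp [ha, haT]
    have hMT' : Disjoint M T := hMT.mono_left (subset_insert a M)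
    rw [show insert a M ∪ T = insert a (M ∪ T) by rw [Finset.insert_union]]
    rw [Finset.sum_powerset_insert haMT, IH T f hMT',
      IH T (fun J => f (insert a J)) hMT', Finset.sum_powerset_insert ha]
    congr 1
    refine Finset.sum_congr rfl fun A hA => Finset.sum_congr rfl fun B hB => ?_
    rw [Finset.insert_union]

private lemma sum_powerset_neg_one_real {α : Type*} [DecidableEq α] {M : Finset α}
    (h : M.Nonempty) : ∑ A ∈ M.powerset, (-1 : ℝ) ^ A.card = 0 := by
  have := Finset.sum_powerset_neg_one_pow_card_of_nonempty (x := M) h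
  have h2 : ((∑ A ∈ M.powerset, (-1 : ℤ) ^ A.card : ℤ) : ℝ) = 0 := by rw [this]; simp
  rw [← h2]
  push_cast
  rfl

open scoped Classical in
/-- The key geometric lemma: for a linear inequality system `⟪a i, ·⟫ ≤ c i`
with a feasible point `y` tight on `L`, and a point `z` tight on `L`, strictly
violating exactly the constraints in `S` and (weakly) satisfying all others,
the alternating sum over `J ⊆ S` of the indicator of nonemptiness of the face
`F (L ∪ J)` vanishes.  Proved by induction on `S`, moving along the segment
from `z` to `y` to its first constraint-crossing point. -/
private lemma tube_key {n m : ℕ} (a : Fin m → Fin n → ℝ) (c : Fin m → ℝ) :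
    ∀ (S L : Finset (Fin m)) (z y : Fin n → ℝ),
      Disjoint L S →
      (∀ i ∈ L, ∑ j, a i j * z j = c i) →
      (∀ i ∈ S, c i < ∑ j, a i j * z j) →
      (∀ i, i ∉ L → i ∉ S → ∑ j, a i j * z j ≤ c i) →
      (∀ i, ∑ j, a i j * y j ≤ c i) →
      (∀ i ∈ L, ∑ j, a i j * y j = c i) →
      S.Nonempty →
      ∑ J ∈ S.powerset,
        (if ∃ w : Fin n → ℝ, (∀ i, ∑ j, a i j * w j ≤ c i) ∧
            (∀ i ∈ L ∪ J, ∑ j, a i j * w j = c i)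
         then (-1 : ℝ) ^ J.card else 0) = 0 := by
  intro S
  induction S using Finset.strongInduction with
  | _ S IH =>
  intro L z y hLS hzL hzS hzO hy hyL hSne
  -- crossing times
  set g : Fin m → ℝ := fun i => (∑ j, a i j * z j) - c i with hg
  set h : Fin m → ℝ := fun i => (∑ j, a i j * y j) - c i with hh
  set t : Fin m → ℝ := fun i => g i / (g i - h i) with ht
  have hgpos : ∀ i ∈ S, 0 < g i := fun i hi => by simp [hg, sub_pos, hzS i hi]
  have hhle : ∀ i, h i ≤ 0 := fun i => by simp [hh, sub_nonpos, hy i]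
  have hghpos : ∀ i ∈ S, 0 < g i - h i := fun i hi =>
    lt_of_lt_of_le (hgpos i hi) (by linarith [hhle i])
  have htpos : ∀ i ∈ S, 0 < t i := fun i hi => div_pos (hgpos i hi) (hghpos i hi)
  have htle1 : ∀ i ∈ S, t i ≤ 1 := fun i hi => by
    rw [ht]; rw [div_le_one (hghpos i hi)]; linarith [hhle i]
  set τ : ℝ := S.inf' hSne t with hτdef
  obtain ⟨i₀, hi₀S, hτeq⟩ := Finset.exists_mem_eq_inf' hSne t
  have hτpos : 0 < τ := by rw [hτdef, hτeq]; exact htpos i₀ hi₀S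
  have hτle1 : τ ≤ 1 := by rw [hτdef, hτeq]; exact htle1 i₀ hi₀S
  have hτle : ∀ i ∈ S, τ ≤ t i := fun i hi => Finset.inf'_le t hi
  -- the crossing point
  set w : Fin n → ℝ := fun j => z j + τ * (y j - z j) with hw
  have hdotw : ∀ i, (∑ j, a i j * w j)
      = (∑ j, a i j * z j) + τ * ((∑ j, a i j * y j) - (∑ j, a i j * z j)) := by
    intro i
    have h1 : ∀ j ∈ Finset.univ, a i j * w j
        = a i j * z j + τ * (a i j * y j) - τ * (a i j * z j) := by
      intro j _; rw [hw]; ring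
    rw [Finset.sum_congr rfl h1, Finset.sum_sub_distrib, Finset.sum_add_distrib,
      ← Finset.mul_sum, ← Finset.mul_sum]
    ring
  have hdotw' : ∀ i, (∑ j, a i j * w j) = c i + (g i - τ * (g i - h i)) := by
    intro i; rw [hdotw, hg, hh]; ring
  have hwL : ∀ i ∈ L, (∑ j, a i j * w j) = c i := by
    intro i hi
    rw [hdotw, hzL i hi, hyL i hi]; ring
  have hwM : ∀ i ∈ S, t i ≤ τ → (∑ j, a i j * w j) = c i := by
    intro i hi hti
    have : t i = τ := le_antisymm hti (hτle i hi)
    rw [hdotw' i, ← this, ht]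
    rw [div_mul_cancel₀ _ (ne_of_gt (hghpos i hi))]
    ring
  have hwS' : ∀ i ∈ S, τ < t i → c i < (∑ j, a i j * w j) := by
    intro i hi hti
    rw [hdotw' i]
    have h1 : τ * (g i - h i) < t i * (g i - h i) :=
      mul_lt_mul_of_pos_right hti (hghpos i hi)
    have h2 : t i * (g i - h i) = g i := div_mul_cancel₀ _ (ne_of_gt (hghpos i hi))
    linarith
  have hwO : ∀ i, i ∉ L → i ∉ S → (∑ j, a i j * w j) ≤ c i := by
    intro i hiL hiS
    rw [hdotw' i]
    have h1 : g i ≤ 0 := by simp [hg, sub_nonpos, hzO i hiL hiS]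
    nlinarith [hhle i, hτpos, hτle1]
  -- split S into the first-crossing set M and the rest S'
  set M : Finset (Fin m) := S.filter (fun i => t i ≤ τ) with hM
  set S' : Finset (Fin m) := S.filter (fun i => ¬ t i ≤ τ) with hS'
  have hMS' : M ∪ S' = S := Finset.filter_union_filter_not_eq _ S
  have hMdisj : Disjoint M S' := Finset.disjoint_filter_filter_not S S _
  have hi₀M : i₀ ∈ M := by rw [hM, Finset.mem_filter]; exact ⟨hi₀S, le_of_eq hτeq.symm⟩
  by_cases hS'ne : S'.Nonempty
  · -- recursive case
    have hS'sub : S' ⊂ S := by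
      refine Finset.ssubset_iff_of_subset (Finset.filter_subset _ _) |>.2 ?_
      refine ⟨i₀, hi₀S, ?_⟩
      simp only [Finset.mem_filter, not_and, not_not]
      exact fun _ => le_of_eq hτeq.symm
    rw [← hMS']
    rw [sum_powerset_union_aux M S' _ hMdisj]
    refine Finset.sum_eq_zero fun A hA => ?_
    rw [Finset.mem_powerset] at hA
    have hAS : ∀ i ∈ A, i ∈ S := fun i hi => (Finset.filter_subset _ _) (hA hi)
    -- rewrite terms
    have hterm : ∀ B ∈ S'.powerset,
        (if ∃ w' : Fin n → ℝ, (∀ i, ∑ j, a i j * w' j ≤ c i) ∧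
            (∀ i ∈ L ∪ (A ∪ B), ∑ j, a i j * w' j = c i)
         then (-1 : ℝ) ^ (A ∪ B).card else 0)
        = (-1 : ℝ) ^ A.card *
          (if ∃ w' : Fin n → ℝ, (∀ i, ∑ j, a i j * w' j ≤ c i) ∧
            (∀ i ∈ (L ∪ A) ∪ B, ∑ j, a i j * w' j = c i)
           then (-1 : ℝ) ^ B.card else 0) := by
      intro B hB
      rw [Finset.mem_powerset] at hB
      have hABdisj : Disjoint A B := hMdisj.mono hA hB
      have hcard : (A ∪ B).card = A.card + B.card := Finset.card_union_of_disjoint hABdisj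
      rw [Finset.union_assoc, hcard, pow_add]
      split_ifs <;> ring
    rw [Finset.sum_congr rfl hterm]
    by_cases hFA : ∃ y' : Fin n → ℝ, (∀ i, ∑ j, a i j * y' j ≤ c i) ∧
        (∀ i ∈ L ∪ A, ∑ j, a i j * y' j = c i)
    · obtain ⟨y', hy', hy'L⟩ := hFA
      have hIH := IH S' hS'sub (L ∪ A) w y' ?_ ?_ ?_ ?_ hy' hy'L hS'ne
      · rw [← Finset.mul_sum, hIH, mul_zero]
      · -- Disjoint (L ∪ A) S'
        rw [Finset.disjoint_union_left]
        exact ⟨hLS.mono_right (Finset.filter_subset _ _), hMdisj.mono_left hA⟩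
      · -- equalities at w on L ∪ A
        intro i hi
        rcases Finset.mem_union.1 hi with hi | hi
        · exact hwL i hi
        · have := hA hi; rw [hM, Finset.mem_filter] at this
          exact hwM i this.1 this.2
      · -- strict violation on S'
        intro i hi
        rw [hS', Finset.mem_filter] at hi
        exact hwS' i hi.1 (not_le.1 hi.2)
      · -- others ≤ at w
        intro i hiLA hiS'
        by_cases hiS : i ∈ S
        · have hiM : i ∈ M := by
            rw [← hMS'] at hiS
            rcases Finset.mem_union.1 hiS with h' | h'
            · exact h'
            · exact absurd h' hiS'
          rw [hM, Finset.mem_filter] at hiM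
          exact le_of_eq (hwM i hiM.1 hiM.2)
        · have hiL : i ∉ L := fun h' => hiLA (Finset.mem_union_left _ h')
          exact hwO i hiL hiS
    · -- F(L ∪ A) empty: all terms vanish
      have : ∀ B ∈ S'.powerset,
          (if ∃ w' : Fin n → ℝ, (∀ i, ∑ j, a i j * w' j ≤ c i) ∧
              (∀ i ∈ (L ∪ A) ∪ B, ∑ j, a i j * w' j = c i)
           then (-1 : ℝ) ^ B.card else 0) = 0 := by
        intro B _
        rw [if_neg]
        rintro ⟨w', hw1, hw2⟩
        exact hFA ⟨w', hw1, fun i hi => hw2 i (Finset.mem_union_left _ hi)⟩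
      rw [← Finset.mul_sum, Finset.sum_congr rfl this, Finset.sum_const_zero, mul_zero]
  · -- base case : all crossing times equal, M = S
    have hMeqS : M = S := by
      rw [← hMS']
      have : S' = ∅ := Finset.not_nonempty_iff_eq_empty.1 hS'ne
      rw [this, Finset.union_empty]
    have hall : ∀ J ∈ S.powerset,
        (if ∃ w' : Fin n → ℝ, (∀ i, ∑ j, a i j * w' j ≤ c i) ∧
            (∀ i ∈ L ∪ J, ∑ j, a i j * w' j = c i)
         then (-1 : ℝ) ^ J.card else 0) = (-1 : ℝ) ^ J.card := by
      intro J hJ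
      rw [Finset.mem_powerset] at hJ
      rw [if_pos]
      refine ⟨w, ?_, ?_⟩
      · intro i
        by_cases hiL : i ∈ L
        · exact le_of_eq (hwL i hiL)
        · by_cases hiS : i ∈ S
          · have : i ∈ M := hMeqS.symm ▸ hiS
            rw [hM, Finset.mem_filter] at this
            exact le_of_eq (hwM i this.1 this.2)
          · exact hwO i hiL hiS
      · intro i hi
        rcases Finset.mem_union.1 hi with hi | hi
        · exact hwL i hi
        · have hiS : i ∈ S := hJ hi
          have : i ∈ M := hMeqS.symm ▸ hiS
          rw [hM, Finset.mem_filter] at this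
          exact hwM i this.1 this.2
    rw [Finset.sum_congr rfl hall]
    exact sum_powerset_neg_one_real hSne

/-- The pair (𝓗, 𝓕(0+)) is an abstract tube (not merely a weak abstract tube):
for all sufficiently small ε > 0 and for EVERY x ∈ ℝⁿ, the inclusion-exclusion
identity for the indicator of ∪ᵢ Hᵢᶜ holds over the perturbed face complex 𝓕(ε),
where the half-space complements Hᵢᶜ are the unperturbed ones. -/
theorem perturbed_abstract_tube_indicator_identity
    (n m : ℕ) (hn : 1 ≤ n) (hm : 1 ≤ m)
    (a : Fin m → Fin n → ℝ) (b : Fin m → ℝ)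
    (ha : ∀ i, a i ≠ 0)
    (H Hc : Fin m → Set (Fin n → ℝ))
    (K : Set (Fin n → ℝ))
    (hH : ∀ i, H i = {x | ∑ j, a i j * x j ≤ b i})
    (hHc : ∀ i, Hc i = {x | b i < ∑ j, a i j * x j})
    (hK : K = ⋂ i, H i) (hKne : K.Nonempty)
    (He Fe : ℝ → Fin m → Set (Fin n → ℝ))
    (Ke : ℝ → Set (Fin n → ℝ))
    (hHe : ∀ ε i, He ε i = {x | ∑ j, a i j * x j ≤ b i + ε ^ ((i : ℕ) + 1)})
    (hKe : ∀ ε, Ke ε = ⋂ i, He ε i)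
    (hFe : ∀ ε i, Fe ε i = {x | ∑ j, a i j * x j = b i + ε ^ ((i : ℕ) + 1)} ∩ Ke ε)
    (𝓕 : ℝ → Finset (Finset (Fin m)))
    (h𝓕 : ∀ ε (J : Finset (Fin m)),
      J ∈ 𝓕 ε ↔ J.Nonempty ∧ (⋂ i ∈ J, Fe ε i).Nonempty) :
    ∃ δ > (0 : ℝ), ∀ ε : ℝ, 0 < ε → ε < δ →
      ∀ x : Fin n → ℝ,
        Set.indicator (⋃ i, Hc i) (fun _ => (1 : ℝ)) x
          = ∑ J ∈ 𝓕 ε, (-1 : ℝ) ^ (J.card - 1) *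
              Set.indicator (⋂ i ∈ J, Hc i) (fun _ => (1 : ℝ)) x := by
  classical
  obtain ⟨y₀, hy₀⟩ := hKne
  have hy₀K : ∀ i, (∑ j, a i j * y₀ j) ≤ b i := by
    intro i
    rw [hK] at hy₀
    have := Set.mem_iInter.1 hy₀ i
    rw [hH i] at this
    exact this
  -- the margin function over realizable sign sets
  set prop : Finset (Fin m) → Prop :=
    fun S => ∃ x : Fin n → ℝ, ∀ i, (i ∈ S ↔ b i < ∑ j, a i j * x j) with hpropdef
  set γ : Finset (Fin m) → ℝ := fun S =>
    if h : prop S ∧ S.Nonempty then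
      S.inf' h.2 (fun i => (∑ j, a i j * h.1.choose j) - b i)
    else 1 with hγdef
  have hγpos : ∀ S, 0 < γ S := by
    intro S
    rw [hγdef]
    dsimp only
    split_ifs with h
    · rw [Finset.lt_inf'_iff]
      intro i hi
      have hspec := h.1.choose_spec i
      linarith [hspec.1 hi]
    · exact one_pos
  have huniv : (Finset.univ : Finset (Finset (Fin m))).Nonempty := ⟨∅, Finset.mem_univ _⟩
  refine ⟨min 1 (Finset.univ.inf' huniv γ),
    lt_min one_pos ((Finset.lt_inf'_iff huniv).2 fun S _ => hγpos S), ?_⟩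
  intro ε hε0 hεδ x
  have hε1 : ε ≤ 1 := le_of_lt (lt_of_lt_of_le hεδ (min_le_left _ _))
  have hεS : ∀ S, ε < γ S := fun S =>
    lt_of_le_of_lt' (Finset.inf'_le _ (Finset.mem_univ S))
      (lt_of_lt_of_le hεδ (min_le_right _ _))
  set c : Fin m → ℝ := fun i => b i + ε ^ ((i : ℕ) + 1) with hcdef
  have hbc : ∀ i, b i < c i := fun i => lt_add_of_pos_right _ (pow_pos hε0 _)
  have hpowle : ∀ i : Fin m, ε ^ ((i : ℕ) + 1) ≤ ε := by
    intro i
    calc ε ^ ((i : ℕ) + 1) = ε * ε ^ (i : ℕ) := by rw [pow_succ']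
    _ ≤ ε * 1 := mul_le_mul_of_nonneg_left (pow_le_one₀ hε0.le hε1) hε0.le
    _ = ε := mul_one ε
  set Sx : Finset (Fin m) := Finset.univ.filter (fun i => b i < ∑ j, a i j * x j)
    with hSxdef
  have hmemSx : ∀ i, i ∈ Sx ↔ b i < ∑ j, a i j * x j := by
    intro i; rw [hSxdef, Finset.mem_filter]; simp
  have hy₀c : ∀ i, (∑ j, a i j * y₀ j) ≤ c i := fun i => (hy₀K i).trans (hbc i).le
  -- the bridge between Fe-intersections and the linear system formulation
  have hbridge : ∀ J : Finset (Fin m), J.Nonempty →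
      ((⋂ i ∈ J, Fe ε i).Nonempty ↔
        ∃ w : Fin n → ℝ, (∀ i, ∑ j, a i j * w j ≤ c i) ∧
          (∀ i ∈ J, ∑ j, a i j * w j = c i)) := by
    intro J hJne
    constructor
    · rintro ⟨w, hw⟩
      have hw' : ∀ i ∈ J, w ∈ Fe ε i := fun i hi => Set.mem_iInter₂.1 hw i hi
      obtain ⟨i₁, hi₁⟩ := hJne
      have h1 := hw' i₁ hi₁
      rw [hFe ε i₁] at h1
      have hKw : w ∈ Ke ε := h1.2
      rw [hKe ε] at hKw
      refine ⟨w, ?_, ?_⟩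
      · intro i
        have := Set.mem_iInter.1 hKw i
        rw [hHe ε i] at this
        exact this
      · intro i hi
        have := hw' i hi
        rw [hFe ε i] at this
        exact this.1
    · rintro ⟨w, hw1, hw2⟩
      refine ⟨w, Set.mem_iInter₂.2 fun i hi => ?_⟩
      rw [hFe ε i]
      refine ⟨hw2 i hi, ?_⟩
      rw [hKe ε]
      exact Set.mem_iInter.2 fun i' => by rw [hHe ε i']; exact hw1 i'
  by_cases hSx : Sx.Nonempty
  · -- x is in the union
    obtain ⟨i₂, hi₂⟩ := hSx
    have hxU : x ∈ ⋃ i, Hc i := by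
      refine Set.mem_iUnion.2 ⟨i₂, ?_⟩
      rw [hHc i₂]
      exact (hmemSx i₂).1 hi₂
    rw [Set.indicator_of_mem hxU]
    -- get the witness point with uniform margins
    have hcond : prop Sx ∧ Sx.Nonempty := ⟨⟨x, fun i => hmemSx i⟩, ⟨i₂, hi₂⟩⟩
    have hγSx : γ Sx = Sx.inf' hcond.2
        (fun i => (∑ j, a i j * hcond.1.choose j) - b i) := by
      rw [hγdef]; dsimp only; rw [dif_pos hcond]
    set x' : Fin n → ℝ := hcond.1.choose with hx'def
    have hx'spec : ∀ i, (i ∈ Sx ↔ b i < ∑ j, a i j * x' j) := hcond.1.choose_spec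
    have hzS : ∀ i ∈ Sx, c i < ∑ j, a i j * x' j := by
      intro i hi
      have h1 : γ Sx ≤ (∑ j, a i j * x' j) - b i := by
        rw [hγSx]; exact Finset.inf'_le _ hi
      have h2 : ε < γ Sx := hεS Sx
      have h3 : ε ^ ((i : ℕ) + 1) ≤ ε := hpowle i
      show b i + ε ^ ((i : ℕ) + 1) < ∑ j, a i j * x' j
      linarith
    have hzO : ∀ i, i ∉ (∅ : Finset (Fin m)) → i ∉ Sx → (∑ j, a i j * x' j) ≤ c i := by
      intro i _ hi
      have h1 : ¬ b i < ∑ j, a i j * x' j := fun hl => hi ((hx'spec i).2 hl)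
      exact (not_lt.1 h1).trans (hbc i).le
    have hkey := tube_key a c Sx ∅ x' y₀ (by simp) (by simp) hzS hzO hy₀c (by simp)
      ⟨i₂, hi₂⟩
    simp only [Finset.empty_union] at hkey
    -- abbreviate the two summands
    set u : Finset (Fin m) → ℝ := fun J =>
      if ∃ w : Fin n → ℝ, (∀ i, ∑ j, a i j * w j ≤ c i) ∧
          (∀ i ∈ J, ∑ j, a i j * w j = c i)
      then (-1 : ℝ) ^ J.card else 0 with hudef
    set φ : Finset (Fin m) → ℝ := fun J =>
      if J ⊆ Sx ∧ J.Nonempty ∧ ∃ w : Fin n → ℝ, (∀ i, ∑ j, a i j * w j ≤ c i) ∧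
          (∀ i ∈ J, ∑ j, a i j * w j = c i)
      then (-1 : ℝ) ^ (J.card - 1) else 0 with hφdef
    have hkey' : ∑ J ∈ Sx.powerset, u J = 0 := hkey
    -- RHS equals the sum of φ over everything
    have hR1 : ∑ J ∈ 𝓕 ε, (-1 : ℝ) ^ (J.card - 1) *
        Set.indicator (⋂ i ∈ J, Hc i) (fun _ => (1 : ℝ)) x
        = ∑ J ∈ (Finset.univ : Finset (Finset (Fin m))), φ J := by
      have hvan : ∀ J ∈ (Finset.univ : Finset (Finset (Fin m))), J ∉ 𝓕 ε → φ J = 0 := by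
        intro J _ hJ
        rw [hφdef]
        dsimp only
        rw [if_neg]
        rintro ⟨hJS, hJne, hC⟩
        exact hJ ((h𝓕 ε J).2 ⟨hJne, (hbridge J hJne).2 hC⟩)
      rw [← Finset.sum_subset (Finset.subset_univ (𝓕 ε)) hvan]
      refine Finset.sum_congr rfl fun J hJ => ?_
      obtain ⟨hJne, hJint⟩ := (h𝓕 ε J).1 hJ
      by_cases hJS : J ⊆ Sx
      · have hxmem : x ∈ ⋂ i ∈ J, Hc i := Set.mem_iInter₂.2 fun i hi => by
          rw [hHc i]; exact (hmemSx i).1 (hJS hi)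
        rw [Set.indicator_of_mem hxmem, hφdef]
        dsimp only
        rw [if_pos ⟨hJS, hJne, (hbridge J hJne).1 hJint⟩]
        ring
      · have hxnot : x ∉ ⋂ i ∈ J, Hc i := by
          intro hmem
          apply hJS
          intro i hi
          have := Set.mem_iInter₂.1 hmem i hi
          rw [hHc i] at this
          exact (hmemSx i).2 this
        rw [Set.indicator_of_notMem hxnot, hφdef]
        dsimp only
        rw [if_neg (fun hcon => hJS hcon.1)]
        ring
    -- the universal sum of φ equals 1
    have hR2 : ∑ J ∈ (Finset.univ : Finset (Finset (Fin m))), φ J = 1 := by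
      have hvan : ∀ J ∈ (Finset.univ : Finset (Finset (Fin m))), J ∉ Sx.powerset → φ J = 0 := by
        intro J _ hJ
        rw [hφdef]
        dsimp only
        rw [if_neg]
        rintro ⟨hJS, -, -⟩
        exact hJ (Finset.mem_powerset.2 hJS)
      rw [← Finset.sum_subset (Finset.subset_univ Sx.powerset) hvan]
      -- sum over the powerset
      have hmemE : (∅ : Finset (Fin m)) ∈ Sx.powerset :=
        Finset.mem_powerset.2 (Finset.empty_subset _)
      have huE : u ∅ = 1 := by
        rw [hudef]
        dsimp only
        rw [if_pos ⟨y₀, hy₀c, by simp⟩]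
        simp
      have hsplitu : u ∅ + ∑ J ∈ Sx.powerset.erase ∅, u J = ∑ J ∈ Sx.powerset, u J :=
        Finset.add_sum_erase _ u hmemE
      have herase : ∑ J ∈ Sx.powerset.erase ∅, u J = -1 := by
        rw [hkey', huE] at hsplitu
        linarith
      have hphiE : φ ∅ = 0 := by
        rw [hφdef]
        dsimp only
        rw [if_neg]
        rintro ⟨-, hne, -⟩
        exact absurd rfl (Finset.nonempty_iff_ne_empty.1 hne)
      have hφu : ∀ J ∈ Sx.powerset.erase ∅, φ J = - u J := by
        intro J hJ
        obtain ⟨hJne', hJpow⟩ := Finset.mem_erase.1 hJ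
        have hJS : J ⊆ Sx := Finset.mem_powerset.1 hJpow
        have hJne : J.Nonempty := Finset.nonempty_iff_ne_empty.2 hJne'
        rw [hφdef, hudef]
        dsimp only
        by_cases hC : ∃ w : Fin n → ℝ, (∀ i, ∑ j, a i j * w j ≤ c i) ∧
            (∀ i ∈ J, ∑ j, a i j * w j = c i)
        · rw [if_pos ⟨hJS, hJne, hC⟩, if_pos hC]
          have hpow : (-1 : ℝ) ^ J.card = (-1 : ℝ) ^ (J.card - 1) * (-1) := by
            rw [← pow_succ]
            congr 1
            have := Finset.card_pos.2 hJne
            omega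
          rw [hpow]
          ring
        · rw [if_neg (fun hcon => hC hcon.2.2), if_neg hC]
          ring
      rw [← Finset.add_sum_erase _ φ hmemE, hphiE, Finset.sum_congr rfl hφu,
        Finset.sum_neg_distrib, herase]
      norm_num
    rw [hR1, hR2]
  · -- x is not in the union : both sides vanish
    have hxU : x ∉ ⋃ i, Hc i := by
      intro hmem
      obtain ⟨i, hi⟩ := Set.mem_iUnion.1 hmem
      rw [hHc i] at hi
      exact hSx ⟨i, (hmemSx i).2 hi⟩
    rw [Set.indicator_of_notMem hxU]
    symm
    refine Finset.sum_eq_zero fun J hJ => ?_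
    obtain ⟨⟨i₁, hi₁⟩, -⟩ := (h𝓕 ε J).1 hJ
    have hxnot : x ∉ ⋂ i ∈ J, Hc i := by
      intro hmem
      have := Set.mem_iInter₂.1 hmem i₁ hi₁
      rw [hHc i₁] at this
      exact hSx ⟨i₁, (hmemSx i₁).2 this⟩
    rw [Set.indicator_of_notMem hxnot, mul_zero]
end

section
/- There exists δ > 0 such that for every ε ∈ (0, δ), under the standard Gaussian measure γₙ on ℝⁿ: 1 − γₙ(K) = Σ_{J∈𝓕(ε)} (−1)^{|J|−1} · γₙ(∩_{i∈J} Hᵢᶜ), where K and the Hᵢᶜ are unperturbed. -/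
open Finset

section Tube

variable {E : Type*} [AddCommGroup E] [Module ℝ E] {ι : Type*} [DecidableEq ι]

/-- Satisfaction of a finite system of linear inequalities. -/
def TSat (c : ι → E →ₗ[ℝ] ℝ) (d : ι → ℝ) (M : Finset ι) (y : E) : Prop :=
  ∀ i ∈ M, c i y ≤ d i

/-- Nonemptiness of the face determined by equality indices `J`. -/
def TFace (c : ι → E →ₗ[ℝ] ℝ) (d : ι → ℝ) (M : Finset ι) (J : Finset ι) : Prop :=
  ∃ y, TSat c d M y ∧ ∀ j ∈ J, c j y = d j

lemma seg_val (f : E →ₗ[ℝ] ℝ) (t : ℝ) (y z : E) :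
    f (y + t • (z - y)) = (1 - t) * f y + t * f z := by
  simp [map_add, map_smul, map_sub]; ring

lemma seg_le (f : E →ₗ[ℝ] ℝ) {t : ℝ} (h0 : 0 ≤ t) (h1 : t ≤ 1) {y z : E} {e : ℝ}
    (hy : f y ≤ e) (hz : f z ≤ e) : f (y + t • (z - y)) ≤ e := by
  rw [seg_val]; nlinarith

lemma seg_eq (f : E →ₗ[ℝ] ℝ) (t : ℝ) {y z : E} {e : ℝ}
    (hy : f y = e) (hz : f z = e) : f (y + t • (z - y)) = e := by
  rw [seg_val, hy, hz]; ring

lemma cross (f : E →ₗ[ℝ] ℝ) {y z : E} {e : ℝ} (hy : f y ≤ e) (hz : e ≤ f z) :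
    ∃ t : ℝ, 0 ≤ t ∧ t ≤ 1 ∧ f (y + t • (z - y)) = e := by
  rcases le_or_gt (f z) e with hze | hze
  · refine ⟨(1 : ℝ), zero_le_one, le_refl (1 : ℝ), ?_⟩
    rw [seg_val f 1 y z]; have h : f z = e := le_antisymm hze hz; rw [h]; ring
  · have hden : 0 < f z - f y := by linarith
    refine ⟨(e - f y) / (f z - f y), div_nonneg (by linarith) (le_of_lt hden), ?_, ?_⟩
    · rw [div_le_one hden]; linarith
    · rw [seg_val f _ y z]; field_simp; ring

open scoped Classical in
theorem tube : ∀ (N : ℕ) (c : ι → E →ₗ[ℝ] ℝ) (d : ι → ℝ) (M I : Finset ι) (x p : E),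
    TSat c d M p →
    (∀ i, i ∈ I ↔ i ∈ M ∧ d i < c i x) →
    I.card = N → I.Nonempty →
    ∑ J ∈ I.powerset,
      (if J.Nonempty ∧ TFace c d M J then (-1 : ℝ) ^ J.card else 0) = -1 := by
  intro N
  induction N with
  | zero =>
    intro c d M I x p hp hI hcard hne
    exact absurd (Finset.card_eq_zero.mp hcard) (Finset.nonempty_iff_ne_empty.mp hne)
  | succ N ih =>
    intro c d M I x p hp hI hcard hne
    classical
    obtain ⟨k, hk⟩ := hne
    have hkM : k ∈ M := ((hI k).mp hk).1
    have hkx : d k < c k x := ((hI k).mp hk).2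
    set M' : Finset ι := M.erase k with hM'
    set I' : Finset ι := I.erase k with hI'def
    have hknotI' : k ∉ I' := Finset.notMem_erase k I
    have hII : I = insert k I' := (Finset.insert_erase hk).symm
    set c'' : ι → E →ₗ[ℝ] ℝ := Function.update c k (-(c k)) with hc''
    set d'' : ι → ℝ := Function.update d k (-(d k)) with hd''
    -- abbreviations for the four face predicates
    set A : Finset ι → Prop := fun J => TFace c d M J with hA
    set B : Finset ι → Prop := fun J => TFace c d M' J with hB
    set U : Finset ι → Prop := fun J => TFace c d M' (insert k J) with hU
    set W : Finset ι → Prop := fun J => TFace c'' d'' M J with hW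
    -- L1 : A (insert k J) ↔ U J
    have L1 : ∀ J : Finset ι, (A (insert k J) ↔ U J) := by
      intro J
      constructor
      · rintro ⟨y, hy, he⟩
        exact ⟨y, fun i hi => hy i (Finset.mem_of_mem_erase hi), he⟩
      · rintro ⟨y, hy, he⟩
        refine ⟨y, fun i hi => ?_, he⟩
        by_cases hik : i = k
        · subst hik; exact le_of_eq (he i (Finset.mem_insert_self i J))
        · exact hy i (Finset.mem_erase.mpr ⟨hik, hi⟩)
    -- Sat facts
    have satM_to_M' : ∀ y : E, TSat c d M y → TSat c d M' y := by
      intro y hy i hi; exact hy i (Finset.mem_of_mem_erase hi)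
    have satW_to_M' : ∀ y : E, TSat c'' d'' M y → TSat c d M' y := by
      intro y hy i hi
      have hik : i ≠ k := (Finset.mem_erase.mp hi).1
      have := hy i (Finset.mem_of_mem_erase hi)
      rwa [hc'', hd'', Function.update_of_ne hik, Function.update_of_ne hik] at this
    have satW_k : ∀ y : E, TSat c'' d'' M y → d k ≤ c k y := by
      intro y hy
      have := hy k hkM
      rw [hc'', hd'', Function.update_self, Function.update_self] at this
      simpa using this
    -- L2 : U J → W J   (for k ∉ J)
    have L2 : ∀ J : Finset ι, k ∉ J → U J → W J := by
      rintro J hkJ ⟨y, hy, he⟩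
      have hky : c k y = d k := he k (Finset.mem_insert_self k J)
      refine ⟨y, fun i hi => ?_, fun j hj => ?_⟩
      · by_cases hik : i = k
        · subst hik
          rw [hc'', hd'', Function.update_self, Function.update_self]
          simp [hky]
        · rw [hc'', hd'', Function.update_of_ne hik, Function.update_of_ne hik]
          exact hy i (Finset.mem_erase.mpr ⟨hik, hi⟩)
      · have hjk : j ≠ k := fun h => hkJ (h ▸ hj)
        rw [hc'', hd'', Function.update_of_ne hjk, Function.update_of_ne hjk]
        exact he j (Finset.mem_insert_of_mem hj)
    -- L3 : A J → B J ∧ (U J ↔ W J)  (k ∉ J)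
    have L3 : ∀ J : Finset ι, k ∉ J → A J → B J ∧ (U J ↔ W J) := by
      rintro J hkJ ⟨yA, hyA, heA⟩
      refine ⟨⟨yA, satM_to_M' yA hyA, heA⟩, ⟨L2 J hkJ, ?_⟩⟩
      rintro ⟨yW, hyW, heW⟩
      have h1 : c k yA ≤ d k := hyA k hkM
      have h2 : d k ≤ c k yW := satW_k yW hyW
      obtain ⟨t, ht0, ht1, hteq⟩ := cross (c k) h1 h2
      refine ⟨yA + t • (yW - yA), fun i hi => ?_, fun j hj => ?_⟩
      · exact seg_le (c i) ht0 ht1 (satM_to_M' yA hyA i hi) (satW_to_M' yW hyW i hi)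
      · rcases Finset.mem_insert.mp hj with hj | hj
        · subst hj; exact hteq
        · have hjk : j ≠ k := fun h => hkJ (h ▸ hj)
          refine seg_eq (c j) t (heA j hj) ?_
          have := heW j hj
          rwa [hc'', hd'', Function.update_of_ne hjk, Function.update_of_ne hjk] at this
    -- L4 : ¬ A J → ¬ U J ∧ (B J ↔ W J)  (k ∉ J)
    have L4 : ∀ J : Finset ι, k ∉ J → ¬ A J → ¬ U J ∧ (B J ↔ W J) := by
      intro J hkJ hnA
      constructor
      · rintro ⟨y, hy, he⟩
        refine hnA ⟨y, fun i hi => ?_, fun j hj => he j (Finset.mem_insert_of_mem hj)⟩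
        by_cases hik : i = k
        · subst hik; exact le_of_eq (he i (Finset.mem_insert_self i J))
        · exact hy i (Finset.mem_erase.mpr ⟨hik, hi⟩)
      · constructor
        · rintro ⟨y, hy, he⟩
          have hky : ¬ (c k y ≤ d k) := by
            intro hle
            refine hnA ⟨y, fun i hi => ?_, he⟩
            by_cases hik : i = k
            · subst hik; exact hle
            · exact hy i (Finset.mem_erase.mpr ⟨hik, hi⟩)
          refine ⟨y, fun i hi => ?_, fun j hj => ?_⟩
          · by_cases hik : i = k
            · subst hik
              rw [hc'', hd'', Function.update_self, Function.update_self]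
              simp; linarith [lt_of_not_ge hky]
            · rw [hc'', hd'', Function.update_of_ne hik, Function.update_of_ne hik]
              exact hy i (Finset.mem_erase.mpr ⟨hik, hi⟩)
          · have hjk : j ≠ k := fun h => hkJ (h ▸ hj)
            rw [hc'', hd'', Function.update_of_ne hjk, Function.update_of_ne hjk]
            exact he j hj
        · rintro ⟨y, hy, he⟩
          refine ⟨y, satW_to_M' y hy, fun j hj => ?_⟩
          have hjk : j ≠ k := fun h => hkJ (h ▸ hj)
          have := he j hj
          rwa [hc'', hd'', Function.update_of_ne hjk, Function.update_of_ne hjk] at this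
    -- helper: peel off the empty set from a guarded sum
    have hpeel : ∀ P : Finset ι → Prop,
        ∑ J ∈ I'.powerset, (if P J then (-1 : ℝ) ^ J.card else 0)
          = (if P ∅ then (1 : ℝ) else 0)
            + ∑ J ∈ I'.powerset, (if J.Nonempty ∧ P J then (-1 : ℝ) ^ J.card else 0) := by
      intro P
      have hmem : (∅ : Finset ι) ∈ I'.powerset := Finset.empty_mem_powerset I'
      rw [← Finset.add_sum_erase _ _ hmem, ← Finset.add_sum_erase _ (fun J => if J.Nonempty ∧ P J then (-1 : ℝ) ^ J.card else 0) hmem]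
      have h1 : (if (∅ : Finset ι).Nonempty ∧ P ∅ then (-1 : ℝ) ^ (∅ : Finset ι).card else 0) = 0 := by
        simp [Finset.not_nonempty_empty]
      have h2 : (if P ∅ then (-1 : ℝ) ^ (∅ : Finset ι).card else 0) = (if P ∅ then (1 : ℝ) else 0) := by
        simp
      rw [h1, h2]
      have h3 : ∑ J ∈ I'.powerset.erase ∅, (if P J then (-1 : ℝ) ^ J.card else 0)
          = ∑ J ∈ I'.powerset.erase ∅, (if J.Nonempty ∧ P J then (-1 : ℝ) ^ J.card else 0) := by
        refine Finset.sum_congr rfl ?_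
        intro J hJ
        have hne : J.Nonempty := Finset.nonempty_iff_ne_empty.mpr (Finset.mem_erase.mp hJ).1
        simp [hne]
      rw [h3]; ring
    -- term rewriting inside the first sum
    have hterm1 : ∀ J ∈ I'.powerset,
        (if J.Nonempty ∧ A J then (-1 : ℝ) ^ J.card else 0)
          = (if J.Nonempty ∧ B J then (-1 : ℝ) ^ J.card else 0)
            + (if J.Nonempty ∧ U J then (-1 : ℝ) ^ J.card else 0)
            - (if J.Nonempty ∧ W J then (-1 : ℝ) ^ J.card else 0) := by
      intro J hJ
      have hkJ : k ∉ J := fun h => hknotI' (Finset.mem_powerset.mp hJ h)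
      by_cases hne : J.Nonempty
      · by_cases hA' : A J
        · obtain ⟨hB', hUW⟩ := L3 J hkJ hA'
          by_cases hU' : U J
          · rw [if_pos ⟨hne, hA'⟩, if_pos ⟨hne, hB'⟩, if_pos ⟨hne, hU'⟩,
              if_pos ⟨hne, hUW.mp hU'⟩]; ring
          · rw [if_pos ⟨hne, hA'⟩, if_pos ⟨hne, hB'⟩,
              if_neg (fun h => hU' h.2), if_neg (fun h => hU' (hUW.mpr h.2))]; ring
        · obtain ⟨hnU, hBW⟩ := L4 J hkJ hA'
          by_cases hB' : B J
          · rw [if_neg (fun h => hA' h.2), if_pos ⟨hne, hB'⟩,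
              if_neg (fun h => hnU h.2), if_pos ⟨hne, hBW.mp hB'⟩]; ring
          · rw [if_neg (fun h => hA' h.2), if_neg (fun h => hB' h.2),
              if_neg (fun h => hnU h.2), if_neg (fun h => hB' (hBW.mpr h.2))]; ring
      · rw [if_neg (fun h => hne h.1), if_neg (fun h => hne h.1),
          if_neg (fun h => hne h.1), if_neg (fun h => hne h.1)]; ring
    have hterm2 : ∀ J ∈ I'.powerset,
        (if (insert k J).Nonempty ∧ A (insert k J) then (-1 : ℝ) ^ (insert k J).card else 0)
          = -(if U J then (-1 : ℝ) ^ J.card else 0) := by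
      intro J hJ
      have hkJ : k ∉ J := fun h => hknotI' (Finset.mem_powerset.mp hJ h)
      rw [Finset.card_insert_of_notMem hkJ]
      by_cases hU' : U J
      · rw [if_pos ⟨Finset.insert_nonempty k J, (L1 J).mpr hU'⟩, if_pos hU', pow_succ]; ring
      · rw [if_neg (fun h => hU' ((L1 J).mp h.2)), if_neg hU']; ring
    -- the split of the main sum
    have hsplit : ∑ J ∈ I.powerset, (if J.Nonempty ∧ A J then (-1 : ℝ) ^ J.card else 0)
        = (∑ J ∈ I'.powerset, (if J.Nonempty ∧ B J then (-1 : ℝ) ^ J.card else 0))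
          - (∑ J ∈ I'.powerset, (if J.Nonempty ∧ W J then (-1 : ℝ) ^ J.card else 0))
          - (if U ∅ then (1 : ℝ) else 0) := by
      rw [hII, Finset.sum_powerset_insert hknotI']
      rw [Finset.sum_congr rfl hterm1, Finset.sum_congr rfl hterm2]
      rw [Finset.sum_neg_distrib, hpeel U]
      have : ∑ J ∈ I'.powerset,
          ((if J.Nonempty ∧ B J then (-1 : ℝ) ^ J.card else 0)
            + (if J.Nonempty ∧ U J then (-1 : ℝ) ^ J.card else 0)
            - (if J.Nonempty ∧ W J then (-1 : ℝ) ^ J.card else 0))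
          = (∑ J ∈ I'.powerset, (if J.Nonempty ∧ B J then (-1 : ℝ) ^ J.card else 0))
            + (∑ J ∈ I'.powerset, (if J.Nonempty ∧ U J then (-1 : ℝ) ^ J.card else 0))
            - (∑ J ∈ I'.powerset, (if J.Nonempty ∧ W J then (-1 : ℝ) ^ J.card else 0)) := by
        rw [Finset.sum_sub_distrib, Finset.sum_add_distrib]
      rw [this]; ring
    -- now evaluate the pieces
    show ∑ J ∈ I.powerset, (if J.Nonempty ∧ A J then (-1 : ℝ) ^ J.card else 0) = -1
    rw [hsplit]
    by_cases hI'ne : I'.Nonempty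
    · -- ΣB = -1 by IH on the system without k
      have hchar' : ∀ i, i ∈ I' ↔ i ∈ M' ∧ d i < c i x := by
        intro i
        constructor
        · intro hi
          obtain ⟨hik, hiI⟩ := Finset.mem_erase.mp hi
          obtain ⟨hiM, hlt⟩ := (hI i).mp hiI
          exact ⟨Finset.mem_erase.mpr ⟨hik, hiM⟩, hlt⟩
        · rintro ⟨hiM', hlt⟩
          obtain ⟨hik, hiM⟩ := Finset.mem_erase.mp hiM'
          exact Finset.mem_erase.mpr ⟨hik, (hI i).mpr ⟨hiM, hlt⟩⟩
      have hcard' : I'.card = N := by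
        rw [hI'def, Finset.card_erase_of_mem hk, hcard]; omega
      have hB_sum := ih c d M' I' x p (satM_to_M' p hp) hchar' hcard' hI'ne
      by_cases hfeas : ∃ q, TSat c'' d'' M q
      · obtain ⟨q, hq⟩ := hfeas
        have hchar'' : ∀ i, i ∈ I' ↔ i ∈ M ∧ d'' i < c'' i x := by
          intro i
          constructor
          · intro hi
            obtain ⟨hik, hiI⟩ := Finset.mem_erase.mp hi
            obtain ⟨hiM, hlt⟩ := (hI i).mp hiI
            rw [hc'', hd'', Function.update_of_ne hik, Function.update_of_ne hik]
            exact ⟨hiM, hlt⟩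
          · rintro ⟨hiM, hlt⟩
            by_cases hik : i = k
            · subst hik
              rw [hc'', hd'', Function.update_self, Function.update_self] at hlt
              simp only [LinearMap.neg_apply] at hlt
              exact absurd hkx (by linarith)
            · rw [hc'', hd'', Function.update_of_ne hik, Function.update_of_ne hik] at hlt
              exact Finset.mem_erase.mpr ⟨hik, (hI i).mpr ⟨hiM, hlt⟩⟩
        have hW_sum := ih c'' d'' M I' x q hq hchar'' hcard' hI'ne
        have hU0 : U ∅ := by
          obtain ⟨t, ht0, ht1, hteq⟩ := cross (c k) (hp k hkM) (satW_k q hq)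
          refine ⟨p + t • (q - p), fun i hi => ?_, fun j hj => ?_⟩
          · exact seg_le (c i) ht0 ht1 (satM_to_M' p hp i hi) (satW_to_M' q hq i hi)
          · rcases Finset.mem_insert.mp hj with hj | hj
            · subst hj; exact hteq
            · exact absurd hj (Finset.notMem_empty j)
        rw [hB_sum, hW_sum, if_pos hU0]; ring
      · have hW_sum : ∑ J ∈ I'.powerset, (if J.Nonempty ∧ W J then (-1 : ℝ) ^ J.card else 0) = 0 := by
          refine Finset.sum_eq_zero ?_
          intro J hJ
          rw [if_neg]
          rintro ⟨-, y, hy, -⟩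
          exact hfeas ⟨y, hy⟩
        have hnU0 : ¬ U ∅ := by
          intro h
          obtain ⟨y, hy, -⟩ := L2 ∅ (Finset.notMem_empty k) h
          exact hfeas ⟨y, hy⟩
        rw [hB_sum, hW_sum, if_neg hnU0]; ring
    · -- I' is empty : both sums vanish, and U ∅ holds
      have hI'empty : I' = ∅ := Finset.not_nonempty_iff_eq_empty.mp hI'ne
      have hzero : ∀ P : Finset ι → Prop,
          ∑ J ∈ I'.powerset, (if J.Nonempty ∧ P J then (-1 : ℝ) ^ J.card else 0) = 0 := by
        intro P
        rw [hI'empty, Finset.powerset_empty, Finset.sum_singleton,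
          if_neg (fun h => Finset.not_nonempty_empty h.1)]
      have hxM' : TSat c d M' x := by
        intro i hi
        obtain ⟨hik, hiM⟩ := Finset.mem_erase.mp hi
        have : i ∉ I := by rw [hII, hI'empty]; simp [hik]
        have := fun hlt => this ((hI i).mpr ⟨hiM, hlt⟩)
        exact not_lt.mp this
      have hU0 : U ∅ := by
        obtain ⟨t, ht0, ht1, hteq⟩ := cross (c k) (hp k hkM) (le_of_lt hkx)
        refine ⟨p + t • (x - p), fun i hi => ?_, fun j hj => ?_⟩
        · exact seg_le (c i) ht0 ht1 (satM_to_M' p hp i hi) (hxM' i hi)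
        · rcases Finset.mem_insert.mp hj with hj | hj
          · subst hj; exact hteq
          · exact absurd hj (Finset.notMem_empty j)
      rw [hzero B, hzero W, if_pos hU0]; ring

end Tube

section FM

open Filter Set

/-- Eventual decidedness of a predicate near `0⁺`. -/
def EvDec (Q : ℝ → Prop) : Prop :=
  (∀ᶠ ε in nhdsWithin (0:ℝ) (Set.Ioi 0), Q ε) ∨ (∀ᶠ ε in nhdsWithin (0:ℝ) (Set.Ioi 0), ¬ Q ε)

lemma EvDec.congr {Q R : ℝ → Prop} (h : ∀ ε, Q ε ↔ R ε) (hQ : EvDec Q) : EvDec R := by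
  rcases hQ with h1 | h1
  · exact Or.inl (h1.mono fun ε hε => (h ε).mp hε)
  · exact Or.inr (h1.mono fun ε hε hR => hε ((h ε).mpr hR))

lemma poly_sign (p : Polynomial ℝ) :
    (∀ᶠ ε in nhdsWithin (0:ℝ) (Set.Ioi 0), 0 ≤ p.eval ε) ∨
      (∀ᶠ ε in nhdsWithin (0:ℝ) (Set.Ioi 0), p.eval ε < 0) := by
  classical
  by_cases hp : p = 0
  · left; exact Filter.Eventually.of_forall (fun ε => by simp [hp])
  · set S : Finset ℝ := p.roots.toFinset.filter (fun r => 0 < r) with hS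
    set δ : ℝ := if h : S.Nonempty then S.min' h else 1 with hδdef
    have hδpos : 0 < δ := by
      rw [hδdef]
      split_ifs with h
      · exact (Finset.mem_filter.mp (S.min'_mem h)).2
      · exact one_pos
    have hnoroot : ∀ ε ∈ Set.Ioo (0:ℝ) δ, p.eval ε ≠ 0 := by
      intro ε hε h0
      have hmem : ε ∈ S :=
        Finset.mem_filter.mpr ⟨Multiset.mem_toFinset.mpr ((Polynomial.mem_roots hp).mpr h0), hε.1⟩
      have hne : S.Nonempty := ⟨ε, hmem⟩
      have : δ ≤ ε := by rw [hδdef, dif_pos hne]; exact S.min'_le ε hmem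
      exact absurd hε.2 (not_lt.mpr this)
    have hIoo : Set.Ioo (0:ℝ) δ ∈ nhdsWithin (0:ℝ) (Set.Ioi 0) :=
      Ioo_mem_nhdsGT_of_mem ⟨le_refl 0, hδpos⟩
    by_cases hpos : ∀ ε ∈ Set.Ioo (0:ℝ) δ, 0 ≤ p.eval ε
    · left; filter_upwards [hIoo] with ε hε using hpos ε hε
    · right
      push_neg at hpos
      obtain ⟨s, hs, hsneg⟩ := hpos
      filter_upwards [hIoo] with ε hε
      by_contra hcon
      have hεpos : 0 < p.eval ε := lt_of_le_of_ne (not_lt.mp hcon) (Ne.symm (hnoroot ε hε))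
      have hmem0 : (0:ℝ) ∈ Set.uIcc (p.eval s) (p.eval ε) :=
        Set.mem_uIcc.mpr (Or.inl ⟨le_of_lt hsneg, le_of_lt hεpos⟩)
      have hsub : Set.uIcc s ε ⊆ Set.Ioo (0:ℝ) δ :=
        Set.ordConnected_Ioo.uIcc_subset hs hε
      obtain ⟨r, hr, hr0⟩ :=
        intermediate_value_uIcc (Continuous.continuousOn p.continuous) hmem0
      exact hnoroot r (hsub hr) hr0


lemma fm_evdec (n : ℕ) : ∀ (ι : Type) [Fintype ι] (V : ι → Fin n → ℝ) (P : ι → Polynomial ℝ),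
    EvDec (fun ε => ∃ x : Fin n → ℝ, ∀ i, (∑ j, V i j * x j) ≤ (P i).eval ε) := by
  induction n with
  | zero =>
    intro ι _ V P
    have hequiv : ∀ ε : ℝ,
        (∃ x : Fin 0 → ℝ, ∀ i, (∑ j, V i j * x j) ≤ (P i).eval ε) ↔ (∀ i, 0 ≤ (P i).eval ε) := by
      intro ε
      constructor
      · rintro ⟨x, hx⟩ i
        have := hx i
        simpa using this
      · intro h
        refine ⟨fun j => j.elim0, fun i => ?_⟩
        simpa using h i
    by_cases hall : ∀ i, ∀ᶠ ε in nhdsWithin (0:ℝ) (Set.Ioi 0), 0 ≤ (P i).eval ε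
    · left
      filter_upwards [Filter.eventually_all.mpr hall] with ε hε
      exact (hequiv ε).mpr hε
    · push_neg at hall
      obtain ⟨i, hi⟩ := hall
      rcases poly_sign (P i) with h | h
      · exact absurd h (Filter.not_eventually.mpr (hi.mono fun ε hε => not_le.mpr hε))
      · right
        filter_upwards [h] with ε hε hQ
        exact absurd ((hequiv ε).mp hQ i) (not_le.mpr hε)
  | succ n ih =>
    intro ι _ V P
    classical
    set l : Fin (n+1) := Fin.last n with hl
    set ι' : Type := ({i : ι // V i l = 0}) ⊕ ({i : ι // 0 < V i l} × {i : ι // V i l < 0}) with hι'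
    set V' : ι' → Fin n → ℝ := Sum.elim (fun z j => V z.1 j.castSucc)
      (fun uw j => V uw.1.1 l * V uw.2.1 j.castSucc - V uw.2.1 l * V uw.1.1 j.castSucc) with hV'
    set P' : ι' → Polynomial ℝ := Sum.elim (fun z => P z.1)
      (fun uw => Polynomial.C (V uw.1.1 l) * P uw.2.1 - Polynomial.C (V uw.2.1 l) * P uw.1.1) with hP'
    have hdec : ∀ (i : ι) (x : Fin (n+1) → ℝ),
        (∑ j, V i j * x j) = (∑ j : Fin n, V i j.castSucc * x j.castSucc) + V i l * x l := by
      intro i x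
      exact Fin.sum_univ_castSucc (f := fun j => V i j * x j)
    have hcomb : ∀ (u : {i : ι // 0 < V i l}) (w : {i : ι // V i l < 0}) (y : Fin n → ℝ),
        (∑ j, V' (Sum.inr (u, w)) j * y j)
          = V u.1 l * (∑ j : Fin n, V w.1 j.castSucc * y j)
            - V w.1 l * (∑ j : Fin n, V u.1 j.castSucc * y j) := by
      intro u w y
      rw [Finset.mul_sum, Finset.mul_sum, ← Finset.sum_sub_distrib]
      refine Finset.sum_congr rfl fun j _ => ?_
      simp only [hV', Sum.elim_inr]
      ring
    have hevalcomb : ∀ (u : {i : ι // 0 < V i l}) (w : {i : ι // V i l < 0}) (ε : ℝ),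
        (P' (Sum.inr (u, w))).eval ε = V u.1 l * (P w.1).eval ε - V w.1 l * (P u.1).eval ε := by
      intro u w ε
      simp [hP']
    have key : ∀ ε : ℝ,
        (∃ x : Fin (n+1) → ℝ, ∀ i, (∑ j, V i j * x j) ≤ (P i).eval ε) ↔
          (∃ y : Fin n → ℝ, ∀ i', (∑ j, V' i' j * y j) ≤ (P' i').eval ε) := by
      intro ε
      constructor
      · rintro ⟨x, hx⟩
        refine ⟨fun j => x j.castSucc, fun i' => ?_⟩
        rcases i' with z | uw
        · have := hx z.1
          rw [hdec z.1 x] at this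
          have h0 : V z.1 l = 0 := z.2
          simp only [hV', Sum.elim_inl, hP', Sum.elim_inl]
          rw [h0] at this; linarith
        · obtain ⟨u, w⟩ := uw
          have hu := hx u.1; rw [hdec u.1 x] at hu
          have hw := hx w.1; rw [hdec w.1 x] at hw
          rw [hcomb u w, hevalcomb u w]
          have h1 : 0 ≤ V u.1 l * ((P w.1).eval ε - ((∑ j : Fin n, V w.1 j.castSucc * x j.castSucc) + V w.1 l * x l)) :=
            mul_nonneg (le_of_lt u.2) (by linarith)
          have h2 : 0 ≤ (-(V w.1 l)) * ((P u.1).eval ε - ((∑ j : Fin n, V u.1 j.castSucc * x j.castSucc) + V u.1 l * x l)) :=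
            mul_nonneg (by linarith [w.2]) (by linarith)
          nlinarith [h1, h2]
      · rintro ⟨y, hy⟩
        set S : ι → ℝ := fun i => ∑ j : Fin n, V i j.castSucc * y j with hSdef
        set ub : {i : ι // 0 < V i l} → ℝ := fun u => ((P u.1).eval ε - S u.1) / (V u.1 l) with hub
        set lb : {i : ι // V i l < 0} → ℝ := fun w => (S w.1 - (P w.1).eval ε) / (-(V w.1 l)) with hlb
        have hlbub : ∀ u w, lb w ≤ ub u := by
          intro u w
          have := hy (Sum.inr (u, w))
          rw [hcomb u w, hevalcomb u w] at this
          rw [hlb, hub]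
          rw [div_le_div_iff₀ (by linarith [w.2]) u.2]
          nlinarith [this]
        obtain ⟨t, htub, htlb⟩ : ∃ t : ℝ, (∀ u, t ≤ ub u) ∧ (∀ w, lb w ≤ t) := by
          rcases isEmpty_or_nonempty {i : ι // 0 < V i l} with hP1 | hP1
          · rcases isEmpty_or_nonempty {i : ι // V i l < 0} with hN1 | hN1
            · exact ⟨0, fun u => isEmptyElim u, fun w => isEmptyElim w⟩
            · exact ⟨Finset.univ.sup' Finset.univ_nonempty lb, fun u => isEmptyElim u,
                fun w => Finset.le_sup' lb (Finset.mem_univ w)⟩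
          · exact ⟨Finset.univ.inf' Finset.univ_nonempty ub,
              fun u => Finset.inf'_le ub (Finset.mem_univ u),
              fun w => Finset.le_inf' Finset.univ_nonempty ub (fun u _ => hlbub u w)⟩
        refine ⟨Fin.snoc y t, fun i => ?_⟩
        have hxdec : (∑ j, V i j * (Fin.snoc y t : Fin (n+1) → ℝ) j) = S i + V i l * t := by
          rw [hdec i]
          congr 1
          · refine Finset.sum_congr rfl fun j _ => ?_
            rw [Fin.snoc_castSucc]
          · rw [hl, Fin.snoc_last]
        rw [hxdec]
        rcases lt_trichotomy (V i l) 0 with hneg | hzero | hpos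
        · have := htlb ⟨i, hneg⟩
          rw [hlb] at this
          rw [div_le_iff₀ (by linarith)] at this
          nlinarith [this]
        · have := hy (Sum.inl ⟨i, hzero⟩)
          simp only [hV', Sum.elim_inl, hP', Sum.elim_inl] at this
          rw [hzero]
          simpa using this
        · have := htub ⟨i, hpos⟩
          rw [hub] at this
          rw [le_div_iff₀ hpos] at this
          linarith
    exact (ih ι' V' P').congr (fun ε => (key ε).symm)

end FM
section Main

open MeasureTheory Filter

variable {n m : ℕ}

/-- The linear functional `x ↦ ∑ j, v j * x j`. -/
def linFun {n : ℕ} (v : Fin n → ℝ) : (Fin n → ℝ) →ₗ[ℝ] ℝ where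
  toFun x := ∑ j, v j * x j
  map_add' x y := by
    simp only [Pi.add_apply, mul_add]
    rw [Finset.sum_add_distrib]
  map_smul' r x := by
    simp only [Pi.smul_apply, smul_eq_mul, RingHom.id_apply, Finset.mul_sum]
    exact Finset.sum_congr rfl fun j _ => by ring

@[simp] lemma linFun_apply {n : ℕ} (v x : Fin n → ℝ) : linFun v x = ∑ j, v j * x j := rfl

/-- Perturbed polyhedron. -/
def KeS (a : Fin m → Fin n → ℝ) (b : Fin m → ℝ) (t : ℝ) : Set (Fin n → ℝ) :=
  {x | ∀ i, (∑ j, a i j * x j) ≤ b i + t ^ ((i : ℕ) + 1)}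

/-- Perturbed open "violation" region for a set of indices. -/
def AJS (a : Fin m → Fin n → ℝ) (b : Fin m → ℝ) (t : ℝ) (J : Finset (Fin m)) :
    Set (Fin n → ℝ) :=
  {x | ∀ j ∈ J, b j + t ^ ((j : ℕ) + 1) < ∑ jj, a j jj * x jj}

lemma meas_lin (a : Fin m → Fin n → ℝ) (i : Fin m) :
    Measurable fun x : Fin n → ℝ => ∑ j, a i j * x j :=
  Finset.measurable_sum _ fun j _ => measurable_const.mul (measurable_pi_apply j)

lemma meas_KeS (a : Fin m → Fin n → ℝ) (b : Fin m → ℝ) (t : ℝ) :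
    MeasurableSet (KeS a b t) := by
  have : KeS a b t = ⋂ i, {x | (∑ j, a i j * x j) ≤ b i + t ^ ((i : ℕ) + 1)} := by
    ext x; simp [KeS]
  rw [this]
  exact MeasurableSet.iInter fun i => measurableSet_le (meas_lin a i) measurable_const

lemma meas_AJS (a : Fin m → Fin n → ℝ) (b : Fin m → ℝ) (t : ℝ) (J : Finset (Fin m)) :
    MeasurableSet (AJS a b t J) := by
  have : AJS a b t J
      = ⋂ j, ⋂ (_ : j ∈ J), {x | b j + t ^ ((j : ℕ) + 1) < ∑ jj, a j jj * x jj} := by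
    ext x; simp [AJS]
  rw [this]
  exact MeasurableSet.iInter fun j => MeasurableSet.iInter fun _ =>
    measurableSet_lt measurable_const (meas_lin a j)

/-- The pointwise (indicator-level) inclusion–exclusion identity at level `t`. -/
lemma pointwise_ie (a : Fin m → Fin n → ℝ) (b : Fin m → ℝ) (t : ℝ) (ht : 0 < t)
    (p : Fin n → ℝ) (hp : ∀ i, (∑ j, a i j * p j) ≤ b i)
    (𝓕t : Finset (Finset (Fin m)))
    (h𝓕t : ∀ J, J ∈ 𝓕t ↔ J.Nonempty ∧
      TFace (fun i => linFun (a i)) (fun i => b i + t ^ ((i : ℕ) + 1)) Finset.univ J)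
    (x : Fin n → ℝ) :
    (KeS a b t).indicator (fun _ => (1 : ℝ)) x
      + ∑ J ∈ 𝓕t, (-1 : ℝ) ^ (J.card - 1) * (AJS a b t J).indicator (fun _ => (1 : ℝ)) x
      = 1 := by
  classical
  by_cases hx : x ∈ KeS a b t
  · rw [Set.indicator_of_mem hx]
    have hzero : ∀ J ∈ 𝓕t,
        (-1 : ℝ) ^ (J.card - 1) * (AJS a b t J).indicator (fun _ => (1 : ℝ)) x = 0 := by
      intro J hJ
      obtain ⟨j0, hj0⟩ := ((h𝓕t J).mp hJ).1
      have hnot : x ∉ AJS a b t J := by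
        intro hmem
        exact absurd (hx j0) (not_le.mpr (hmem j0 hj0))
      rw [Set.indicator_of_notMem hnot, mul_zero]
    rw [Finset.sum_eq_zero hzero]; ring
  · rw [Set.indicator_of_notMem hx]
    -- the violated set
    set I : Finset (Fin m) :=
      Finset.univ.filter (fun i => b i + t ^ ((i : ℕ) + 1) < ∑ j, a i j * x j) with hIdef
    have hIchar : ∀ i, i ∈ I ↔ i ∈ Finset.univ ∧
        b i + t ^ ((i : ℕ) + 1) < linFun (a i) x := by
      intro i; simp [hIdef]
    have hIne : I.Nonempty := by
      have : ∃ i, ¬ ((∑ j, a i j * x j) ≤ b i + t ^ ((i : ℕ) + 1)) := by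
        by_contra hcon
        push_neg at hcon
        exact hx fun i => hcon i
      obtain ⟨i, hi⟩ := this
      exact ⟨i, by simp [hIdef, not_le.mp hi]⟩
    have hpS : TSat (fun i => linFun (a i)) (fun i => b i + t ^ ((i : ℕ) + 1)) Finset.univ p := by
      intro i _
      have : (0:ℝ) < t ^ ((i : ℕ) + 1) := pow_pos ht _
      simp only [linFun_apply]
      linarith [hp i]
    have htube := tube I.card (fun i => linFun (a i))
      (fun i => b i + t ^ ((i : ℕ) + 1)) Finset.univ I x p hpS hIchar rfl hIne
    -- identify the two index sets
    have hsets : Finset.filter (fun J => J ⊆ I) 𝓕t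
        = Finset.filter (fun J => J.Nonempty ∧
            TFace (fun i => linFun (a i)) (fun i => b i + t ^ ((i : ℕ) + 1)) Finset.univ J)
          I.powerset := by
      ext J
      simp only [Finset.mem_filter, Finset.mem_powerset, h𝓕t]
      tauto
    have hmemAJ : ∀ J : Finset (Fin m), x ∈ AJS a b t J ↔ J ⊆ I := by
      intro J
      constructor
      · intro hmem j hj
        simp only [hIdef, Finset.mem_filter]
        exact ⟨Finset.mem_univ j, hmem j hj⟩
      · intro hsub j hj
        have := hsub hj
        simp only [hIdef, Finset.mem_filter] at this
        exact this.2
    have hstep1 : ∑ J ∈ 𝓕t, (-1 : ℝ) ^ (J.card - 1) * (AJS a b t J).indicator (fun _ => (1:ℝ)) x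
        = ∑ J ∈ Finset.filter (fun J => J ⊆ I) 𝓕t, (-1 : ℝ) ^ (J.card - 1) := by
      rw [Finset.sum_filter]
      refine Finset.sum_congr rfl fun J _ => ?_
      by_cases hsub : J ⊆ I
      · rw [if_pos hsub, Set.indicator_of_mem ((hmemAJ J).mpr hsub), mul_one]
      · rw [if_neg hsub, Set.indicator_of_notMem (fun hmem => hsub ((hmemAJ J).mp hmem)),
          mul_zero]
    have hstep2 : ∑ J ∈ Finset.filter (fun J => J ⊆ I) 𝓕t, (-1 : ℝ) ^ (J.card - 1)
        = -∑ J ∈ Finset.filter (fun J => J ⊆ I) 𝓕t, (-1 : ℝ) ^ J.card := by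
      rw [← Finset.sum_neg_distrib]
      refine Finset.sum_congr rfl fun J hJ => ?_
      have hne : J.Nonempty := ((h𝓕t J).mp (Finset.mem_filter.mp hJ).1).1
      obtain ⟨k, hk⟩ := Nat.exists_eq_succ_of_ne_zero
        (Nat.pos_iff_ne_zero.mp (Finset.card_pos.mpr hne))
      rw [hk, pow_succ]
      simp
    have hstep3 : ∑ J ∈ Finset.filter (fun J => J ⊆ I) 𝓕t, (-1 : ℝ) ^ J.card = -1 := by
      rw [hsets, ← Finset.sum_filter] at *
      · convert htube using 1
    rw [hstep1, hstep2, hstep3]; ring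

end Main
section Main2

open MeasureTheory Filter ProbabilityTheory

variable {n m : ℕ}

/-- The measure-level inclusion–exclusion identity at level `t`. -/
lemma measure_ie (γ : Measure (Fin n → ℝ)) [IsProbabilityMeasure γ]
    (a : Fin m → Fin n → ℝ) (b : Fin m → ℝ) (t : ℝ) (ht : 0 < t)
    (p : Fin n → ℝ) (hp : ∀ i, (∑ j, a i j * p j) ≤ b i)
    (𝓕t : Finset (Finset (Fin m)))
    (h𝓕t : ∀ J, J ∈ 𝓕t ↔ J.Nonempty ∧
      TFace (fun i => linFun (a i)) (fun i => b i + t ^ ((i : ℕ) + 1)) Finset.univ J) :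
    (γ (KeS a b t)).toReal
      + ∑ J ∈ 𝓕t, (-1 : ℝ) ^ (J.card - 1) * (γ (AJS a b t J)).toReal = 1 := by
  classical
  have hint1 : Integrable ((KeS a b t).indicator (fun _ => (1 : ℝ))) γ := by
    rw [integrable_indicator_iff (meas_KeS a b t)]
    exact (integrableOn_const_iff).mpr (Or.inr (measure_lt_top γ _))
  have hintJ : ∀ J : Finset (Fin m),
      Integrable ((AJS a b t J).indicator (fun _ => (1 : ℝ))) γ := by
    intro J
    rw [integrable_indicator_iff (meas_AJS a b t J)]
    exact (integrableOn_const_iff).mpr (Or.inr (measure_lt_top γ _))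
  have hint2 : ∀ J ∈ 𝓕t, Integrable
      (fun x => (-1 : ℝ) ^ (J.card - 1) * (AJS a b t J).indicator (fun _ => (1 : ℝ)) x) γ :=
    fun J _ => (hintJ J).const_mul _
  have hfun : (fun x => (KeS a b t).indicator (fun _ => (1 : ℝ)) x
      + ∑ J ∈ 𝓕t, (-1 : ℝ) ^ (J.card - 1) * (AJS a b t J).indicator (fun _ => (1 : ℝ)) x)
      = fun _ => (1 : ℝ) :=
    funext (pointwise_ie a b t ht p hp 𝓕t h𝓕t)
  have hL : ∫ x, ((KeS a b t).indicator (fun _ => (1 : ℝ)) x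
      + ∑ J ∈ 𝓕t, (-1 : ℝ) ^ (J.card - 1) * (AJS a b t J).indicator (fun _ => (1 : ℝ)) x) ∂γ
      = (γ (KeS a b t)).toReal
        + ∑ J ∈ 𝓕t, (-1 : ℝ) ^ (J.card - 1) * (γ (AJS a b t J)).toReal := by
    rw [integral_add hint1 (integrable_finset_sum _ hint2), integral_finset_sum _ hint2]
    congr 1
    · rw [integral_indicator_const (1 : ℝ) (meas_KeS a b t)]
      simp; rfl
    · refine Finset.sum_congr rfl fun J _ => ?_
      rw [integral_const_mul, integral_indicator_const (1 : ℝ) (meas_AJS a b t J)]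
      simp; rfl
  have hR : ∫ x, (fun _ => (1 : ℝ)) x ∂γ = 1 := by
    simp
  rw [← hL, hfun, hR]

/-- Eventual 0⁺-dichotomy for nonemptiness of a perturbed face. -/
lemma faceNE_evdec (a : Fin m → Fin n → ℝ) (b : Fin m → ℝ) (J : Finset (Fin m)) :
    EvDec (fun ε => TFace (fun i => linFun (a i))
      (fun i => b i + ε ^ ((i : ℕ) + 1)) Finset.univ J) := by
  classical
  have hfm := fm_evdec n (Fin m ⊕ {j : Fin m // j ∈ J})
    (Sum.elim a (fun j jj => -(a j.1 jj)))
    (Sum.elim (fun i => Polynomial.C (b i) + Polynomial.X ^ ((i : ℕ) + 1))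
      (fun j => -(Polynomial.C (b j.1) + Polynomial.X ^ (((j.1 : Fin m) : ℕ) + 1))))
  refine hfm.congr fun ε => ?_
  have hev : ∀ i : Fin m,
      (Polynomial.C (b i) + Polynomial.X ^ ((i : ℕ) + 1)).eval ε = b i + ε ^ ((i : ℕ) + 1) := by
    intro i; simp
  constructor
  · rintro ⟨x, hx⟩
    refine ⟨x, fun i _ => ?_, fun j hj => ?_⟩
    · have := hx (Sum.inl i)
      simp only [Sum.elim_inl] at this
      rw [hev i] at this
      simpa using this
    · have h1 := hx (Sum.inl j)
      have h2 := hx (Sum.inr ⟨j, hj⟩)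
      simp only [Sum.elim_inl, Sum.elim_inr] at h1 h2
      rw [hev j] at h1
      rw [Polynomial.eval_neg, hev j] at h2
      simp only [neg_mul, Finset.sum_neg_distrib] at h2
      simp only [linFun_apply]
      linarith
  · rintro ⟨y, hy, he⟩
    refine ⟨y, fun i' => ?_⟩
    rcases i' with i | j
    · have := hy i (Finset.mem_univ i)
      simp only [linFun_apply] at this
      simp only [Sum.elim_inl]
      rw [hev i]
      exact this
    · have heq := he j.1 j.2
      simp only [linFun_apply] at heq
      simp only [Sum.elim_inr]
      rw [Polynomial.eval_neg, hev j.1]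
      simp only [neg_mul, Finset.sum_neg_distrib]
      rw [heq]
end Main2
section Main3

open MeasureTheory Filter ProbabilityTheory Topology

lemma F_const {n m : ℕ} (a : Fin m → Fin n → ℝ) (b : Fin m → ℝ)
    (𝓕 : ℝ → Finset (Finset (Fin m)))
    (h𝓕' : ∀ ε (J : Finset (Fin m)), J ∈ 𝓕 ε ↔ J.Nonempty ∧
      TFace (fun i => linFun (a i)) (fun i => b i + ε ^ ((i : ℕ) + 1)) Finset.univ J) :
    ∃ δ > (0:ℝ), ∀ s ∈ Set.Ioo (0:ℝ) δ, ∀ t ∈ Set.Ioo (0:ℝ) δ, 𝓕 s = 𝓕 t := by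
  classical
  have hc : ∀ J : Finset (Fin m), ∃ cj : Prop,
      ∀ᶠ ε in nhdsWithin (0:ℝ) (Set.Ioi 0),
        (TFace (fun i => linFun (a i)) (fun i => b i + ε ^ ((i : ℕ) + 1))
          Finset.univ J ↔ cj) := by
    intro J
    rcases faceNE_evdec a b J with h | h
    · exact ⟨True, h.mono fun ε hε => by tauto⟩
    · exact ⟨False, h.mono fun ε hε => by tauto⟩
  choose cf hcf using hc
  have hall := Filter.eventually_all.mpr hcf
  obtain ⟨δ, hδ, hsub⟩ := mem_nhdsGT_iff_exists_Ioo_subset.mp hall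
  refine ⟨δ, hδ, fun s hs t ht => ?_⟩
  ext J
  rw [h𝓕' s J, h𝓕' t J, hsub hs J, hsub ht J]

/-- For all sufficiently small ε > 0, under the standard Gaussian measure γₙ on ℝⁿ,
1 − γₙ(K) equals the inclusion-exclusion sum over the perturbed face complex 𝓕(ε),
where K and the half-space complements Hᵢᶜ are the unperturbed ones. -/
theorem perturbed_gaussian_probability_inclusion_exclusion
    (n m : ℕ) (hn : 1 ≤ n) (hm : 1 ≤ m)
    (a : Fin m → Fin n → ℝ) (b : Fin m → ℝ)
    (ha : ∀ i, a i ≠ 0)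
    (H Hc : Fin m → Set (Fin n → ℝ))
    (K : Set (Fin n → ℝ))
    (hH : ∀ i, H i = {x | ∑ j, a i j * x j ≤ b i})
    (hHc : ∀ i, Hc i = {x | b i < ∑ j, a i j * x j})
    (hK : K = ⋂ i, H i) (hKne : K.Nonempty)
    (He Fe : ℝ → Fin m → Set (Fin n → ℝ))
    (Ke : ℝ → Set (Fin n → ℝ))
    (hHe : ∀ ε i, He ε i = {x | ∑ j, a i j * x j ≤ b i + ε ^ ((i : ℕ) + 1)})
    (hKe : ∀ ε, Ke ε = ⋂ i, He ε i)
    (hFe : ∀ ε i, Fe ε i = {x | ∑ j, a i j * x j = b i + ε ^ ((i : ℕ) + 1)} ∩ Ke ε)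
    (𝓕 : ℝ → Finset (Finset (Fin m)))
    (h𝓕 : ∀ ε (J : Finset (Fin m)),
      J ∈ 𝓕 ε ↔ J.Nonempty ∧ (⋂ i ∈ J, Fe ε i).Nonempty)
    (γ : Measure (Fin n → ℝ))
    (hγ : γ = Measure.pi fun _ : Fin n => gaussianReal 0 1) :
    ∃ δ > (0 : ℝ), ∀ ε : ℝ, 0 < ε → ε < δ →
      1 - (γ K).toReal
        = ∑ J ∈ 𝓕 ε, (-1 : ℝ) ^ (J.card - 1) * (γ (⋂ i ∈ J, Hc i)).toReal := by
  classical
  have hprob : IsProbabilityMeasure γ := by rw [hγ]; infer_instance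
  obtain ⟨p, hpK⟩ := hKne
  have hp : ∀ i, (∑ j, a i j * p j) ≤ b i := by
    intro i
    have hmem : p ∈ H i := by
      rw [hK] at hpK
      exact Set.mem_iInter.mp hpK i
    rw [hH i] at hmem
    exact hmem
  -- translate 𝓕 into TFace form
  have h𝓕' : ∀ ε (J : Finset (Fin m)), J ∈ 𝓕 ε ↔ J.Nonempty ∧
      TFace (fun i => linFun (a i)) (fun i => b i + ε ^ ((i : ℕ) + 1)) Finset.univ J := by
    intro ε J
    rw [h𝓕 ε J]
    constructor
    · rintro ⟨hne, y, hy⟩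
      have hy' : ∀ i ∈ J, y ∈ Fe ε i := Set.mem_iInter₂.mp hy
      obtain ⟨j0, hj0⟩ := hne
      have hyKe : y ∈ Ke ε := by
        have := hy' j0 hj0
        rw [hFe] at this
        exact this.2
      have hSat : TSat (fun i => linFun (a i))
          (fun i => b i + ε ^ ((i : ℕ) + 1)) Finset.univ y := by
        intro i _
        rw [hKe] at hyKe
        have := Set.mem_iInter.mp hyKe i
        rw [hHe] at this
        simpa using this
      refine ⟨⟨j0, hj0⟩, y, hSat, fun j hj => ?_⟩
      have := hy' j hj
      rw [hFe] at this
      simpa using this.1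
    · rintro ⟨hne, y, hSat, heq⟩
      refine ⟨hne, y, Set.mem_iInter₂.mpr fun i hi => ?_⟩
      rw [hFe]
      refine ⟨by simpa using heq i hi, ?_⟩
      rw [hKe]
      refine Set.mem_iInter.mpr fun i' => ?_
      rw [hHe]
      simpa using hSat i' (Finset.mem_univ i')
  obtain ⟨δ₀, hδ₀, hconst⟩ := F_const a b 𝓕 h𝓕'
  refine ⟨min δ₀ 1, lt_min hδ₀ one_pos, ?_⟩
  intro ε hε0 hεδ
  have hεδ₀ : ε < δ₀ := lt_of_lt_of_le hεδ (min_le_left _ _)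
  have hε1 : ε < 1 := lt_of_lt_of_le hεδ (min_le_right _ _)
  set e : ℕ → ℝ := fun k => ε / ((k : ℝ) + 1) with he_def
  have he_pos : ∀ k, 0 < e k := fun k => div_pos hε0 (by positivity)
  have he_le : ∀ k, e k ≤ ε := by
    intro k
    simp only [he_def]
    exact div_le_self hε0.le (by linarith [Nat.cast_nonneg (α := ℝ) k])
  have he_anti : ∀ k l : ℕ, k ≤ l → e l ≤ e k := by
    intro k l hkl
    simp only [he_def]
    apply div_le_div_of_nonneg_left hε0.le (by positivity)
    have : (k : ℝ) ≤ (l : ℝ) := Nat.cast_le.mpr hkl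
    linarith
  have he_mem : ∀ k, e k ∈ Set.Ioo (0:ℝ) δ₀ :=
    fun k => ⟨he_pos k, lt_of_le_of_lt (he_le k) hεδ₀⟩
  have hε_mem : ε ∈ Set.Ioo (0:ℝ) δ₀ := ⟨hε0, hεδ₀⟩
  have he_lt1 : ∀ k, e k ≤ 1 := fun k => le_of_lt (lt_of_le_of_lt (he_le k) hε1)
  have he_tend : Tendsto e atTop (𝓝 0) := by
    have h1 := (tendsto_one_div_add_atTop_nhds_zero_nat).const_mul ε
    simp only [mul_zero] at h1
    simp only [he_def]
    simpa [mul_one_div, div_eq_mul_inv] using h1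
  -- per-level measure identity
  have hid : ∀ k : ℕ, (γ (KeS a b (e k))).toReal
      + ∑ J ∈ 𝓕 ε, (-1:ℝ) ^ (J.card - 1) * (γ (AJS a b (e k) J)).toReal = 1 := by
    intro k
    have h𝓕k : ∀ J, J ∈ 𝓕 ε ↔ J.Nonempty ∧ TFace (fun i => linFun (a i))
        (fun i => b i + (e k) ^ ((i : ℕ) + 1)) Finset.univ J := by
      intro J
      rw [hconst ε hε_mem (e k) (he_mem k)]
      exact h𝓕' (e k) J
    exact measure_ie γ a b (e k) (he_pos k) p hp (𝓕 ε) h𝓕k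
  -- limit of the polyhedra
  have hKset : (⋂ k, KeS a b (e k)) = K := by
    rw [hK]
    ext x
    simp only [Set.mem_iInter, KeS, Set.mem_setOf_eq, hH]
    constructor
    · intro hx i
      by_contra hcon
      push_neg at hcon
      have hηpos : 0 < (∑ j, a i j * x j) - b i := by linarith
      obtain ⟨N, hN⟩ := exists_nat_gt (ε / ((∑ j, a i j * x j) - b i))
      rw [div_lt_iff₀ hηpos] at hN
      have h1 : e N < (∑ j, a i j * x j) - b i := by
        simp only [he_def]
        rw [div_lt_iff₀ (by positivity : (0:ℝ) < (N:ℝ) + 1)]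
        nlinarith [Nat.cast_nonneg (α := ℝ) N]
      have h2 : (e N) ^ ((i : ℕ) + 1) ≤ e N :=
        pow_le_of_le_one (he_pos N).le (he_lt1 N) (Nat.succ_ne_zero _)
      have h3 := hx N i
      linarith
    · intro hx k i
      have h0 : 0 < (e k) ^ ((i : ℕ) + 1) := pow_pos (he_pos k) _
      linarith [hx i]
  have hKanti : Antitone (fun k => KeS a b (e k)) := by
    intro k l hkl x hx i
    have hpow : (e l) ^ ((i : ℕ) + 1) ≤ (e k) ^ ((i : ℕ) + 1) :=
      pow_le_pow_left₀ (he_pos l).le (he_anti k l hkl) _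
    have := hx i
    linarith [this]
  have hKtend : Tendsto (fun k => (γ (KeS a b (e k))).toReal) atTop
      (𝓝 ((γ K).toReal)) := by
    have h := MeasureTheory.tendsto_measure_iInter_atTop
      (fun k => (meas_KeS a b (e k)).nullMeasurableSet) hKanti ⟨0, measure_ne_top γ _⟩
    rw [hKset] at h
    exact (ENNReal.tendsto_toReal (measure_ne_top γ K)).comp h
  -- limits of the open violation regions
  have hAset : ∀ J : Finset (Fin m), (⋃ k, AJS a b (e k) J) = ⋂ i ∈ J, Hc i := by
    intro J
    ext x
    simp only [Set.mem_iUnion, AJS, Set.mem_setOf_eq, Set.mem_iInter, hHc]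
    constructor
    · rintro ⟨k, hk⟩ j hj
      have h0 : 0 < (e k) ^ ((j : ℕ) + 1) := pow_pos (he_pos k) _
      have := hk j hj
      linarith
    · intro hx
      have hev : ∀ j ∈ J, ∀ᶠ k : ℕ in atTop,
          (e k) ^ ((j : ℕ) + 1) < (∑ jj, a j jj * x jj) - b j := by
        intro j hj
        have hpow : Tendsto (fun k => (e k) ^ ((j : ℕ) + 1)) atTop (𝓝 0) := by
          have := he_tend.pow ((j : ℕ) + 1)
          simpa [zero_pow (Nat.succ_ne_zero (j : ℕ))] using this
        exact hpow.eventually_lt_const (by linarith [hx j hj])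
      obtain ⟨k, hk⟩ := ((Finset.eventually_all J).mpr hev).exists
      exact ⟨k, fun j hj => by linarith [hk j hj]⟩
  have hAmono : ∀ J : Finset (Fin m), Monotone (fun k => AJS a b (e k) J) := by
    intro J k l hkl x hx j hj
    have hpow : (e l) ^ ((j : ℕ) + 1) ≤ (e k) ^ ((j : ℕ) + 1) :=
      pow_le_pow_left₀ (he_pos l).le (he_anti k l hkl) _
    have := hx j hj
    linarith [this]
  have hAtend : ∀ J : Finset (Fin m),
      Tendsto (fun k => (γ (AJS a b (e k) J)).toReal) atTop
        (𝓝 ((γ (⋂ i ∈ J, Hc i)).toReal)) := by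
    intro J
    have h := MeasureTheory.tendsto_measure_iUnion_atTop (μ := γ) (hAmono J)
    rw [hAset J] at h
    exact (ENNReal.tendsto_toReal (measure_ne_top γ _)).comp h
  -- pass to the limit
  have hfinal : (γ K).toReal
      + ∑ J ∈ 𝓕 ε, (-1:ℝ) ^ (J.card - 1) * (γ (⋂ i ∈ J, Hc i)).toReal = 1 := by
    have hT : Tendsto (fun k => (γ (KeS a b (e k))).toReal
        + ∑ J ∈ 𝓕 ε, (-1:ℝ) ^ (J.card - 1) * (γ (AJS a b (e k) J)).toReal) atTop
        (𝓝 ((γ K).toReal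
          + ∑ J ∈ 𝓕 ε, (-1:ℝ) ^ (J.card - 1) * (γ (⋂ i ∈ J, Hc i)).toReal)) :=
      hKtend.add (tendsto_finset_sum _ fun J _ => (hAtend J).const_mul _)
    have heq : (fun k => (γ (KeS a b (e k))).toReal
        + ∑ J ∈ 𝓕 ε, (-1:ℝ) ^ (J.card - 1) * (γ (AJS a b (e k) J)).toReal)
        = fun _ => (1:ℝ) := funext hid
    rw [heq] at hT
    exact tendsto_nhds_unique hT tendsto_const_nhds
  linarith [hfinal]

end Main3
end

section
/- For every fixed subset J ⊆ {1,…,m}, there exists δ_J > 0 such that for all ε ∈ (0, δ_J), the intersection ∩_{i∈J} ∂Hᵢ(ε) contains no affine subspace of dimension max(n+1−|J|, 0); in particular, if |J| ≥ n+1 then ∩_{i∈J} ∂Hᵢ(ε) = ∅ for all ε ∈ (0, δ_J). -/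
open Polynomial Matrix

/-- For each fixed index set J there is δ_J > 0 such that for all ε ∈ (0, δ_J) the
intersection ∩_{i∈J} ∂Hᵢ(ε) contains no affine subspace of dimension
max(n+1−|J|, 0); in particular, if |J| ≥ n+1 then ∩_{i∈J} ∂Hᵢ(ε) = ∅. -/
theorem perturbed_hyperplanes_general_position_fixed_J
    (n m : ℕ) (hn : 1 ≤ n) (hm : 1 ≤ m)
    (a : Fin m → Fin n → ℝ) (b : Fin m → ℝ)
    (ha : ∀ i, a i ≠ 0)
    (Hb : ℝ → Fin m → Set (Fin n → ℝ))
    (hHb : ∀ ε i, Hb ε i = {x | ∑ j, a i j * x j = b i + ε ^ ((i : ℕ) + 1)})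
    (J : Finset (Fin m)) :
    ∃ δ > (0 : ℝ), ∀ ε : ℝ, 0 < ε → ε < δ →
      (¬ ∃ s : AffineSubspace ℝ (Fin n → ℝ),
          (s : Set (Fin n → ℝ)).Nonempty ∧
          Module.finrank ℝ s.direction = n + 1 - J.card ∧
          (s : Set (Fin n → ℝ)) ⊆ ⋂ i ∈ J, Hb ε i) ∧
      (n + 1 ≤ J.card → (⋂ i ∈ J, Hb ε i) = ∅) := by
  classical
  set M : Matrix J (Fin n) ℝ := fun i j => a i.1 j with hMdef
  have hrk : M.rank + Module.finrank ℝ (LinearMap.ker M.mulVecLin) = n := by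
    have h := LinearMap.finrank_range_add_finrank_ker M.mulVecLin
    rw [Module.finrank_pi, Fintype.card_fin] at h
    exact h
  have hmem : ∀ ε (x : Fin n → ℝ), x ∈ (⋂ i ∈ J, Hb ε i) ↔
      ∀ i : J, ∑ j, a i.1 j * x j = b i.1 + ε ^ ((i.1 : ℕ) + 1) := by
    intro ε x
    simp only [Set.mem_iInter, hHb, Set.mem_setOf_eq]
    exact ⟨fun h i => h i.1 i.2, fun h i hi => h ⟨i, hi⟩⟩
  by_cases hcase : M.rank < J.card
  · -- rows are linearly dependent: intersection is empty for small ε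
    have hker : LinearMap.ker (Mᵀ.mulVecLin) ≠ ⊥ := by
      intro hbot
      have h := LinearMap.finrank_range_add_finrank_ker Mᵀ.mulVecLin
      rw [hbot, finrank_bot, Module.finrank_pi, Fintype.card_coe] at h
      have : Mᵀ.rank = J.card := by simpa [Matrix.rank] using h
      rw [Matrix.rank_transpose] at this
      omega
    obtain ⟨c, hcker, hc0⟩ := Submodule.exists_mem_ne_zero_of_ne_bot hker
    have hcsum : ∀ j, ∑ i : J, c i * a i.1 j = 0 := by
      intro j
      have h := congrFun (LinearMap.mem_ker.mp hcker) j
      have h' : ∑ i : J, Mᵀ j i * c i = 0 := h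
      exact (Finset.sum_congr rfl fun i _ => mul_comm _ _).trans h'
    set Q : ℝ[X] := C (∑ i : J, c i * b i.1) + ∑ i : J, C (c i) * X ^ ((i.1 : ℕ) + 1)
      with hQdef
    obtain ⟨i₀, hi₀⟩ : ∃ i : J, c i ≠ 0 := by
      by_contra h
      push_neg at h
      exact hc0 (funext fun i => h i)
    have hQne : Q ≠ 0 := by
      intro hQ
      have hco : Q.coeff ((i₀.1 : ℕ) + 1) = c i₀ := by
        rw [hQdef, Polynomial.coeff_add, Polynomial.coeff_C, if_neg (by omega),
          Polynomial.finset_sum_coeff, Finset.sum_eq_single i₀]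
        · simp
        · intro i _ hne
          rw [Polynomial.coeff_C_mul, Polynomial.coeff_X_pow, if_neg, mul_zero]
          intro h
          exact hne (Subtype.ext (Fin.val_injective (by omega)))
        · simp
      rw [hQ] at hco
      exact hi₀ (by simpa using hco.symm)
    obtain ⟨δ, hδ0, hδ⟩ : ∃ δ > (0:ℝ), ∀ ε : ℝ, 0 < ε → ε < δ → Q.eval ε ≠ 0 := by
      have hmemT : ∀ ε : ℝ, 0 < ε → Q.eval ε = 0 →
          ε ∈ Q.roots.toFinset.filter (fun r => 0 < r) := by
        intro ε hε hev
        rw [Finset.mem_filter, Multiset.mem_toFinset, Polynomial.mem_roots hQne]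
        exact ⟨hev, hε⟩
      by_cases hTne : (Q.roots.toFinset.filter (fun r => 0 < r)).Nonempty
      · refine ⟨Finset.min' _ hTne,
          (Finset.mem_filter.mp (Finset.min'_mem _ hTne)).2, fun ε hε hεδ hev => ?_⟩
        exact absurd (Finset.min'_le _ ε (hmemT ε hε hev)) (not_le.mpr hεδ)
      · exact ⟨1, one_pos, fun ε hε _ hev => hTne ⟨ε, hmemT ε hε hev⟩⟩
    refine ⟨δ, hδ0, fun ε hε hεδ => ?_⟩
    have hempty : (⋂ i ∈ J, Hb ε i) = ∅ := by
      rw [Set.eq_empty_iff_forall_notMem]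
      intro x hx
      have hx' := (hmem ε x).mp hx
      have h1 : ∑ i : J, c i * (b i.1 + ε ^ ((i.1 : ℕ) + 1))
          = ∑ i : J, c i * ∑ j, a i.1 j * x j := by
        refine Finset.sum_congr rfl fun i _ => ?_
        rw [hx' i]
      have h2 : ∑ i : J, c i * ∑ j, a i.1 j * x j = 0 :=
        calc ∑ i : J, c i * ∑ j, a i.1 j * x j
            = ∑ i : J, ∑ j, c i * a i.1 j * x j := by
              refine Finset.sum_congr rfl fun i _ => ?_
              rw [Finset.mul_sum]
              exact Finset.sum_congr rfl fun j _ => by ring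
          _ = ∑ j, ∑ i : J, c i * a i.1 j * x j := Finset.sum_comm
          _ = ∑ j, (∑ i : J, c i * a i.1 j) * x j := by
              refine Finset.sum_congr rfl fun j _ => ?_
              rw [Finset.sum_mul]
          _ = 0 := Finset.sum_eq_zero fun j _ => by rw [hcsum j, zero_mul]
      have heval : Q.eval ε = 0 := by
        have he : Q.eval ε
            = ∑ i : J, c i * b i.1 + ∑ i : J, c i * ε ^ ((i.1 : ℕ) + 1) := by
          simp [hQdef, Polynomial.eval_finset_sum]
        have key : ∑ i : J, c i * (b i.1 + ε ^ ((i.1 : ℕ) + 1)) = 0 := h1.trans h2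
        rw [he, ← Finset.sum_add_distrib, ← key]
        exact Finset.sum_congr rfl fun i _ => by ring
      exact hδ ε hε hεδ heval
    constructor
    · rintro ⟨s, ⟨p, hp⟩, -, hsub⟩
      exact absurd (hsub hp) (by rw [hempty]; exact Set.notMem_empty p)
    · intro _; exact hempty
  · -- rows linearly independent: direction argument works for all ε
    push_neg at hcase
    refine ⟨1, one_pos, fun ε hε hεδ => ⟨?_, ?_⟩⟩
    · rintro ⟨s, ⟨p, hp⟩, hdim, hsub⟩
      have hdir : s.direction ≤ LinearMap.ker M.mulVecLin := by
        intro v hv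
        have hvp : v +ᵥ p ∈ s := AffineSubspace.vadd_mem_of_mem_direction hv hp
        have h1 := (hmem ε _).mp (hsub hvp)
        have h2 := (hmem ε _).mp (hsub hp)
        rw [LinearMap.mem_ker]
        funext i
        have h1i := h1 i
        have h2i := h2 i
        have hsplit : ∑ j, a i.1 j * (v j + p j)
            = ∑ j, a i.1 j * v j + ∑ j, a i.1 j * p j := by
          rw [← Finset.sum_add_distrib]
          exact Finset.sum_congr rfl fun j _ => by ring
        have hv0 : ∑ j, a i.1 j * v j = 0 := by
          have hvp' : ∀ j, (v +ᵥ p) j = v j + p j := fun j => rfl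
          simp only [hvp'] at h1i
          rw [hsplit, h2i] at h1i
          linarith
        exact hv0
      have hle : Module.finrank ℝ s.direction
          ≤ Module.finrank ℝ (LinearMap.ker M.mulVecLin) :=
        Submodule.finrank_mono hdir
      rw [hdim] at hle
      omega
    · intro h
      omega
end

section
/- If |J| ≥ n+1, then for all sufficiently small ε > 0 the perturbed hyperplanes indexed by J have empty intersection: ∩_{i∈J} ∂Hᵢ(ε) = ∅. -/
open Polynomial

/-- If |J| ≥ n+1 then for all sufficiently small ε > 0 the perturbed hyperplanes
∂Hᵢ(ε), i ∈ J, have empty intersection. -/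
theorem perturbed_hyperplanes_empty_intersection
    (n m : ℕ) (hn : 1 ≤ n) (hm : 1 ≤ m)
    (a : Fin m → Fin n → ℝ) (b : Fin m → ℝ)
    (ha : ∀ i, a i ≠ 0)
    (Hb : ℝ → Fin m → Set (Fin n → ℝ))
    (hHb : ∀ ε i, Hb ε i = {x | ∑ j, a i j * x j = b i + ε ^ ((i : ℕ) + 1)})
    (J : Finset (Fin m)) (hJ : n + 1 ≤ J.card) :
    ∃ δ > (0 : ℝ), ∀ ε : ℝ, 0 < ε → ε < δ →
      (⋂ i ∈ J, Hb ε i) = ∅ := by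
  classical
  have hdep : ¬ LinearIndependent ℝ (fun i : ↥J => a i) := by
    intro h
    have hle := h.fintype_card_le_finrank
    rw [Module.finrank_fin_fun] at hle
    simp only [Fintype.card_coe] at hle
    omega
  obtain ⟨g, hsum, i₀, hi₀⟩ := Fintype.not_linearIndependent_iff.mp hdep
  -- the polynomial
  set p : ℝ[X] := ∑ i : ↥J, C (g i) * (C (b (i : Fin m)) + X ^ (((i : Fin m) : ℕ) + 1)) with hp
  have hpne : p ≠ 0 := by
    intro h0
    have hc : p.coeff (((i₀ : Fin m) : ℕ) + 1) = g i₀ := by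
      rw [hp]
      rw [Polynomial.finset_sum_coeff]
      rw [Finset.sum_eq_single i₀]
      · simp [Polynomial.coeff_X_pow, Polynomial.coeff_C]
      · intro i _ hne
        have : (((i : Fin m) : ℕ) + 1) ≠ (((i₀ : Fin m) : ℕ) + 1) := by
          simp only [ne_eq, add_left_inj]
          intro h
          exact hne (Subtype.ext (Fin.ext h))
        simp only [Polynomial.coeff_C_mul, Polynomial.coeff_add, Polynomial.coeff_C,
          Polynomial.coeff_X_pow]
        rw [if_neg (Nat.succ_ne_zero _), if_neg (fun h => this h.symm)]
        ring
      · intro h; exact absurd (Finset.mem_univ i₀) h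
    rw [h0] at hc
    simp at hc
    exact hi₀ hc.symm
  -- roots
  set s : Finset ℝ := p.roots.toFinset.filter (fun x => 0 < x) with hs
  refine ⟨if hne : s.Nonempty then s.min' hne else 1, ?_, ?_⟩
  · split
    · rename_i hne
      have := Finset.min'_mem s hne
      exact (Finset.mem_filter.mp this).2
    · exact one_pos
  · intro ε hε hεδ
    rw [Set.eq_empty_iff_forall_notMem]
    intro x hx
    simp only [Set.mem_iInter] at hx
    -- ε is a root of p
    have hroot : p.eval ε = 0 := by
      have hxi : ∀ i ∈ J, ∑ j, a i j * x j = b i + ε ^ ((i : ℕ) + 1) := by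
        intro i hi
        have := hx i hi
        rw [hHb] at this
        exact this
      have h1 : p.eval ε = ∑ i : ↥J, g i * (b (i : Fin m) + ε ^ (((i:Fin m) : ℕ) + 1)) := by
        rw [hp]; simp [Polynomial.eval_finset_sum]
      rw [h1]
      have h2 : ∀ i : ↥J, g i * (b (i : Fin m) + ε ^ (((i:Fin m) : ℕ) + 1))
          = ∑ j, g i * (a (i : Fin m) j * x j) := by
        intro i
        rw [← Finset.mul_sum, hxi i i.2]
      rw [Finset.sum_congr rfl (fun i _ => h2 i), Finset.sum_comm]
      have h3 : ∀ j, ∑ i : ↥J, g i * (a (i : Fin m) j * x j)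
          = (∑ i : ↥J, g i * a (i : Fin m) j) * x j := by
        intro j; rw [Finset.sum_mul]; simp only [mul_assoc]
      rw [Finset.sum_congr rfl (fun j _ => h3 j)]
      have h4 : ∀ j, (∑ i ∈ J.attach, g i * a (i : Fin m) j) = 0 := by
        intro j
        have := congrFun hsum j
        simpa [Finset.univ_eq_attach] using this
      simp [h4]
    have hmem : ε ∈ s := by
      rw [hs, Finset.mem_filter, Multiset.mem_toFinset, Polynomial.mem_roots hpne]
      exact ⟨hroot, hε⟩
    split_ifs at hεδ with h
    · exact absurd (Finset.min'_le s ε hmem) (not_le.mpr hεδ)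
    · exact h ⟨ε, hmem⟩
end

section
/- Let J ⊆ {1,…,m} be nonempty with {aᵢ : i ∈ J} linearly independent, and let E_J = ∩_{i∈J} ∂Hᵢ and E_J(ε) = ∩_{i∈J} ∂Hᵢ(ε). If E_J ∩ K = ∅, then there exists δ > 0 such that for all ε ∈ (0, δ), E_J(ε) ∩ K(ε) = ∅. -/
open Finset

section Cone

variable {H : Type*} [AddCommGroup H] [Module ℝ H] {ι : Type*} [Fintype ι] [DecidableEq ι]

/-- The conic hull of a finite family, as a set. -/
def coneOf (v : ι → H) : Set H :=
  {x | ∃ l : ι → ℝ, (∀ i, 0 ≤ l i) ∧ ∑ i, l i • v i = x}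

/-- Conic combinations supported on a subset. -/
def coneSupp (v : ι → H) (s : Finset ι) : Set H :=
  {x | ∃ l : ι → ℝ, (∀ i, 0 ≤ l i) ∧ (∀ i ∉ s, l i = 0) ∧ ∑ i, l i • v i = x}

lemma sum_eq_sum_coe (v : ι → H) (s : Finset ι) (l : ι → ℝ) (hs : ∀ i ∉ s, l i = 0) :
    ∑ i, l i • v i = ∑ i : {i // i ∈ s}, l i • v i := by
  rw [Finset.sum_coe_sort s (fun i => l i • v i)]
  exact (Finset.sum_subset s.subset_univ (fun i _ hi => by rw [hs i hi, zero_smul])).symm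

/-- Carathéodory-type reduction for cones. -/
lemma cone_caratheodory (v : ι → H) (s : Finset ι) :
    ∀ l : ι → ℝ, (∀ i, 0 ≤ l i) → (∀ i ∉ s, l i = 0) →
    ∃ (t : Finset ι) (l' : ι → ℝ), LinearIndependent ℝ (fun i : {i // i ∈ t} => v i) ∧
      (∀ i, 0 ≤ l' i) ∧ (∀ i ∉ t, l' i = 0) ∧ ∑ i, l' i • v i = ∑ i, l i • v i := by
  induction s using Finset.strongInductionOn with
  | _ s ih =>
  intro l hl hsupp
  by_cases hind : LinearIndependent ℝ (fun i : {i // i ∈ s} => v i)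
  · exact ⟨s, l, hind, hl, hsupp, rfl⟩
  obtain ⟨g0, hg0sum, i₀', hi₀'⟩ := Fintype.not_linearIndependent_iff.mp hind
  -- extend `g0` to `ι`, with the right sign
  have key : ∃ g : ι → ℝ, (∀ i ∉ s, g i = 0) ∧ (∑ i, g i • v i = 0) ∧ ∃ i₀ ∈ s, 0 < g i₀ := by
    set ge : ι → ℝ := fun i => if h : i ∈ s then g0 ⟨i, h⟩ else 0 with hge
    have hsupp' : ∀ i ∉ s, ge i = 0 := fun i hi => by simp [hge, hi]
    have hsum : ∑ i, ge i • v i = 0 := by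
      rw [sum_eq_sum_coe v s ge hsupp']
      have : ∀ i : {i // i ∈ s}, ge i • v i = g0 i • v i := fun ⟨i, h⟩ => by simp [hge, h]
      rw [Fintype.sum_congr _ _ this, hg0sum]
    rcases lt_trichotomy (g0 i₀') 0 with hneg | hzero | hpos
    · refine ⟨-ge, fun i hi => by simp [hsupp' i hi], by
        simp only [Pi.neg_apply, neg_smul, Finset.sum_neg_distrib, hsum, neg_zero],
        i₀', i₀'.2, ?_⟩
      have : ge i₀' = g0 i₀' := by simp [hge, i₀'.2]
      simp [this]; linarith
    · exact absurd hzero hi₀'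
    · refine ⟨ge, hsupp', hsum, i₀', i₀'.2, ?_⟩
      have : ge i₀' = g0 i₀' := by simp [hge, i₀'.2]
      rw [this]; exact hpos
  obtain ⟨g, hgsupp, hgsum, i₀, hi₀s, hi₀pos⟩ := key
  set T : Finset ι := s.filter (fun i => 0 < g i) with hT
  have hTne : T.Nonempty := ⟨i₀, by simp [hT, hi₀s, hi₀pos]⟩
  obtain ⟨j₀, hj₀T, hmin⟩ := T.exists_min_image (fun i => l i / g i) hTne
  have hj₀s : j₀ ∈ s := (Finset.mem_filter.mp hj₀T).1
  have hgj₀ : 0 < g j₀ := (Finset.mem_filter.mp hj₀T).2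
  set r : ℝ := l j₀ / g j₀ with hr
  have hr0 : 0 ≤ r := div_nonneg (hl j₀) hgj₀.le
  set l' : ι → ℝ := fun i => l i - r * g i with hl'
  have hl'nonneg : ∀ i, 0 ≤ l' i := by
    intro i
    by_cases hgi : 0 < g i
    · have his : i ∈ s := by
        by_contra h; rw [hgsupp i h] at hgi; exact lt_irrefl 0 hgi
      have hiT : i ∈ T := Finset.mem_filter.mpr ⟨his, hgi⟩
      have := hmin i hiT
      have : r * g i ≤ l i := by
        rw [hr] at this ⊢
        calc l j₀ / g j₀ * g i ≤ l i / g i * g i := by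
              apply mul_le_mul_of_nonneg_right this hgi.le
          _ = l i := div_mul_cancel₀ _ (ne_of_gt hgi)
      simp [hl']; linarith
    · push_neg at hgi
      have : r * g i ≤ 0 := mul_nonpos_of_nonneg_of_nonpos hr0 hgi
      simp [hl']; nlinarith [hl i]
  have hl'supp : ∀ i ∉ s.erase j₀, l' i = 0 := by
    intro i hi
    by_cases his : i ∈ s
    · have : i = j₀ := by
        by_contra hne
        exact hi (Finset.mem_erase.mpr ⟨hne, his⟩)
      subst this
      simp [hl', hr, div_mul_cancel₀ _ (ne_of_gt hgj₀)]
    · simp [hl', hsupp i his, hgsupp i his]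
  have hl'sum : ∑ i, l' i • v i = ∑ i, l i • v i := by
    simp only [hl', sub_smul, mul_smul, Finset.sum_sub_distrib, ← Finset.smul_sum, hgsum,
      smul_zero, sub_zero]
  obtain ⟨t, l'', h1, h2, h3, h4⟩ :=
    ih (s.erase j₀) (Finset.erase_ssubset hj₀s) l' hl'nonneg hl'supp
  exact ⟨t, l'', h1, h2, h3, h4.trans hl'sum⟩

end Cone

section Closed

variable {H : Type*} [NormedAddCommGroup H] [NormedSpace ℝ H] {ι : Type*} [Fintype ι]
  [DecidableEq ι]

lemma coneSupp_isClosed (v : ι → H) (s : Finset ι)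
    (hind : LinearIndependent ℝ (fun i : {i // i ∈ s} => v i)) :
    IsClosed (coneSupp v s) := by
  set f : ({i // i ∈ s} → ℝ) →ₗ[ℝ] H :=
    { toFun := fun c => ∑ i, c i • v i,
      map_add' := fun c d => by simp [add_smul, Finset.sum_add_distrib],
      map_smul' := fun r c => by simp [mul_smul, ← Finset.smul_sum] } with hf
  have hker : LinearMap.ker f = ⊥ := LinearMap.ker_eq_bot'.mpr (fun c hc => by
    funext i; exact Fintype.linearIndependent_iff.mp hind c hc i)
  have hemb := LinearMap.isClosedEmbedding_of_injective hker
  have hP : IsClosed {c : {i // i ∈ s} → ℝ | ∀ i, 0 ≤ c i} := by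
    have : {c : {i // i ∈ s} → ℝ | ∀ i, 0 ≤ c i} = ⋂ i, {c | 0 ≤ c i} := by ext c; simp
    rw [this]
    exact isClosed_iInter fun i => isClosed_le continuous_const (continuous_apply i)
  have himg : coneSupp v s = f '' {c | ∀ i, 0 ≤ c i} := by
    ext x
    constructor
    · rintro ⟨l, hl, hsupp, rfl⟩
      exact ⟨fun i => l i, fun i => hl i, (sum_eq_sum_coe v s l hsupp).symm⟩
    · rintro ⟨c, hc, rfl⟩
      refine ⟨fun i => if h : i ∈ s then c ⟨i, h⟩ else 0,
        fun i => by by_cases h : i ∈ s <;> simp [h, hc ⟨i, _⟩], fun i hi => by simp [hi], ?_⟩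
      rw [sum_eq_sum_coe v s _ (fun i hi => by simp [hi])]
      exact Fintype.sum_congr _ _ fun i => by simp [i.2]
  rw [himg]
  exact hemb.isClosedMap _ hP

lemma coneOf_isClosed (v : ι → H) : IsClosed (coneOf v) := by
  have heq : coneOf v = ⋃ t : {t : Finset ι // LinearIndependent ℝ (fun i : {i // i ∈ t} => v i)},
      coneSupp v t := by
    ext x
    constructor
    · rintro ⟨l, hl, rfl⟩
      obtain ⟨t, l', h1, h2, h3, h4⟩ := cone_caratheodory v Finset.univ l hl (by simp)
      exact Set.mem_iUnion.mpr ⟨⟨t, h1⟩, l', h2, h3, h4⟩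
    · rintro hx
      obtain ⟨t, l, hl, _, rfl⟩ := Set.mem_iUnion.mp hx
      exact ⟨l, hl, rfl⟩
  rw [heq]
  exact isClosed_iUnion_of_finite fun t => coneSupp_isClosed v t t.2

end Closed

section Farkas

open scoped InnerProductSpace

lemma piLp_sum_apply {ι κ : Type*} [Fintype ι] [Fintype κ] (f : κ → EuclideanSpace ℝ ι) (i : ι) :
    (∑ g, f g) i = ∑ g, f g i :=
  map_sum (PiLp.projₗ (𝕜 := ℝ) 2 (fun _ : ι => ℝ) i) f Finset.univ

lemma farkas {n : ℕ} {ι : Type*} [Fintype ι] [DecidableEq ι] (α : ι → Fin n → ℝ) (β : ι → ℝ)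
    (h : ¬ ∃ x : Fin n → ℝ, ∀ i, ∑ j, α i j * x j ≤ β i) :
    ∃ l : ι → ℝ, (∀ i, 0 ≤ l i) ∧ (∀ j, ∑ i, l i * α i j = 0) ∧ ∑ i, l i * β i < 0 := by
  classical
  set u : (Fin n ⊕ (Fin n ⊕ ι)) → EuclideanSpace ℝ ι :=
    Sum.elim (fun j => (WithLp.toLp 2 (fun i => α i j) : EuclideanSpace ℝ ι))
      (Sum.elim (fun j => (WithLp.toLp 2 (fun i => -α i j) : EuclideanSpace ℝ ι))
        (fun k => (WithLp.toLp 2 (fun i => if i = k then (1:ℝ) else 0) : EuclideanSpace ℝ ι))) with hu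
  set S : ProperCone ℝ (EuclideanSpace ℝ ι) :=
    { carrier := coneOf u,
      zero_mem' := ⟨fun _ => 0, fun _ => le_refl 0, by simp⟩,
      isClosed' := coneOf_isClosed u,
      smul_mem' := by
        rintro c x ⟨l, hl, rfl⟩
        exact ⟨fun g => (c : ℝ) * l g, fun g => mul_nonneg c.2 (hl g), by
          simp only [mul_smul, ← Finset.smul_sum]; rfl⟩,
      add_mem' := by
        rintro x y ⟨l, hl, rfl⟩ ⟨l', hl', rfl⟩
        exact ⟨l + l', fun g => add_nonneg (hl g) (hl' g), by
          simp [add_smul, Finset.sum_add_distrib]⟩ } with hS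
  have hgen : ∀ g, u g ∈ coneOf u := fun g =>
    ⟨fun g' => if g' = g then 1 else 0, fun g' => by by_cases hg : g' = g <;> simp [hg],
     by simp [ite_smul]⟩
  have hβ : (WithLp.toLp 2 β : EuclideanSpace ℝ ι) ∉ coneOf u := by
    rintro ⟨l, hl, hsum⟩
    apply h
    refine ⟨fun j => l (Sum.inl j) - l (Sum.inr (Sum.inl j)), fun i => ?_⟩
    have h1 : (∑ g, l g • u g) i = β i := by rw [hsum]
    rw [piLp_sum_apply] at h1
    simp only [PiLp.smul_apply, smul_eq_mul, hu, Fintype.sum_sum_type, Sum.elim_inl,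
      Sum.elim_inr, mul_neg, mul_ite, mul_one, mul_zero, Finset.sum_ite_eq, Finset.mem_univ,
      if_true, Finset.sum_neg_distrib] at h1
    have h2 : ∑ j, α i j * (l (Sum.inl j) - l (Sum.inr (Sum.inl j)))
        = ∑ j, l (Sum.inl j) * α i j - ∑ j, l (Sum.inr (Sum.inl j)) * α i j := by
      rw [← Finset.sum_sub_distrib]
      exact Finset.sum_congr rfl fun j _ => by ring
    rw [h2]
    have := hl (Sum.inr (Sum.inr i))
    linarith
  obtain ⟨y, hy1, hy2⟩ := S.hyperplane_separation' hβ
  have hinner : ∀ w : EuclideanSpace ℝ ι, ⟪w, y⟫_ℝ = ∑ i, w i * y i := fun w => by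
    simp [PiLp.inner_apply, RCLike.inner_apply, conj_trivial]
    exact Finset.sum_congr rfl fun _ _ => mul_comm _ _
  refine ⟨fun i => y i, fun i => ?_, fun j => ?_, ?_⟩
  · have := hy1 _ (hgen (Sum.inr (Sum.inr i)))
    rw [hinner] at this
    simpa [hu, ite_mul, Finset.sum_ite_eq'] using this
  · have hp := hy1 _ (hgen (Sum.inl j))
    have hq := hy1 _ (hgen (Sum.inr (Sum.inl j)))
    rw [hinner] at hp hq
    simp only [hu, Sum.elim_inl, Sum.elim_inr, neg_mul, Finset.sum_neg_distrib] at hp hq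
    have : ∑ i, y i * α i j = ∑ i, α i j * y i :=
      Finset.sum_congr rfl fun i _ => mul_comm _ _
    rw [this]; linarith
  · have : ⟪WithLp.toLp 2 β, y⟫_ℝ = ∑ i, y i * β i := by
      simp [PiLp.inner_apply, RCLike.inner_apply, conj_trivial]
    rw [this] at hy2
    simpa using hy2

end Farkas



/-- Let J be nonempty with {aᵢ : i ∈ J} linearly independent, E_J = ∩_{i∈J} ∂Hᵢ and
E_J(ε) = ∩_{i∈J} ∂Hᵢ(ε).  If E_J ∩ K = ∅ then for all sufficiently small ε > 0 we
also have E_J(ε) ∩ K(ε) = ∅. -/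
theorem separated_flat_stays_separated
    (n m : ℕ) (hn : 1 ≤ n) (hm : 1 ≤ m)
    (a : Fin m → Fin n → ℝ) (b : Fin m → ℝ)
    (ha : ∀ i, a i ≠ 0)
    (H : Fin m → Set (Fin n → ℝ)) (K : Set (Fin n → ℝ))
    (hH : ∀ i, H i = {x | ∑ j, a i j * x j ≤ b i})
    (hK : K = ⋂ i, H i) (hKne : K.Nonempty)
    (He Hbe : ℝ → Fin m → Set (Fin n → ℝ)) (Ke : ℝ → Set (Fin n → ℝ))
    (hHe : ∀ ε i, He ε i = {x | ∑ j, a i j * x j ≤ b i + ε ^ ((i : ℕ) + 1)})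
    (hHbe : ∀ ε i, Hbe ε i = {x | ∑ j, a i j * x j = b i + ε ^ ((i : ℕ) + 1)})
    (hKe : ∀ ε, Ke ε = ⋂ i, He ε i)
    (J : Finset (Fin m)) (hJne : J.Nonempty)
    (hli : LinearIndependent ℝ (fun i : {i : Fin m // i ∈ J} => a i))
    (EJ : Set (Fin n → ℝ)) (hEJ : EJ = ⋂ i ∈ J, {x | ∑ j, a i j * x j = b i})
    (EJe : ℝ → Set (Fin n → ℝ)) (hEJe : ∀ ε, EJe ε = ⋂ i ∈ J, Hbe ε i)
    (hsep : EJ ∩ K = ∅) :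
    ∃ δ > (0 : ℝ), ∀ ε : ℝ, 0 < ε → ε < δ → EJe ε ∩ Ke ε = ∅ := by
  classical
  set ι := Fin m ⊕ {i : Fin m // i ∈ J} with hι
  set α : ι → Fin n → ℝ := Sum.elim a (fun j => -a (j : Fin m)) with hα
  set β : ι → ℝ := Sum.elim b (fun j => -b (j : Fin m)) with hβ
  have hinf : ¬ ∃ x : Fin n → ℝ, ∀ i, ∑ j, α i j * x j ≤ β i := by
    rintro ⟨x, hx⟩
    have hxK : x ∈ K := by
      rw [hK]
      refine Set.mem_iInter.mpr fun i => ?_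
      rw [hH i]
      exact hx (Sum.inl i)
    have hxE : x ∈ EJ := by
      rw [hEJ]
      refine Set.mem_iInter₂.mpr fun i hi => ?_
      have h1 := hx (Sum.inl i)
      have h2 := hx (Sum.inr ⟨i, hi⟩)
      simp only [hα, hβ, Sum.elim_inl, Sum.elim_inr, Pi.neg_apply, neg_mul,
        Finset.sum_neg_distrib] at h1 h2
      exact le_antisymm h1 (by linarith)
    have hmem : x ∈ EJ ∩ K := ⟨hxE, hxK⟩
    rw [hsep] at hmem
    exact hmem
  obtain ⟨l, hl, hlin, hneg⟩ := farkas α β hinf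
  set c : ℝ := ∑ i, l i * β i with hc
  set L : ℝ := ∑ i, l i with hL
  have hL0 : 0 ≤ L := Finset.sum_nonneg fun i _ => hl i
  refine ⟨min 1 (-c / (L + 1)), lt_min one_pos (div_pos (by linarith) (by linarith)), fun ε hε hεδ => ?_⟩
  have hε1 : ε ≤ 1 := le_of_lt (lt_of_lt_of_le hεδ (min_le_left _ _))
  have hεc : ε * (L + 1) < -c := by
    have h1 : ε < -c / (L + 1) := lt_of_lt_of_le hεδ (min_le_right _ _)
    have h2 : (0:ℝ) < L + 1 := by linarith
    calc ε * (L + 1) < (-c / (L + 1)) * (L + 1) := by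
          exact mul_lt_mul_of_pos_right h1 h2
      _ = -c := div_mul_cancel₀ _ (ne_of_gt h2)
  rw [Set.eq_empty_iff_forall_notMem]
  rintro x ⟨hxE, hxK⟩
  set βε : ι → ℝ := Sum.elim (fun i => b i + ε ^ ((i : ℕ) + 1))
    (fun j => -(b (j : Fin m) + ε ^ (((j : Fin m) : ℕ) + 1))) with hβε
  have hfeas : ∀ i, ∑ j, α i j * x j ≤ βε i := by
    rintro (i | j)
    · rw [hKe] at hxK
      have := Set.mem_iInter.mp hxK i
      rw [hHe ε i] at this
      exact this
    · rw [hEJe] at hxE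
      have := Set.mem_iInter₂.mp hxE (j : Fin m) j.2
      rw [hHbe ε (j : Fin m)] at this
      simp only [hα, hβε, Sum.elim_inr, Pi.neg_apply, neg_mul, Finset.sum_neg_distrib]
      rw [Set.mem_setOf_eq] at this
      linarith
  have hswap : ∑ i, l i * (∑ j, α i j * x j) = ∑ j, (∑ i, l i * α i j) * x j := by
    simp_rw [Finset.mul_sum, Finset.sum_mul]
    rw [Finset.sum_comm]
    exact Finset.sum_congr rfl fun j _ => Finset.sum_congr rfl fun i _ => by ring
  have h0 : (0:ℝ) ≤ ∑ i, l i * βε i := by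
    have h1 : ∑ i, l i * (∑ j, α i j * x j) ≤ ∑ i, l i * βε i :=
      Finset.sum_le_sum fun i _ => mul_le_mul_of_nonneg_left (hfeas i) (hl i)
    have h2 : ∑ j, (∑ i, l i * α i j) * x j = 0 := by simp [hlin]
    rw [hswap, h2] at h1
    exact h1
  have hbound : ∑ i, l i * βε i ≤ c + L * ε := by
    have hterm : ∀ i ∈ Finset.univ, l i * βε i ≤ l i * β i + l i * ε := by
      rintro (i | j) _
      · have hpow : ε ^ ((i : ℕ) + 1) ≤ ε := by
          calc ε ^ ((i : ℕ) + 1) ≤ ε ^ 1 :=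
              pow_le_pow_of_le_one hε.le hε1 (by omega)
            _ = ε := pow_one ε
        have hli := hl (Sum.inl i)
        simp only [hβε, hβ, Sum.elim_inl]
        nlinarith
      · have hpow : (0:ℝ) < ε ^ (((j : Fin m) : ℕ) + 1) := pow_pos hε _
        have hli := hl (Sum.inr j)
        simp only [hβε, hβ, Sum.elim_inr]
        nlinarith
    calc ∑ i, l i * βε i ≤ ∑ i, (l i * β i + l i * ε) := Finset.sum_le_sum hterm
      _ = c + L * ε := by rw [Finset.sum_add_distrib, ← Finset.sum_mul, hc, hL]
  nlinarith
end
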